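/- arXiv:1305.7510 — 8 statements merged into one kernel-verified Lean document; each statement's English description precedes it below -/
import Mathlib

section
/- For every fixed x > 0, the function q ↦ Γ(q+1)·V_q(x) is strictly log-convex on (-1,∞); that is, for all q₁, q₂ > -1 with q₁ ≠ q₂ and all α ∈ (0,1), Γ(αq₁+(1-α)q₂+1)·V_{αq₁+(1-α)q₂}(x) < (Γ(q₁+1)·V_{q₁}(x))^α · (Γ(q₂+1)·V_{q₂}(x))^{1-α}. -/
open Real MeasureTheory Set
open scoped ENNReal

lemma contOn (x q : ℝ) (hx : 0 < x) :
    ContinuousOn (fun t : ℝ => Real.exp (-t ^ 2) * (t ^ 2 - x ^ 2) ^ q) (Ioi x) := by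
  intro t ht
  apply ContinuousAt.continuousWithinAt
  have h : (0:ℝ) < t ^ 2 - x ^ 2 := by
    have : x < t := ht
    nlinarith
  exact ((Real.continuous_exp.comp (continuous_pow 2).neg).continuousAt).mul
    (((continuous_pow 2).sub continuous_const).continuousAt.rpow_const (Or.inl h.ne'))

lemma integ (x : ℝ) (hx : 0 < x) (q : ℝ) (hq : -1 < q) :
    IntegrableOn (fun t : ℝ => Real.exp (-t ^ 2) * (t ^ 2 - x ^ 2) ^ q) (Ioi x) := by
  rw [← Ioc_union_Ioi_eq_Ioi (by linarith : x ≤ x + 1)]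
  apply IntegrableOn.union
  · -- near x : dominate by K * (t-x)^q
    set K : ℝ := max ((2*x) ^ q) ((2*x+1) ^ q) with hK
    have hint : IntegrableOn (fun t : ℝ => K * (t - x) ^ q) (Ioc x (x+1)) := by
      have h1 : IntervalIntegrable (fun t : ℝ => t ^ q) volume 0 1 :=
        intervalIntegral.intervalIntegrable_rpow' hq
      have h3 : IntervalIntegrable (fun t : ℝ => (t - x) ^ q) volume x (x+1) := by
        have := h1.comp_sub_right x
        simpa [add_comm] using this
      rw [intervalIntegrable_iff_integrableOn_Ioc_of_le (by linarith)] at h3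
      exact h3.const_mul K
    apply Integrable.mono' hint
    · exact ((contOn x q hx).mono (Ioc_subset_Ioi_self)).aestronglyMeasurable measurableSet_Ioc
    · rw [ae_restrict_iff' measurableSet_Ioc]
      filter_upwards with t ht
      have htx : x < t := ht.1
      have ht1 : t ≤ x + 1 := ht.2
      have hb : (0:ℝ) < t ^ 2 - x ^ 2 := by nlinarith
      rw [Real.norm_eq_abs, abs_of_nonneg (mul_nonneg (exp_pos _).le (rpow_nonneg hb.le _))]
      have h1 : Real.exp (-t^2) ≤ 1 := by
        rw [exp_le_one_iff]; nlinarith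
      have h2 : (t ^ 2 - x ^ 2) ^ q ≤ K * (t - x) ^ q := by
        have hfac : t ^ 2 - x ^ 2 = (t + x) * (t - x) := by ring
        rw [hfac, Real.mul_rpow (by linarith) (by linarith)]
        apply mul_le_mul_of_nonneg_right _ (rpow_nonneg (by linarith) q)
        rcases le_or_gt 0 q with h | h
        · exact le_trans (rpow_le_rpow (by linarith) (by linarith) h) (le_max_right _ _)
        · exact le_trans (rpow_le_rpow_of_nonpos (by linarith) (by linarith) h.le)
            (le_max_left _ _)
      calc Real.exp (-t^2) * (t^2 - x^2) ^ q ≤ 1 * (K * (t-x)^q) := by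
            apply mul_le_mul h1 h2 (rpow_nonneg hb.le q) one_pos.le
        _ = K * (t-x)^q := one_mul _
  · -- tail
    rcases le_or_gt q 0 with h | h
    · have hint : IntegrableOn (fun t : ℝ => (2*x+1) ^ q * Real.exp (-1 * t^2)) (Ioi (x+1)) :=
        ((integrable_exp_neg_mul_sq one_pos).const_mul _).integrableOn
      apply Integrable.mono' hint
      · exact ((contOn x q hx).mono (Ioi_subset_Ioi (by linarith))).aestronglyMeasurable
          measurableSet_Ioi
      · rw [ae_restrict_iff' measurableSet_Ioi]
        filter_upwards with t ht
        have htx : x + 1 < t := ht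
        have hb : (0:ℝ) < t ^ 2 - x ^ 2 := by nlinarith
        rw [Real.norm_eq_abs, abs_of_nonneg (mul_nonneg (exp_pos _).le (rpow_nonneg hb.le _))]
        rw [mul_comm ((2*x+1)^q)]
        have h2 : (t ^ 2 - x ^ 2) ^ q ≤ (2*x+1) ^ q := by
          apply rpow_le_rpow_of_nonpos (by nlinarith) (by nlinarith) h
        have := mul_le_mul_of_nonneg_left h2 (exp_pos (-t^2)).le
        simpa [neg_one_mul] using this
    · have hint : IntegrableOn (fun t : ℝ => t ^ (2*q) * Real.exp (-1 * t^2)) (Ioi (x+1)) := by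
        apply (integrable_rpow_mul_exp_neg_mul_sq one_pos (by linarith : (-1:ℝ) < 2*q)).integrableOn
      apply Integrable.mono' hint
      · exact ((contOn x q hx).mono (Ioi_subset_Ioi (by linarith))).aestronglyMeasurable
          measurableSet_Ioi
      · rw [ae_restrict_iff' measurableSet_Ioi]
        filter_upwards with t ht
        have htx : x + 1 < t := ht
        have hb : (0:ℝ) < t ^ 2 - x ^ 2 := by nlinarith
        have htpos : (0:ℝ) < t := by linarith
        rw [Real.norm_eq_abs, abs_of_nonneg (mul_nonneg (exp_pos _).le (rpow_nonneg hb.le _))]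
        have h2 : (t ^ 2 - x ^ 2) ^ q ≤ t ^ (2*q) := by
          rw [show (2*q) = (2:ℝ)*q from rfl, Real.rpow_mul htpos.le, show ((2:ℝ):ℝ) = ((2:ℕ):ℝ) by norm_num,
            Real.rpow_natCast]
          apply rpow_le_rpow hb.le (by nlinarith) h.le
        have := mul_le_mul_of_nonneg_left h2 (exp_pos (-t^2)).le
        calc Real.exp (-t^2) * (t^2-x^2)^q ≤ Real.exp (-t^2) * t ^ (2*q) := this
          _ = t ^ (2*q) * Real.exp (-1*t^2) := by rw [neg_one_mul]; ring

lemma integral_pos (x : ℝ) (hx : 0 < x) (q : ℝ) (hq : -1 < q) :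
    0 < ∫ t in Ioi x, Real.exp (-t ^ 2) * (t ^ 2 - x ^ 2) ^ q := by
  rw [setIntegral_pos_iff_support_of_nonneg_ae]
  · have hsub : Ioi x ⊆ Function.support (fun t : ℝ => Real.exp (-t ^ 2) * (t ^ 2 - x ^ 2) ^ q) := by
      intro t ht
      have hb : (0:ℝ) < t ^ 2 - x ^ 2 := by
        have : x < t := ht; nlinarith
      exact (mul_pos (exp_pos _) (rpow_pos_of_pos hb q)).ne'
    have h1 : (0:ℝ≥0∞) < volume (Ioi x) := by simp [Real.volume_Ioi]
    exact h1.trans_le (measure_mono fun t ht => ⟨hsub ht, ht⟩)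
  · filter_upwards [self_mem_ae_restrict measurableSet_Ioi] with t ht
    have hb : (0:ℝ) < t ^ 2 - x ^ 2 := by
      have : x < t := ht; nlinarith
    positivity
  · exact integ x hx q hq

lemma holder_step (x : ℝ) (hx : 0 < x) {q₁ q₂ a b : ℝ} (hq₁ : -1 < q₁) (hq₂ : -1 < q₂)
    (ha : 0 < a) (hb : 0 < b) (hab : a + b = 1) :
    (∫ t in Ioi x, Real.exp (-t ^ 2) * (t ^ 2 - x ^ 2) ^ (a * q₁ + b * q₂)) ≤
      (∫ t in Ioi x, Real.exp (-t ^ 2) * (t ^ 2 - x ^ 2) ^ q₁) ^ a *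
      (∫ t in Ioi x, Real.exp (-t ^ 2) * (t ^ 2 - x ^ 2) ^ q₂) ^ b := by
  have e : Real.HolderConjugate (1 / a) (1 / b) := Real.holderConjugate_one_div ha hb hab
  set g : ℝ → ℝ → ℝ := fun u t => Real.exp (-t ^ 2) * (t ^ 2 - x ^ 2) ^ u with hg
  set f : ℝ → ℝ → ℝ → ℝ := fun c u t => (g u t) ^ c with hf
  have hbase : ∀ u : ℝ, ∀ t ∈ Ioi x, 0 < g u t := by
    intro u t ht
    have hb2 : (0:ℝ) < t ^ 2 - x ^ 2 := by
      have : x < t := ht; nlinarith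
    exact mul_pos (exp_pos _) (rpow_pos_of_pos hb2 u)
  have posf' : ∀ c u : ℝ, 0 < c → 0 ≤ᵐ[volume.restrict (Ioi x)] f c u := by
    intro c u hc
    filter_upwards [self_mem_ae_restrict measurableSet_Ioi] with t ht
    exact (rpow_pos_of_pos (hbase u t ht) c).le
  have fpow : ∀ {c : ℝ}, 0 < c → ∀ (u : ℝ), ∀ t ∈ Ioi x, f c u t ^ (1 / c) = g u t := by
    intro c hc u t ht
    rw [hf, ← Real.rpow_mul (hbase u t ht).le, mul_one_div, div_self hc.ne', Real.rpow_one]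
  -- f c u ∈ ℒ^{1/c}
  have f_mem_Lp : ∀ {c u : ℝ}, 0 < c → -1 < u →
      MemLp (f c u) (ENNReal.ofReal (1 / c)) (volume.restrict (Ioi x)) := by
    intro c u hc hu
    have A : ENNReal.ofReal (1 / c) ≠ 0 := by
      rwa [Ne, ENNReal.ofReal_eq_zero, not_le, one_div_pos]
    have B : ENNReal.ofReal (1 / c) ≠ ∞ := ENNReal.ofReal_ne_top
    rw [← memLp_norm_rpow_iff _ A B, ENNReal.toReal_ofReal (one_div_nonneg.mpr hc.le),
      ENNReal.div_self A B, memLp_one_iff_integrable]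
    · apply Integrable.congr (integ x hx u hu)
      filter_upwards [self_mem_ae_restrict measurableSet_Ioi] with t ht
      rw [norm_of_nonneg (rpow_pos_of_pos (hbase u t ht) c).le]
      exact (fpow hc u t ht).symm
    · apply ContinuousOn.aestronglyMeasurable _ measurableSet_Ioi
      exact (contOn x u hx).rpow_const fun t ht => Or.inl (hbase u t ht).ne'
  -- apply Hölder
  have key := MeasureTheory.integral_mul_le_Lp_mul_Lq_of_nonneg e (posf' a q₁ ha)
    (posf' b q₂ hb) (f_mem_Lp ha hq₁) (f_mem_Lp hb hq₂)
  rw [one_div_one_div, one_div_one_div] at key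
  have e1 : (∫ t in Ioi x, f a q₁ t * f b q₂ t) =
      ∫ t in Ioi x, Real.exp (-t ^ 2) * (t ^ 2 - x ^ 2) ^ (a * q₁ + b * q₂) := by
    refine setIntegral_congr_fun measurableSet_Ioi fun t ht => ?_
    have hb2 : (0:ℝ) < t ^ 2 - x ^ 2 := by
      have : x < t := ht; nlinarith
    simp only [hf, hg]
    rw [Real.mul_rpow (exp_pos _).le (rpow_nonneg hb2.le _),
      Real.mul_rpow (exp_pos _).le (rpow_nonneg hb2.le _),
      ← Real.exp_mul, ← Real.exp_mul, ← Real.rpow_mul hb2.le, ← Real.rpow_mul hb2.le,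
      mul_mul_mul_comm, ← Real.exp_add, ← Real.rpow_add hb2]
    have h1 : -t ^ 2 * a + -t ^ 2 * b = -t ^ 2 := by rw [← mul_add, hab, mul_one]
    have h2 : q₁ * a + q₂ * b = a * q₁ + b * q₂ := by ring
    rw [h1, h2]
  have e2 : (∫ t in Ioi x, f a q₁ t ^ (1/a)) = ∫ t in Ioi x, g q₁ t :=
    setIntegral_congr_fun measurableSet_Ioi fun t ht => fpow ha q₁ t ht
  have e3 : (∫ t in Ioi x, f b q₂ t ^ (1/b)) = ∫ t in Ioi x, g q₂ t :=
    setIntegral_congr_fun measurableSet_Ioi fun t ht => fpow hb q₂ t ht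
  rw [e1, e2, e3] at key
  exact key

lemma strict_mid (x : ℝ) (hx : 0 < x) {q₁ q₂ : ℝ} (hq₁ : -1 < q₁) (hq₂ : -1 < q₂)
    (hne : q₁ ≠ q₂) :
    (∫ t in Ioi x, Real.exp (-t ^ 2) * (t ^ 2 - x ^ 2) ^ ((q₁ + q₂) / 2)) ^ 2 <
      (∫ t in Ioi x, Real.exp (-t ^ 2) * (t ^ 2 - x ^ 2) ^ q₁) *
      (∫ t in Ioi x, Real.exp (-t ^ 2) * (t ^ 2 - x ^ 2) ^ q₂) := by
  set g : ℝ → ℝ → ℝ := fun u t => Real.exp (-t ^ 2) * (t ^ 2 - x ^ 2) ^ u with hg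
  set m : ℝ := (q₁ + q₂) / 2 with hm
  have hqm : -1 < m := by rw [hm]; linarith
  set A : ℝ := ∫ t in Ioi x, g q₁ t with hA
  set B : ℝ := ∫ t in Ioi x, g q₂ t with hB
  set C : ℝ := ∫ t in Ioi x, g m t with hC
  have hApos : 0 < A := integral_pos x hx q₁ hq₁
  have hBpos : 0 < B := integral_pos x hx q₂ hq₂
  have hCpos : 0 < C := integral_pos x hx m hqm
  have hbase : ∀ t ∈ Ioi x, (0:ℝ) < t ^ 2 - x ^ 2 := by
    intro t ht
    have : x < t := ht; nlinarith
  have hgpos : ∀ u : ℝ, ∀ t ∈ Ioi x, 0 < g u t := fun u t ht =>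
    mul_pos (exp_pos _) (rpow_pos_of_pos (hbase t ht) u)
  set h : ℝ → ℝ := fun t => (B * Real.sqrt (g q₁ t) - C * Real.sqrt (g q₂ t)) ^ 2 with hh
  have hsq : ∀ t ∈ Ioi x,
      h t = B ^ 2 * g q₁ t - 2 * B * C * g m t + C ^ 2 * g q₂ t := by
    intro t ht
    have h1 : Real.sqrt (g q₁ t) ^ 2 = g q₁ t := Real.sq_sqrt (hgpos q₁ t ht).le
    have h2 : Real.sqrt (g q₂ t) ^ 2 = g q₂ t := Real.sq_sqrt (hgpos q₂ t ht).le
    have h3 : Real.sqrt (g q₁ t) * Real.sqrt (g q₂ t) = g m t := by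
      rw [← Real.sqrt_mul (hgpos q₁ t ht).le]
      have e4 : g q₁ t * g q₂ t = (g m t) ^ 2 := by
        rw [hg]
        dsimp only
        rw [mul_pow, ← Real.exp_nat_mul, ← Real.rpow_natCast ((t^2-x^2) ^ m),
          ← Real.rpow_mul (hbase t ht).le, mul_mul_mul_comm, ← Real.exp_add,
          ← Real.rpow_add (hbase t ht)]
        rw [show -t^2 + -t^2 = -t^2 * (2:ℕ) by push_cast; ring,
          show q₁ + q₂ = m * (2:ℕ) by rw [hm]; push_cast; ring, mul_comm (-t^2) ((2:ℕ):ℝ)]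
      rw [e4, Real.sqrt_sq (hgpos m t ht).le]
    rw [hh]
    dsimp only
    linear_combination B^2 * h1 + C^2 * h2 - 2*B*C*h3
  have i1 : Integrable (fun t : ℝ => B ^ 2 * g q₁ t) (volume.restrict (Ioi x)) :=
    (integ x hx q₁ hq₁).const_mul _
  have i2 : Integrable (fun t : ℝ => 2 * B * C * g m t) (volume.restrict (Ioi x)) :=
    (integ x hx m hqm).const_mul _
  have i3 : Integrable (fun t : ℝ => C ^ 2 * g q₂ t) (volume.restrict (Ioi x)) :=
    (integ x hx q₂ hq₂).const_mul _
  have i12 : Integrable (fun t : ℝ => B ^ 2 * g q₁ t - 2 * B * C * g m t)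
      (volume.restrict (Ioi x)) := i1.sub i2
  have hint : IntegrableOn h (Ioi x) := by
    apply IntegrableOn.congr_fun _ (fun t ht => (hsq t ht).symm) measurableSet_Ioi
    exact i12.add i3
  have hintval : ∫ t in Ioi x, h t = B * (A * B - C ^ 2) := by
    rw [setIntegral_congr_fun measurableSet_Ioi hsq, integral_add i12 i3,
      integral_sub i1 i2, MeasureTheory.integral_const_mul, MeasureTheory.integral_const_mul, MeasureTheory.integral_const_mul,
      ← hA, ← hB, ← hC]
    ring
  have hpos : 0 < ∫ t in Ioi x, h t := by
    rw [setIntegral_pos_iff_support_of_nonneg_ae]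
    · set d : ℝ := q₂ - q₁ with hd
      have hdne : d ≠ 0 := sub_ne_zero.mpr (Ne.symm hne)
      set t₀ : ℝ := Real.sqrt (x ^ 2 + ((B / C) ^ 2) ^ d⁻¹) with ht₀
      have hsub : Ioi x \ {t₀} ⊆ Function.support h ∩ Ioi x := by
        intro t ⟨ht, htne⟩
        refine ⟨fun hzero => htne ?_, ht⟩
        -- from h t = 0 deduce t = t₀
        rw [hh] at hzero
        have hy : (0:ℝ) < t ^ 2 - x ^ 2 := hbase t ht
        have htpos : (0:ℝ) < t := lt_trans hx ht
        have heq : B * Real.sqrt (g q₁ t) = C * Real.sqrt (g q₂ t) := by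
          have := pow_eq_zero_iff (n := 2) (by norm_num) |>.mp hzero
          linarith [sub_eq_zero.mp this]
        have e1 : Real.sqrt (g q₁ t) ^ 2 = g q₁ t := Real.sq_sqrt (hgpos q₁ t ht).le
        have e2 : Real.sqrt (g q₂ t) ^ 2 = g q₂ t := Real.sq_sqrt (hgpos q₂ t ht).le
        have hsq' : B ^ 2 * g q₁ t = C ^ 2 * g q₂ t := by
          have h6 := congrArg (fun y : ℝ => y ^ 2) heq
          simp only [mul_pow] at h6
          rw [e1, e2] at h6
          exact h6
        have hE : Real.exp (-t ^ 2) ≠ 0 := (exp_pos _).ne'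
        have h4 : B ^ 2 * (t ^ 2 - x ^ 2) ^ q₁ = C ^ 2 * (t ^ 2 - x ^ 2) ^ q₂ := by
          rw [hg] at hsq'
          dsimp only at hsq'
          apply mul_left_cancel₀ hE
          linear_combination hsq'
        have hyd : (t ^ 2 - x ^ 2) ^ d = (B / C) ^ 2 := by
          rw [hd, Real.rpow_sub hy, div_pow,
            div_eq_div_iff (rpow_pos_of_pos hy q₁).ne' (pow_ne_zero 2 hCpos.ne')]
          linear_combination -h4
        have hy2 : t ^ 2 - x ^ 2 = ((B / C) ^ 2) ^ d⁻¹ := by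
          rw [← hyd, ← Real.rpow_mul hy.le, mul_inv_cancel₀ hdne, Real.rpow_one]
        show t = t₀
        calc t = Real.sqrt (t ^ 2) := (Real.sqrt_sq htpos.le).symm
          _ = t₀ := by rw [ht₀, ← hy2]; congr 1; ring
      have h0 : (0:ℝ≥0∞) < volume (Ioi x \ {t₀}) := by
        rw [measure_diff_null (measure_singleton t₀)]
        simp [Real.volume_Ioi]
      exact h0.trans_le (measure_mono hsub)
    · filter_upwards with t
      exact sq_nonneg _
    · exact hint
  nlinarith [hpos, hintval, hBpos]

lemma strict_comb (x : ℝ) (hx : 0 < x) {q₁ q₂ : ℝ} (hq₁ : -1 < q₁) (hq₂ : -1 < q₂)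
    (hne : q₁ ≠ q₂) {a b : ℝ} (ha : 0 < a) (hb : 0 < b) (hab : a + b = 1) :
    (∫ t in Ioi x, Real.exp (-t ^ 2) * (t ^ 2 - x ^ 2) ^ (a * q₁ + b * q₂)) <
      (∫ t in Ioi x, Real.exp (-t ^ 2) * (t ^ 2 - x ^ 2) ^ q₁) ^ a *
      (∫ t in Ioi x, Real.exp (-t ^ 2) * (t ^ 2 - x ^ 2) ^ q₂) ^ b := by
  set g : ℝ → ℝ → ℝ := fun u t => Real.exp (-t ^ 2) * (t ^ 2 - x ^ 2) ^ u with hg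
  set m : ℝ := (q₁ + q₂) / 2 with hm
  have hqm : -1 < m := by rw [hm]; linarith
  set A : ℝ := ∫ t in Ioi x, g q₁ t with hA
  set B : ℝ := ∫ t in Ioi x, g q₂ t with hB
  set C : ℝ := ∫ t in Ioi x, g m t with hC
  have hApos : 0 < A := integral_pos x hx q₁ hq₁
  have hBpos : 0 < B := integral_pos x hx q₂ hq₂
  have hCpos : 0 < C := integral_pos x hx m hqm
  have hCS : C < A ^ (1/2:ℝ) * B ^ (1/2:ℝ) := by
    have h1 : C ^ 2 < A * B := strict_mid x hx hq₁ hq₂ hne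
    have h2 : C < Real.sqrt (A * B) := (Real.lt_sqrt hCpos.le).mpr h1
    rwa [Real.sqrt_eq_rpow, Real.mul_rpow hApos.le hBpos.le] at h2
  rcases lt_trichotomy a b with hab' | hab' | hab'
  · -- a < b : a*q₁+b*q₂ = 2a*m + (b-a)*q₂
    have hc : (0:ℝ) < b - a := by linarith
    have h2a : (0:ℝ) < 2 * a := by linarith
    have hsum : 2 * a + (b - a) = 1 := by linarith
    have hstep := holder_step x hx hqm hq₂ h2a hc hsum
    have heq : 2 * a * m + (b - a) * q₂ = a * q₁ + b * q₂ := by rw [hm]; ring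
    rw [heq] at hstep
    refine hstep.trans_lt ?_
    calc C ^ (2*a) * B ^ (b-a)
        < (A ^ (1/2:ℝ) * B ^ (1/2:ℝ)) ^ (2*a) * B ^ (b-a) := by
          apply mul_lt_mul_of_pos_right _ (rpow_pos_of_pos hBpos _)
          exact Real.rpow_lt_rpow hCpos.le hCS h2a
      _ = A ^ a * B ^ b := by
          rw [Real.mul_rpow (rpow_nonneg hApos.le _) (rpow_nonneg hBpos.le _),
            ← Real.rpow_mul hApos.le, ← Real.rpow_mul hBpos.le, mul_assoc,
            ← Real.rpow_add hBpos]
          rw [show (1/2:ℝ) * (2*a) = a by ring, show a + (b - a) = b by ring]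
  · -- a = b = 1/2
    have ha2 : a = 1/2 := by linarith
    have hb2 : b = 1/2 := by linarith
    have heq : a * q₁ + b * q₂ = m := by rw [hm, ha2, hb2]; ring
    rw [heq, ha2, hb2]
    exact hCS
  · -- b < a : a*q₁+b*q₂ = (a-b)*q₁ + 2b*m
    have hc : (0:ℝ) < a - b := by linarith
    have h2b : (0:ℝ) < 2 * b := by linarith
    have hsum : (a - b) + 2 * b = 1 := by linarith
    have hstep := holder_step x hx hq₁ hqm hc h2b hsum
    have heq : (a - b) * q₁ + 2 * b * m = a * q₁ + b * q₂ := by rw [hm]; ring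
    rw [heq] at hstep
    refine hstep.trans_lt ?_
    calc A ^ (a-b) * C ^ (2*b)
        < A ^ (a-b) * (A ^ (1/2:ℝ) * B ^ (1/2:ℝ)) ^ (2*b) := by
          apply mul_lt_mul_of_pos_left _ (rpow_pos_of_pos hApos _)
          exact Real.rpow_lt_rpow hCpos.le hCS h2b
      _ = A ^ a * B ^ b := by
          rw [Real.mul_rpow (rpow_nonneg hApos.le _) (rpow_nonneg hBpos.le _),
            ← Real.rpow_mul hApos.le, ← Real.rpow_mul hBpos.le, ← mul_assoc,
            ← Real.rpow_add hApos]
          rw [show (1/2:ℝ) * (2*b) = b by ring, show a - b + b = a by ring]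

/-- The one-dimensional regularization of the Coulomb potential:
`V q x = (2 e^{x²} / Γ(q+1)) ∫_x^∞ e^{-t²} (t² - x²)^q dt`. -/
noncomputable def V (q x : ℝ) : ℝ :=
  (2 * Real.exp (x ^ 2) / Real.Gamma (q + 1)) *
    ∫ t in Set.Ioi x, Real.exp (-t ^ 2) * (t ^ 2 - x ^ 2) ^ q

theorem stmt_9 (x : ℝ) (hx : 0 < x) (q₁ q₂ : ℝ) (hq₁ : -1 < q₁) (hq₂ : -1 < q₂)
    (hne : q₁ ≠ q₂) (α : ℝ) (hα : α ∈ Set.Ioo (0 : ℝ) 1) :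
    Real.Gamma (α * q₁ + (1 - α) * q₂ + 1) * V (α * q₁ + (1 - α) * q₂) x <
      (Real.Gamma (q₁ + 1) * V q₁ x) ^ α * (Real.Gamma (q₂ + 1) * V q₂ x) ^ (1 - α) := by
  obtain ⟨hα0, hα1⟩ := hα
  have hβ : (0:ℝ) < 1 - α := by linarith
  have hsum : α + (1 - α) = 1 := by ring
  have hE : (0:ℝ) < 2 * Real.exp (x ^ 2) := by positivity
  have hG : ∀ q : ℝ, -1 < q → Real.Gamma (q + 1) * V q x =
      2 * Real.exp (x ^ 2) * ∫ t in Ioi x, Real.exp (-t ^ 2) * (t ^ 2 - x ^ 2) ^ q := by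
    intro q hq
    have hΓ : Real.Gamma (q + 1) ≠ 0 := (Real.Gamma_pos_of_pos (by linarith)).ne'
    rw [V]
    field_simp
  have hmid : -1 < α * q₁ + (1 - α) * q₂ := by nlinarith
  rw [hG _ hmid, hG _ hq₁, hG _ hq₂,
    Real.mul_rpow hE.le (integral_pos x hx q₁ hq₁).le,
    Real.mul_rpow hE.le (integral_pos x hx q₂ hq₂).le,
    mul_mul_mul_comm, ← Real.rpow_add hE, hsum, Real.rpow_one]
  exact mul_lt_mul_of_pos_left (strict_comb x hx hq₁ hq₂ hne hα0 hβ hsum) hE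
end

section
/- For every q > -1 and every x > 0, the Turán type inequality V_{q+1}(x)² < ((q+2)/(q+1))·V_q(x)·V_{q+2}(x) holds. -/
open Real MeasureTheory Set

lemma contOn_aux (x r : ℝ) (hx : 0 < x) :
    ContinuousOn (fun t : ℝ => Real.exp (-t ^ 2) * (t ^ 2 - x ^ 2) ^ r) (Ioi x) := by
  apply ContinuousOn.mul
  · exact (Real.continuous_exp.comp (continuous_pow 2).neg).continuousOn
  · apply ContinuousOn.rpow_const
    · exact ((continuous_pow 2).sub continuous_const).continuousOn
    · intro t ht
      left
      have h1 : x < t := ht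
      nlinarith

lemma integrableOn_aux (x : ℝ) (hx : 0 < x) {r : ℝ} (hr : -1 < r) :
    IntegrableOn (fun t : ℝ => Real.exp (-t ^ 2) * (t ^ 2 - x ^ 2) ^ r) (Ioi x) := by
  have hsub1 : Ioc x (x + 1) ⊆ Ioi x := Ioc_subset_Ioi_self
  have hsub2 : Ioi (x + 1) ⊆ Ioi x := Ioi_subset_Ioi (by linarith)
  have hmeas1 : AEStronglyMeasurable (fun t : ℝ => Real.exp (-t ^ 2) * (t ^ 2 - x ^ 2) ^ r)
      (volume.restrict (Ioc x (x + 1))) :=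
    ((contOn_aux x r hx).mono hsub1).aestronglyMeasurable measurableSet_Ioc
  have hmeas2 : AEStronglyMeasurable (fun t : ℝ => Real.exp (-t ^ 2) * (t ^ 2 - x ^ 2) ^ r)
      (volume.restrict (Ioi (x + 1))) :=
    ((contOn_aux x r hx).mono hsub2).aestronglyMeasurable measurableSet_Ioi
  have h1 : IntegrableOn (fun t : ℝ => Real.exp (-t ^ 2) * (t ^ 2 - x ^ 2) ^ r)
      (Ioc x (x + 1)) := by
    set M : ℝ := max ((2 * x + 1) ^ r) ((2 * x) ^ r) with hM
    have hgint : IntegrableOn (fun t : ℝ => M * (t - x) ^ r) (Ioc x (x + 1)) := by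
      have h0 := (intervalIntegral.intervalIntegrable_rpow' hr (a := 0) (b := 1)).comp_sub_right x
      have h0' := (intervalIntegrable_iff_integrableOn_Ioc_of_le
        (by linarith : (0 : ℝ) + x ≤ 1 + x)).mp h0
      have heq : Ioc ((0 : ℝ) + x) (1 + x) = Ioc x (x + 1) := by
        congr 1 <;> ring
      rw [heq] at h0'
      exact h0'.const_mul M
    apply Integrable.mono' hgint hmeas1
    filter_upwards [ae_restrict_mem measurableSet_Ioc] with t ht
    obtain ⟨ht1, ht2⟩ := ht
    have htx : (0 : ℝ) < t - x := by linarith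
    have htx2 : (0 : ℝ) < t + x := by linarith
    have hfac : t ^ 2 - x ^ 2 = (t - x) * (t + x) := by ring
    have hrw : (t ^ 2 - x ^ 2) ^ r = (t - x) ^ r * (t + x) ^ r := by
      rw [hfac, Real.mul_rpow htx.le htx2.le]
    have hexp : Real.exp (-t ^ 2) ≤ 1 := by
      rw [Real.exp_le_one_iff]; nlinarith
    have hbound : (t + x) ^ r ≤ M := by
      rcases le_total 0 r with hr0 | hr0
      · refine le_trans (Real.rpow_le_rpow htx2.le (by linarith) hr0) (le_max_left _ _)
      · refine le_trans (Real.rpow_le_rpow_of_nonpos (by linarith) (by linarith) hr0)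
          (le_max_right _ _)
    have hnn1 : (0 : ℝ) ≤ (t - x) ^ r := Real.rpow_nonneg htx.le r
    have hnn2 : (0 : ℝ) ≤ (t + x) ^ r := Real.rpow_nonneg htx2.le r
    have hnorm : ‖Real.exp (-t ^ 2) * (t ^ 2 - x ^ 2) ^ r‖
        = Real.exp (-t ^ 2) * ((t - x) ^ r * (t + x) ^ r) := by
      rw [hrw, Real.norm_eq_abs, abs_of_nonneg]
      positivity
    rw [hnorm]
    have hep : (0 : ℝ) < Real.exp (-t ^ 2) := Real.exp_pos _
    nlinarith [mul_le_mul_of_nonneg_left hbound hnn1,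
      mul_le_mul_of_nonneg_right hexp (mul_nonneg hnn1 hnn2)]
  have h2 : IntegrableOn (fun t : ℝ => Real.exp (-t ^ 2) * (t ^ 2 - x ^ 2) ^ r)
      (Ioi (x + 1)) := by
    rcases le_total r 0 with hr0 | hr0
    · have hgint : IntegrableOn (fun t : ℝ => (2 * x + 1) ^ r * Real.exp (-t ^ 2))
          (Ioi (x + 1)) := by
        have : Integrable (fun t : ℝ => Real.exp (-t ^ 2)) := by
          simpa using integrable_exp_neg_mul_sq (one_pos)
        exact (this.integrableOn).const_mul _
      apply Integrable.mono' hgint hmeas2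
      filter_upwards [ae_restrict_mem measurableSet_Ioi] with t ht
      have ht1 : x + 1 < t := ht
      have hu : (0 : ℝ) < 2 * x + 1 := by linarith
      have hle : 2 * x + 1 ≤ t ^ 2 - x ^ 2 := by nlinarith
      have hb : (t ^ 2 - x ^ 2) ^ r ≤ (2 * x + 1) ^ r :=
        Real.rpow_le_rpow_of_nonpos hu hle hr0
      have hep : (0 : ℝ) < Real.exp (-t ^ 2) := Real.exp_pos _
      have hnn : (0 : ℝ) ≤ (t ^ 2 - x ^ 2) ^ r := Real.rpow_nonneg (by nlinarith) r
      rw [Real.norm_eq_abs, abs_of_nonneg (by positivity)]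
      nlinarith
    · have hgint : IntegrableOn (fun t : ℝ => t ^ (2 * r) * Real.exp (-1 * t ^ 2))
          (Ioi (x + 1)) := by
        apply (integrableOn_rpow_mul_exp_neg_mul_sq one_pos
          (by linarith : (-1 : ℝ) < 2 * r)).mono_set
        exact Ioi_subset_Ioi (by linarith)
      apply Integrable.mono' hgint hmeas2
      filter_upwards [ae_restrict_mem measurableSet_Ioi] with t ht
      have ht1 : x + 1 < t := ht
      have ht0 : (0 : ℝ) < t := by linarith
      have hsq : (t ^ 2 : ℝ) ^ r = t ^ (2 * r) := by
        rw [← Real.rpow_natCast t 2, ← Real.rpow_mul ht0.le]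
        norm_num
      have hb : (t ^ 2 - x ^ 2) ^ r ≤ t ^ (2 * r) := by
        rw [← hsq]
        exact Real.rpow_le_rpow (by nlinarith) (by nlinarith) hr0
      have hep : (0 : ℝ) < Real.exp (-t ^ 2) := Real.exp_pos _
      have hexp : Real.exp (-t ^ 2) ≤ 1 := by
        rw [Real.exp_le_one_iff]; nlinarith
      have hnn : (0 : ℝ) ≤ (t ^ 2 - x ^ 2) ^ r := Real.rpow_nonneg (by nlinarith) r
      rw [Real.norm_eq_abs, abs_of_nonneg (by positivity)]
      have : -1 * t ^ 2 = -t ^ 2 := by ring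
      rw [this]
      nlinarith [Real.rpow_nonneg ht0.le (2 * r)]
  have hunion : Ioc x (x + 1) ∪ Ioi (x + 1) = Ioi x :=
    Ioc_union_Ioi_eq_Ioi (by linarith)
  rw [← hunion]
  exact h1.union h2

lemma integral_aux_pos (x : ℝ) (hx : 0 < x) {r : ℝ} (hr : -1 < r) :
    0 < ∫ t in Ioi x, Real.exp (-t ^ 2) * (t ^ 2 - x ^ 2) ^ r := by
  rw [setIntegral_pos_iff_support_of_nonneg_ae _ (integrableOn_aux x hx hr)]
  · refine lt_of_lt_of_le ?_ (measure_mono (?_ :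
      Ioi x ⊆ Function.support (fun t : ℝ => Real.exp (-t ^ 2) * (t ^ 2 - x ^ 2) ^ r) ∩ Ioi x))
    · rw [Real.volume_Ioi]; exact ENNReal.zero_lt_top
    · intro t ht
      have ht1 : x < t := ht
      have hu : (0 : ℝ) < t ^ 2 - x ^ 2 := by nlinarith
      refine ⟨?_, ht⟩
      have : (0 : ℝ) < Real.exp (-t ^ 2) * (t ^ 2 - x ^ 2) ^ r := by positivity
      exact ne_of_gt this
  · filter_upwards [ae_restrict_mem measurableSet_Ioi] with t ht
    have ht1 : x < t := ht
    have hu : (0 : ℝ) ≤ t ^ 2 - x ^ 2 := by nlinarith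
    positivity

theorem stmt_10 (q : ℝ) (hq : -1 < q) (x : ℝ) (hx : 0 < x) :
    (V (q + 1) x) ^ 2 < (q + 2) / (q + 1) * V q x * V (q + 2) x := by
  set A := ∫ t in Ioi x, Real.exp (-t ^ 2) * (t ^ 2 - x ^ 2) ^ q with hA_def
  set B := ∫ t in Ioi x, Real.exp (-t ^ 2) * (t ^ 2 - x ^ 2) ^ (q + 1) with hB_def
  set C := ∫ t in Ioi x, Real.exp (-t ^ 2) * (t ^ 2 - x ^ 2) ^ (q + 2) with hC_def
  have hA : 0 < A := integral_aux_pos x hx hq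
  have hB : 0 < B := integral_aux_pos x hx (by linarith)
  have hAi := integrableOn_aux x hx hq
  have hBi := integrableOn_aux x hx (by linarith : (-1 : ℝ) < q + 1)
  have hCi := integrableOn_aux x hx (by linarith : (-1 : ℝ) < q + 2)
  set d : ℝ := B / A with hd_def
  have hd : 0 < d := div_pos hB hA
  have hdA : d * A = B := div_mul_cancel₀ B (ne_of_gt hA)
  -- key: B^2 < A * C via strict Cauchy-Schwarz
  have key : B ^ 2 < A * C := by
    set H : ℝ → ℝ := fun t => Real.exp (-t ^ 2) * (t ^ 2 - x ^ 2) ^ (q + 2)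
      - 2 * d * (Real.exp (-t ^ 2) * (t ^ 2 - x ^ 2) ^ (q + 1))
      + d ^ 2 * (Real.exp (-t ^ 2) * (t ^ 2 - x ^ 2) ^ q) with hH_def
    have hHi : IntegrableOn H (Ioi x) :=
      (hCi.sub (hBi.const_mul (2 * d))).add (hAi.const_mul (d ^ 2))
    have hHval : ∀ t ∈ Ioi x, H t
        = Real.exp (-t ^ 2) * (t ^ 2 - x ^ 2) ^ q * ((t ^ 2 - x ^ 2) - d) ^ 2 := by
      intro t ht
      have ht1 : x < t := ht
      have hu : (0 : ℝ) < t ^ 2 - x ^ 2 := by nlinarith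
      have e1 : (t ^ 2 - x ^ 2) ^ (q + 1) = (t ^ 2 - x ^ 2) ^ q * (t ^ 2 - x ^ 2) :=
        Real.rpow_add_one (ne_of_gt hu) q
      have e2 : (t ^ 2 - x ^ 2) ^ (q + 2) =
          (t ^ 2 - x ^ 2) ^ q * (t ^ 2 - x ^ 2) * (t ^ 2 - x ^ 2) := by
        rw [show q + 2 = q + 1 + 1 by ring, Real.rpow_add_one (ne_of_gt hu), e1]
      simp only [hH_def, e1, e2]
      ring
    have hint : 0 < ∫ t in Ioi x, H t := by
      rw [setIntegral_pos_iff_support_of_nonneg_ae _ hHi]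
      · set M : ℝ := max x (Real.sqrt (x ^ 2 + d)) with hM
        refine lt_of_lt_of_le ?_ (measure_mono (?_ :
          Ioi M ⊆ Function.support H ∩ Ioi x))
        · rw [Real.volume_Ioi]; exact ENNReal.zero_lt_top
        · intro t ht
          have htM : M < t := ht
          have htx : x < t := lt_of_le_of_lt (le_max_left _ _) htM
          have hts : Real.sqrt (x ^ 2 + d) < t := lt_of_le_of_lt (le_max_right _ _) htM
          have ht0 : 0 < t := lt_trans hx htx
          have hsq : x ^ 2 + d < t ^ 2 := by
            have h1 : Real.sqrt (x ^ 2 + d) ^ 2 = x ^ 2 + d :=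
              Real.sq_sqrt (by positivity)
            nlinarith [Real.sqrt_nonneg (x ^ 2 + d)]
          have hu : (0 : ℝ) < t ^ 2 - x ^ 2 := by nlinarith
          have hud : (t ^ 2 - x ^ 2) - d > 0 := by linarith
          refine ⟨?_, htx⟩
          rw [Function.mem_support, hHval t htx]
          have : 0 < Real.exp (-t ^ 2) * (t ^ 2 - x ^ 2) ^ q * ((t ^ 2 - x ^ 2) - d) ^ 2 := by
            positivity
          exact ne_of_gt this
      · filter_upwards [ae_restrict_mem measurableSet_Ioi] with t ht
        rw [hHval t ht]
        have ht1 : x < t := ht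
        have hu : (0 : ℝ) ≤ t ^ 2 - x ^ 2 := by nlinarith
        positivity
    have hsplit : (∫ t in Ioi x, H t) = C - 2 * d * B + d ^ 2 * A := by
      have s1 : (∫ t in Ioi x, (Real.exp (-t ^ 2) * (t ^ 2 - x ^ 2) ^ (q + 2)
            - 2 * d * (Real.exp (-t ^ 2) * (t ^ 2 - x ^ 2) ^ (q + 1))
            + d ^ 2 * (Real.exp (-t ^ 2) * (t ^ 2 - x ^ 2) ^ q)))
          = (∫ t in Ioi x, (Real.exp (-t ^ 2) * (t ^ 2 - x ^ 2) ^ (q + 2)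
            - 2 * d * (Real.exp (-t ^ 2) * (t ^ 2 - x ^ 2) ^ (q + 1))))
            + ∫ t in Ioi x, d ^ 2 * (Real.exp (-t ^ 2) * (t ^ 2 - x ^ 2) ^ q) :=
        integral_add (hCi.sub (hBi.const_mul (2 * d))) (hAi.const_mul (d ^ 2))
      have s2 : (∫ t in Ioi x, (Real.exp (-t ^ 2) * (t ^ 2 - x ^ 2) ^ (q + 2)
            - 2 * d * (Real.exp (-t ^ 2) * (t ^ 2 - x ^ 2) ^ (q + 1))))
          = (∫ t in Ioi x, Real.exp (-t ^ 2) * (t ^ 2 - x ^ 2) ^ (q + 2))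
            - ∫ t in Ioi x, 2 * d * (Real.exp (-t ^ 2) * (t ^ 2 - x ^ 2) ^ (q + 1)) :=
        integral_sub hCi (hBi.const_mul (2 * d))
      have s3 : (∫ t in Ioi x, 2 * d * (Real.exp (-t ^ 2) * (t ^ 2 - x ^ 2) ^ (q + 1)))
          = 2 * d * B := integral_const_mul _ _
      have s4 : (∫ t in Ioi x, d ^ 2 * (Real.exp (-t ^ 2) * (t ^ 2 - x ^ 2) ^ q))
          = d ^ 2 * A := integral_const_mul _ _
      show (∫ t in Ioi x, (Real.exp (-t ^ 2) * (t ^ 2 - x ^ 2) ^ (q + 2)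
            - 2 * d * (Real.exp (-t ^ 2) * (t ^ 2 - x ^ 2) ^ (q + 1))
            + d ^ 2 * (Real.exp (-t ^ 2) * (t ^ 2 - x ^ 2) ^ q)))
          = C - 2 * d * B + d ^ 2 * A
      rw [s1, s2, s3, s4]
    rw [hsplit] at hint
    have h2 : d ^ 2 * A ^ 2 = B ^ 2 := by rw [← hdA]; ring
    nlinarith [mul_pos hA hint]
  -- now the algebra with Gamma values
  have hq1 : (0 : ℝ) < q + 1 := by linarith
  have hq2 : (0 : ℝ) < q + 2 := by linarith
  have hG1 : 0 < Real.Gamma (q + 1) := Real.Gamma_pos_of_pos hq1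
  have e2 : Real.Gamma (q + 1 + 1) = (q + 1) * Real.Gamma (q + 1) :=
    Real.Gamma_add_one (ne_of_gt hq1)
  have e3 : Real.Gamma (q + 2 + 1) = (q + 2) * ((q + 1) * Real.Gamma (q + 1)) := by
    rw [Real.Gamma_add_one (ne_of_gt hq2), show q + 2 = q + 1 + 1 by ring, e2]
  have hE : (0 : ℝ) < 2 * Real.exp (x ^ 2) := by positivity
  show (2 * Real.exp (x ^ 2) / Real.Gamma (q + 1 + 1) * B) ^ 2
      < (q + 2) / (q + 1) * (2 * Real.exp (x ^ 2) / Real.Gamma (q + 1) * A)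
        * (2 * Real.exp (x ^ 2) / Real.Gamma (q + 2 + 1) * C)
  rw [e2, e3]
  set E := 2 * Real.exp (x ^ 2) with hE_def
  set g := Real.Gamma (q + 1) with hg_def
  have h1 : (E / ((q + 1) * g) * B) ^ 2 = E ^ 2 / ((q + 1) * g) ^ 2 * B ^ 2 := by
    field_simp
  have h2 : (q + 2) / (q + 1) * (E / g * A) * (E / ((q + 2) * ((q + 1) * g)) * C)
      = E ^ 2 / ((q + 1) * g) ^ 2 * (A * C) := by
    field_simp
  rw [h1, h2]
  exact mul_lt_mul_of_pos_left key (by positivity)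
end

section
/- For every q > -1/2 and every x > 0, the Turán type inequality ((q+2)(2q+1))/((q+1)(2q+3))·V_q(x)·V_{q+2}(x) < V_{q+1}(x)² holds. -/
open Real MeasureTheory Set
open Filter

lemma cont_aux (x r : ℝ) (hx : 0 < x) (k : ℕ) :
    ContinuousOn (fun t : ℝ => Real.exp (-t ^ 2) * (t ^ 2 - x ^ 2) ^ r / t ^ k) (Ioi x) := by
  intro t ht
  have ht' : x < t := ht
  have h1 : (0:ℝ) < t ^ 2 - x ^ 2 := by nlinarith [hx.trans ht']
  have h2 : (0:ℝ) < t := hx.trans ht'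
  apply ContinuousWithinAt.div
  · apply ContinuousWithinAt.mul
    · exact ((Real.continuous_exp.comp (by continuity)).continuousAt).continuousWithinAt
    · have hin : ContinuousAt (fun s : ℝ => s ^ 2 - x ^ 2) t := by fun_prop
      exact (hin.rpow_const (Or.inl h1.ne')).continuousWithinAt
  · exact (continuous_pow k).continuousWithinAt
  · positivity

lemma integrable_base (x : ℝ) (hx : 0 < x) (r : ℝ) (hr : -1 < r) :
    IntegrableOn (fun t : ℝ => Real.exp (-t ^ 2) * (t ^ 2 - x ^ 2) ^ r) (Ioi x) := by
  have hmeas : ∀ s : Set ℝ, MeasurableSet s → s ⊆ Ioi x →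
      AEStronglyMeasurable (fun t : ℝ => Real.exp (-t ^ 2) * (t ^ 2 - x ^ 2) ^ r)
        (volume.restrict s) := by
    intro s hs hsub
    exact ((cont_aux x r hx 0).mono (by simpa using hsub)).aestronglyMeasurable hs |>.congr
      (by filter_upwards with t; simp)
  have h1 : IntegrableOn (fun t : ℝ => Real.exp (-t ^ 2) * (t ^ 2 - x ^ 2) ^ r)
      (Ioc x (x + 1)) := by
    have hbnd : IntegrableOn (fun t : ℝ => ((2*x) ^ r + (2*x+1) ^ r) * (t - x) ^ r)
        (Ioc x (x + 1)) := by
      have h0 : IntervalIntegrable (fun t : ℝ => (t - x) ^ r) volume x (x + 1) := by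
        simpa [add_comm] using (intervalIntegral.intervalIntegrable_rpow' (a := 0) (b := 1) hr).comp_sub_right x
      rw [intervalIntegrable_iff_integrableOn_Ioc_of_le (by linarith)] at h0
      exact h0.const_mul _
    apply Integrable.mono' hbnd (hmeas _ measurableSet_Ioc Ioc_subset_Ioi_self)
    filter_upwards [ae_restrict_mem measurableSet_Ioc] with t ht
    obtain ⟨ht1, ht2⟩ := ht
    have htx : (0:ℝ) < t - x := by linarith
    have htpx : (0:ℝ) < t + x := by linarith
    have hfac : t ^ 2 - x ^ 2 = (t - x) * (t + x) := by ring
    have hsplit : (t ^ 2 - x ^ 2) ^ r = (t - x) ^ r * (t + x) ^ r := by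
      rw [hfac, Real.mul_rpow htx.le htpx.le]
    have hexp : Real.exp (-t ^ 2) ≤ 1 := Real.exp_le_one_iff.2 (by nlinarith)
    have hpos : (0:ℝ) ≤ (t - x) ^ r * (t + x) ^ r := by positivity
    rw [Real.norm_eq_abs, abs_of_nonneg (by rw [hsplit]; positivity)]
    have hb : (t + x) ^ r ≤ (2*x) ^ r + (2*x+1) ^ r := by
      rcases le_or_gt 0 r with h | h
      · have : (t + x) ^ r ≤ (2*x+1) ^ r :=
          Real.rpow_le_rpow htpx.le (by linarith) h
        have h2 : (0:ℝ) ≤ (2*x) ^ r := by positivity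
        linarith
      · have : (t + x) ^ r ≤ (2*x) ^ r :=
          Real.rpow_le_rpow_of_nonpos (by linarith) (by linarith) h.le
        have h2 : (0:ℝ) ≤ (2*x+1) ^ r := by positivity
        linarith
    calc Real.exp (-t ^ 2) * (t ^ 2 - x ^ 2) ^ r ≤ 1 * ((t - x) ^ r * (t + x) ^ r) := by
          rw [hsplit]; apply mul_le_mul_of_nonneg_right hexp hpos
      _ = (t + x) ^ r * (t - x) ^ r := by ring
      _ ≤ ((2*x) ^ r + (2*x+1) ^ r) * (t - x) ^ r := by
          apply mul_le_mul_of_nonneg_right hb (by positivity)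
  have h2 : IntegrableOn (fun t : ℝ => Real.exp (-t ^ 2) * (t ^ 2 - x ^ 2) ^ r)
      (Ioi (x + 1)) := by
    rcases le_or_gt 0 r with h | h
    · -- bound by t ^ (2r) * exp (-t^2)
      have hbnd : IntegrableOn (fun t : ℝ => t ^ (2*r) * Real.exp (-(1:ℝ) * t ^ 2))
          (Ioi (x+1)) :=
        ((integrable_rpow_mul_exp_neg_mul_sq (by norm_num) (by linarith : (-1:ℝ) < 2*r))).integrableOn
      apply Integrable.mono' hbnd (hmeas _ measurableSet_Ioi
        (Ioi_subset_Ioi (by linarith)))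
      filter_upwards [ae_restrict_mem measurableSet_Ioi] with t ht
      have htx : x < t := by have : x + 1 < t := ht; linarith
      have ht0 : (0:ℝ) < t := hx.trans htx
      have h1 : (0:ℝ) < t ^ 2 - x ^ 2 := by nlinarith
      rw [Real.norm_eq_abs, abs_of_nonneg (by positivity)]
      have : (t ^ 2 - x ^ 2) ^ r ≤ (t ^ 2) ^ r := by
        apply Real.rpow_le_rpow h1.le (by nlinarith) h
      have h2r : (t ^ 2 : ℝ) ^ r = t ^ (2*r) := by
        rw [← Real.rpow_natCast t 2, ← Real.rpow_mul ht0.le]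
        norm_num
      calc Real.exp (-t ^ 2) * (t ^ 2 - x ^ 2) ^ r ≤ Real.exp (-t ^ 2) * (t^2) ^ r := by
            apply mul_le_mul_of_nonneg_left this (Real.exp_pos _).le
        _ = t ^ (2*r) * Real.exp (-(1:ℝ) * t ^ 2) := by rw [h2r]; ring_nf
    · -- bound by exp (-t^2)
      have hbnd : IntegrableOn (fun t : ℝ => Real.exp (-(1:ℝ) * t ^ 2)) (Ioi (x+1)) :=
        (integrable_exp_neg_mul_sq (by norm_num)).integrableOn
      apply Integrable.mono' hbnd (hmeas _ measurableSet_Ioi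
        (Ioi_subset_Ioi (by linarith)))
      filter_upwards [ae_restrict_mem measurableSet_Ioi] with t ht
      have htx : x + 1 < t := ht
      have ht0 : (0:ℝ) < t := by linarith
      have h1 : (1:ℝ) ≤ t ^ 2 - x ^ 2 := by nlinarith
      rw [Real.norm_eq_abs, abs_of_nonneg (by positivity)]
      have : (t ^ 2 - x ^ 2) ^ r ≤ 1 :=
        Real.rpow_le_one_of_one_le_of_nonpos h1 h.le
      calc Real.exp (-t ^ 2) * (t ^ 2 - x ^ 2) ^ r ≤ Real.exp (-t ^ 2) * 1 := by
            apply mul_le_mul_of_nonneg_left this (Real.exp_pos _).le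
        _ = Real.exp (-(1:ℝ) * t ^ 2) := by ring_nf
  have : Ioi x = Ioc x (x+1) ∪ Ioi (x+1) := (Ioc_union_Ioi_eq_Ioi (by linarith)).symm
  rw [this]
  exact h1.union h2

lemma meas_aux (x r : ℝ) (hx : 0 < x) (k : ℕ) :
    AEStronglyMeasurable (fun t : ℝ => Real.exp (-t ^ 2) * (t ^ 2 - x ^ 2) ^ r / t ^ k)
      (volume.restrict (Ioi x)) :=
  (cont_aux x r hx k).aestronglyMeasurable measurableSet_Ioi

lemma integrable_div (x : ℝ) (hx : 0 < x) (r : ℝ) (hr : -1 < r) (k : ℕ) :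
    IntegrableOn (fun t : ℝ => Real.exp (-t ^ 2) * (t ^ 2 - x ^ 2) ^ r / t ^ k) (Ioi x) := by
  apply Integrable.mono' (((integrable_base x hx r hr).abs).const_mul ((x ^ k)⁻¹))
    (meas_aux x r hx k)
  filter_upwards [ae_restrict_mem measurableSet_Ioi] with t ht
  have htx : x < t := ht
  have ht0 : (0:ℝ) < t := hx.trans htx
  have hu : (0:ℝ) < t ^ 2 - x ^ 2 := by nlinarith
  have hnum : (0:ℝ) ≤ Real.exp (-t ^ 2) * (t ^ 2 - x ^ 2) ^ r := by positivity
  rw [Real.norm_eq_abs, abs_of_nonneg (by positivity)]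
  rw [div_eq_mul_inv, mul_comm ((x ^ k)⁻¹) _, abs_of_nonneg hnum]
  apply mul_le_mul_of_nonneg_left _ hnum
  apply inv_anti₀ (by positivity)
  exact pow_le_pow_left₀ hx.le htx.le k

lemma Ipos (x : ℝ) (hx : 0 < x) (r : ℝ) (hr : -1 < r) (k : ℕ) :
    0 < ∫ t in Ioi x, Real.exp (-t ^ 2) * (t ^ 2 - x ^ 2) ^ r / t ^ k := by
  have hnn : 0 ≤ᵐ[volume.restrict (Ioi x)]
      (fun t : ℝ => Real.exp (-t ^ 2) * (t ^ 2 - x ^ 2) ^ r / t ^ k) := by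
    filter_upwards [ae_restrict_mem measurableSet_Ioi] with t ht
    have htx : x < t := ht
    have ht0 : (0:ℝ) < t := hx.trans htx
    have hu : (0:ℝ) < t ^ 2 - x ^ 2 := by nlinarith
    positivity
  rw [setIntegral_pos_iff_support_of_nonneg_ae hnn (integrable_div x hx r hr k)]
  have hsub : Ioi x ⊆ Function.support
      (fun t : ℝ => Real.exp (-t ^ 2) * (t ^ 2 - x ^ 2) ^ r / t ^ k) ∩ Ioi x := by
    intro t ht
    have htx : x < t := ht
    have ht0 : (0:ℝ) < t := hx.trans htx
    have hu : (0:ℝ) < t ^ 2 - x ^ 2 := by nlinarith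
    refine ⟨?_, ht⟩
    have : (0:ℝ) < Real.exp (-t ^ 2) * (t ^ 2 - x ^ 2) ^ r / t ^ k := by positivity
    exact this.ne'
  calc (0 : ENNReal) < volume (Ioi x) := by simp [Real.volume_Ioi]
    _ ≤ _ := measure_mono hsub

lemma Mident (x : ℝ) (hx : 0 < x) (r : ℝ) (hr : -1 < r) :
    (∫ t in Ioi x, Real.exp (-t ^ 2) * (t ^ 2 - x ^ 2) ^ (r + 1) / t ^ 2) =
      (∫ t in Ioi x, Real.exp (-t ^ 2) * (t ^ 2 - x ^ 2) ^ r) -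
        x ^ 2 * ∫ t in Ioi x, Real.exp (-t ^ 2) * (t ^ 2 - x ^ 2) ^ r / t ^ 2 := by
  have h1 : (∫ t in Ioi x, Real.exp (-t ^ 2) * (t ^ 2 - x ^ 2) ^ (r + 1) / t ^ 2) =
      ∫ t in Ioi x, (Real.exp (-t ^ 2) * (t ^ 2 - x ^ 2) ^ r -
        x ^ 2 * (Real.exp (-t ^ 2) * (t ^ 2 - x ^ 2) ^ r / t ^ 2)) := by
    apply setIntegral_congr_fun measurableSet_Ioi
    intro t ht
    dsimp only
    have htx : x < t := ht
    have ht0 : (0:ℝ) < t := hx.trans htx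
    have hu : (0:ℝ) < t ^ 2 - x ^ 2 := by nlinarith
    rw [Real.rpow_add_one hu.ne']
    field_simp
  rw [h1, integral_sub (integrable_base x hx r hr)
    ((integrable_div x hx r hr 2).const_mul (x ^ 2)), integral_const_mul]

lemma tendsto_bdry (x : ℝ) (hx : 0 < x) (p : ℝ) (hp : 0 ≤ p) (k : ℕ) (hk : 1 ≤ k) :
    Tendsto (fun t : ℝ => Real.exp (-t ^ 2) * (t ^ 2 - x ^ 2) ^ p / t ^ k) atTop (nhds 0) := by
  apply squeeze_zero' (g := fun t : ℝ => t ^ (2 * p) * Real.exp (-(1:ℝ) * t))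
  · filter_upwards [eventually_gt_atTop x] with t ht
    have htx : x < t := ht
    have ht0 : (0:ℝ) < t := hx.trans htx
    have hu : (0:ℝ) < t ^ 2 - x ^ 2 := by nlinarith
    positivity
  · filter_upwards [eventually_ge_atTop (max (x + 1) 1)] with t ht
    have ht1 : (1:ℝ) ≤ t := le_trans (le_max_right _ _) ht
    have htx : x < t := by have := le_trans (le_max_left _ _) ht; linarith
    have ht0 : (0:ℝ) < t := by linarith
    have hu : (0:ℝ) < t ^ 2 - x ^ 2 := by nlinarith
    have htk : (1:ℝ) ≤ t ^ k := one_le_pow₀ ht1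
    have hb1 : (t ^ 2 - x ^ 2) ^ p ≤ t ^ (2 * p) := by
      have h1 : (t ^ 2 - x ^ 2) ^ p ≤ (t ^ 2) ^ p :=
        Real.rpow_le_rpow hu.le (by nlinarith) hp
      have h2 : ((t:ℝ) ^ 2) ^ p = t ^ (2 * p) := by
        rw [← Real.rpow_natCast t 2, ← Real.rpow_mul ht0.le]
        norm_num
      linarith [h1, h2.le, h2.ge]
    have hb2 : Real.exp (-t ^ 2) ≤ Real.exp (-(1:ℝ) * t) := by
      apply Real.exp_le_exp.2
      nlinarith
    calc Real.exp (-t ^ 2) * (t ^ 2 - x ^ 2) ^ p / t ^ k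
        ≤ Real.exp (-t ^ 2) * (t ^ 2 - x ^ 2) ^ p := by
          apply div_le_self (by positivity) htk
      _ ≤ Real.exp (-(1:ℝ) * t) * t ^ (2 * p) := by
          apply mul_le_mul hb2 hb1 (by positivity) (by positivity)
      _ = t ^ (2 * p) * Real.exp (-(1:ℝ) * t) := by ring
  · exact tendsto_rpow_mul_exp_neg_mul_atTop_nhds_zero (2 * p) 1 one_pos

lemma hasDeriv_aux (x : ℝ) (hx : 0 < x) (r : ℝ) (t : ℝ) (ht : x < t) :
    HasDerivAt (fun t : ℝ => Real.exp (-t ^ 2) * (t ^ 2 - x ^ 2) ^ (r + 1))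
      (Real.exp (-t ^ 2) * (-(2 * t)) * (t ^ 2 - x ^ 2) ^ (r + 1) +
        Real.exp (-t ^ 2) * ((r + 1) * (t ^ 2 - x ^ 2) ^ r * (2 * t))) t := by
  have ht0 : (0:ℝ) < t := hx.trans ht
  have hu : (0:ℝ) < t ^ 2 - x ^ 2 := by nlinarith
  have h1 : HasDerivAt (fun t : ℝ => t ^ 2 - x ^ 2) (2 * t) t := by
    simpa using (hasDerivAt_pow 2 t).sub_const (x ^ 2)
  have h2 : HasDerivAt (fun y : ℝ => y ^ (r + 1))
      ((r + 1) * (t ^ 2 - x ^ 2) ^ (r + 1 - 1)) (t ^ 2 - x ^ 2) :=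
    Real.hasDerivAt_rpow_const (Or.inl hu.ne')
  have h3 : HasDerivAt (fun t : ℝ => (t ^ 2 - x ^ 2) ^ (r + 1))
      ((r + 1) * (t ^ 2 - x ^ 2) ^ r * (2 * t)) t := by
    have := h2.comp t h1
    rw [show r + 1 - 1 = r from by ring] at this; exact this
  have h4 : HasDerivAt (fun t : ℝ => Real.exp (-t ^ 2)) (Real.exp (-t ^ 2) * (-(2 * t))) t := by
    have hneg : HasDerivAt (fun t : ℝ => -t ^ 2) (-(2 * t)) t := by
      simpa using (hasDerivAt_pow 2 t).fun_neg
    exact hneg.exp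
  exact h4.mul h3

lemma ibp1 (x : ℝ) (hx : 0 < x) (r : ℝ) (hr : -1 < r) :
    2 * (∫ t in Ioi x, Real.exp (-t ^ 2) * (t ^ 2 - x ^ 2) ^ (r + 1)) =
      (2 * r + 1) * (∫ t in Ioi x, Real.exp (-t ^ 2) * (t ^ 2 - x ^ 2) ^ r) +
        x ^ 2 * ∫ t in Ioi x, Real.exp (-t ^ 2) * (t ^ 2 - x ^ 2) ^ r / t ^ 2 := by
  set f' : ℝ → ℝ := fun t => 2 * (r + 1) * (Real.exp (-t ^ 2) * (t ^ 2 - x ^ 2) ^ r) -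
      2 * (Real.exp (-t ^ 2) * (t ^ 2 - x ^ 2) ^ (r + 1)) -
      Real.exp (-t ^ 2) * (t ^ 2 - x ^ 2) ^ (r + 1) / t ^ 2 with hf'
  have hderiv : ∀ t ∈ Ioi x, HasDerivAt
      (fun t : ℝ => Real.exp (-t ^ 2) * (t ^ 2 - x ^ 2) ^ (r + 1) * t⁻¹) (f' t) t := by
    intro t ht
    have htx : x < t := ht
    have ht0 : (0:ℝ) < t := hx.trans htx
    have hu : (0:ℝ) < t ^ 2 - x ^ 2 := by nlinarith
    have h5 : HasDerivAt (fun t : ℝ => t⁻¹) (-(t ^ 2)⁻¹) t := hasDerivAt_inv ht0.ne'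
    have h6 := (hasDeriv_aux x hx r t htx).fun_mul h5
    refine h6.congr_deriv (Eq.symm ?_)
    rw [hf']
    dsimp only
    rw [Real.rpow_add_one hu.ne']
    field_simp
    ring
  have hcont : ContinuousWithinAt
      (fun t : ℝ => Real.exp (-t ^ 2) * (t ^ 2 - x ^ 2) ^ (r + 1) * t⁻¹) (Ici x) x := by
    apply ContinuousAt.continuousWithinAt
    have hc1 : ContinuousAt (fun t : ℝ => t ^ 2 - x ^ 2) x := by fun_prop
    have hc2 : ContinuousAt (fun t : ℝ => (t ^ 2 - x ^ 2) ^ (r + 1)) x :=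
      hc1.rpow_const (Or.inr (by linarith))
    have hc3 : ContinuousAt (fun t : ℝ => Real.exp (-t ^ 2)) x := by fun_prop
    exact (hc3.mul hc2).mul (continuousAt_inv₀ hx.ne')
  have htop : Tendsto (fun t : ℝ => Real.exp (-t ^ 2) * (t ^ 2 - x ^ 2) ^ (r + 1) * t⁻¹)
      atTop (nhds 0) := by
    have := tendsto_bdry x hx (r + 1) (by linarith) 1 le_rfl
    simpa [div_eq_mul_inv] using this
  have hA : IntegrableOn (fun t : ℝ => 2 * (r + 1) * (Real.exp (-t ^ 2) * (t ^ 2 - x ^ 2) ^ r))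
      (Ioi x) := (integrable_base x hx r hr).const_mul (2 * (r + 1))
  have hB : IntegrableOn (fun t : ℝ => 2 * (Real.exp (-t ^ 2) * (t ^ 2 - x ^ 2) ^ (r + 1)))
      (Ioi x) := (integrable_base x hx (r + 1) (by linarith)).const_mul 2
  have hC : IntegrableOn (fun t : ℝ => Real.exp (-t ^ 2) * (t ^ 2 - x ^ 2) ^ (r + 1) / t ^ 2)
      (Ioi x) := integrable_div x hx (r + 1) (by linarith) 2
  have hAB : IntegrableOn (fun t : ℝ =>
      2 * (r + 1) * (Real.exp (-t ^ 2) * (t ^ 2 - x ^ 2) ^ r) -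
      2 * (Real.exp (-t ^ 2) * (t ^ 2 - x ^ 2) ^ (r + 1))) (Ioi x) := hA.sub hB
  have hint : IntegrableOn f' (Ioi x) := hAB.sub hC
  have key := integral_Ioi_of_hasDerivAt_of_tendsto hcont hderiv hint htop
  have hFx : Real.exp (-x ^ 2) * (x ^ 2 - x ^ 2) ^ (r + 1) * x⁻¹ = 0 := by
    rw [sub_self, Real.zero_rpow (by linarith : r + 1 ≠ 0)]
    ring
  rw [hFx, sub_zero] at key
  rw [hf'] at key
  rw [integral_sub hAB hC, integral_sub hA hB,
    integral_const_mul, integral_const_mul, Mident x hx r hr] at key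
  linarith [key]

lemma ibp2 (x : ℝ) (hx : 0 < x) (r : ℝ) (hr : -1 < r) :
    2 * (r + 1 + x ^ 2) * (∫ t in Ioi x, Real.exp (-t ^ 2) * (t ^ 2 - x ^ 2) ^ r / t ^ 2) =
      2 * (∫ t in Ioi x, Real.exp (-t ^ 2) * (t ^ 2 - x ^ 2) ^ r) +
        3 * ∫ t in Ioi x, Real.exp (-t ^ 2) * (t ^ 2 - x ^ 2) ^ (r + 1) / t ^ 4 := by
  set f' : ℝ → ℝ := fun t =>
      2 * (r + 1) * (Real.exp (-t ^ 2) * (t ^ 2 - x ^ 2) ^ r / t ^ 2) -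
      2 * (Real.exp (-t ^ 2) * (t ^ 2 - x ^ 2) ^ (r + 1) / t ^ 2) -
      3 * (Real.exp (-t ^ 2) * (t ^ 2 - x ^ 2) ^ (r + 1) / t ^ 4) with hf'
  have hderiv : ∀ t ∈ Ioi x, HasDerivAt
      (fun t : ℝ => Real.exp (-t ^ 2) * (t ^ 2 - x ^ 2) ^ (r + 1) * (t ^ 3)⁻¹) (f' t) t := by
    intro t ht
    have htx : x < t := ht
    have ht0 : (0:ℝ) < t := hx.trans htx
    have hu : (0:ℝ) < t ^ 2 - x ^ 2 := by nlinarith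
    have h5 : HasDerivAt (fun t : ℝ => (t ^ 3)⁻¹) (-((3:ℕ) * t ^ (3 - 1)) / (t ^ 3) ^ 2) t :=
      (hasDerivAt_pow 3 t).inv (pow_ne_zero 3 ht0.ne')
    have h6 := (hasDeriv_aux x hx r t htx).fun_mul h5
    refine h6.congr_deriv (Eq.symm ?_)
    rw [hf']
    dsimp only
    rw [Real.rpow_add_one hu.ne']
    field_simp
    ring
  have hcont : ContinuousWithinAt
      (fun t : ℝ => Real.exp (-t ^ 2) * (t ^ 2 - x ^ 2) ^ (r + 1) * (t ^ 3)⁻¹) (Ici x) x := by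
    apply ContinuousAt.continuousWithinAt
    have hc1 : ContinuousAt (fun t : ℝ => t ^ 2 - x ^ 2) x := by fun_prop
    have hc2 : ContinuousAt (fun t : ℝ => (t ^ 2 - x ^ 2) ^ (r + 1)) x :=
      hc1.rpow_const (Or.inr (by linarith))
    have hc3 : ContinuousAt (fun t : ℝ => Real.exp (-t ^ 2)) x := by fun_prop
    have hc4 : ContinuousAt (fun t : ℝ => (t ^ 3)⁻¹) x := by
      apply ContinuousAt.inv₀ (by fun_prop)
      positivity
    exact (hc3.mul hc2).mul hc4
  have htop : Tendsto (fun t : ℝ => Real.exp (-t ^ 2) * (t ^ 2 - x ^ 2) ^ (r + 1) * (t ^ 3)⁻¹)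
      atTop (nhds 0) := by
    have := tendsto_bdry x hx (r + 1) (by linarith) 3 (by norm_num)
    simpa [div_eq_mul_inv] using this
  have hA : IntegrableOn (fun t : ℝ =>
      2 * (r + 1) * (Real.exp (-t ^ 2) * (t ^ 2 - x ^ 2) ^ r / t ^ 2)) (Ioi x) :=
    (integrable_div x hx r hr 2).const_mul (2 * (r + 1))
  have hB : IntegrableOn (fun t : ℝ =>
      2 * (Real.exp (-t ^ 2) * (t ^ 2 - x ^ 2) ^ (r + 1) / t ^ 2)) (Ioi x) :=
    (integrable_div x hx (r + 1) (by linarith) 2).const_mul 2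
  have hC : IntegrableOn (fun t : ℝ =>
      3 * (Real.exp (-t ^ 2) * (t ^ 2 - x ^ 2) ^ (r + 1) / t ^ 4)) (Ioi x) :=
    (integrable_div x hx (r + 1) (by linarith) 4).const_mul 3
  have hAB : IntegrableOn (fun t : ℝ =>
      2 * (r + 1) * (Real.exp (-t ^ 2) * (t ^ 2 - x ^ 2) ^ r / t ^ 2) -
      2 * (Real.exp (-t ^ 2) * (t ^ 2 - x ^ 2) ^ (r + 1) / t ^ 2)) (Ioi x) := hA.sub hB
  have hint : IntegrableOn f' (Ioi x) := hAB.sub hC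
  have key := integral_Ioi_of_hasDerivAt_of_tendsto hcont hderiv hint htop
  have hFx : Real.exp (-x ^ 2) * (x ^ 2 - x ^ 2) ^ (r + 1) * (x ^ 3)⁻¹ = 0 := by
    rw [sub_self, Real.zero_rpow (by linarith : r + 1 ≠ 0)]
    ring
  rw [hFx, sub_zero] at key
  rw [hf'] at key
  rw [integral_sub hAB hC, integral_sub hA hB,
    integral_const_mul, integral_const_mul, integral_const_mul, Mident x hx r hr] at key
  linarith [key]

theorem stmt_11 (q : ℝ) (hq : -1 / 2 < q) (x : ℝ) (hx : 0 < x) :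
    (q + 2) * (2 * q + 1) / ((q + 1) * (2 * q + 3)) * V q x * V (q + 2) x <
      (V (q + 1) x) ^ 2 := by
  have hq' : (-1:ℝ) < q := by linarith
  set I0 := ∫ t in Ioi x, Real.exp (-t ^ 2) * (t ^ 2 - x ^ 2) ^ q with hI0def
  set I1 := ∫ t in Ioi x, Real.exp (-t ^ 2) * (t ^ 2 - x ^ 2) ^ (q + 1) with hI1def
  set I2 := ∫ t in Ioi x, Real.exp (-t ^ 2) * (t ^ 2 - x ^ 2) ^ (q + 2) with hI2def
  set M0 := ∫ t in Ioi x, Real.exp (-t ^ 2) * (t ^ 2 - x ^ 2) ^ q / t ^ 2 with hM0def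
  set M1 := ∫ t in Ioi x, Real.exp (-t ^ 2) * (t ^ 2 - x ^ 2) ^ (q + 1) / t ^ 2 with hM1def
  set P1 := ∫ t in Ioi x, Real.exp (-t ^ 2) * (t ^ 2 - x ^ 2) ^ (q + 1) / t ^ 4 with hP1def
  have hE1 : 2 * I1 = (2 * q + 1) * I0 + x ^ 2 * M0 := ibp1 x hx q hq'
  have hE1' : 2 * I2 = (2 * (q + 1) + 1) * I1 + x ^ 2 * M1 := by
    have := ibp1 x hx (q + 1) (by linarith)
    rw [show q + 1 + 1 = q + 2 by ring] at this
    exact this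
  have hM1 : M1 = I0 - x ^ 2 * M0 := Mident x hx q hq'
  have hE2 : 2 * (q + 1 + x ^ 2) * M0 = 2 * I0 + 3 * P1 := ibp2 x hx q hq'
  have hI0 : 0 < I0 := by
    have := Ipos x hx q hq' 0
    simpa using this
  have hM0 : 0 < M0 := Ipos x hx q hq' 2
  have hP1 : 0 < P1 := Ipos x hx (q + 1) (by linarith) 4
  have hI1 : 0 < I1 := by nlinarith
  have hid : 4 * ((2 * q + 3) * I1 ^ 2 - (2 * q + 1) * (I0 * I2)) =
      x ^ 2 * ((2 * q + 1) * I0 * (M0 + 3 * P1) + (2 * q + 3) * x ^ 2 * M0 ^ 2) := by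
    have hE1'' : 2 * I2 = (2 * q + 3) * I1 + x ^ 2 * (I0 - x ^ 2 * M0) := by
      rw [hM1] at hE1'; linarith
    linear_combination (2 * (2 * q + 3) * I1 + (2 * q + 3) * x ^ 2 * M0) * hE1 -
      2 * (2 * q + 1) * I0 * hE1'' + (2 * q + 1) * x ^ 2 * I0 * hE2
  have h2q1 : (0:ℝ) < 2 * q + 1 := by linarith
  have h2q3 : (0:ℝ) < 2 * q + 3 := by linarith
  have hx2 : (0:ℝ) < x ^ 2 := by positivity
  have hR : 0 < x ^ 2 * ((2 * q + 1) * I0 * (M0 + 3 * P1) + (2 * q + 3) * x ^ 2 * M0 ^ 2) := by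
    have t1 : 0 < (2 * q + 1) * I0 * (M0 + 3 * P1) :=
      mul_pos (mul_pos h2q1 hI0) (by linarith)
    have t2 : 0 < (2 * q + 3) * x ^ 2 * M0 ^ 2 :=
      mul_pos (mul_pos h2q3 hx2) (by positivity)
    exact mul_pos hx2 (by linarith)
  have key : (2 * q + 1) * (I0 * I2) < (2 * q + 3) * I1 ^ 2 := by linarith
  -- now relate V to the integrals
  have hG1 : 0 < Real.Gamma (q + 1) := Real.Gamma_pos_of_pos (by linarith)
  have hG2 : Real.Gamma (q + 1 + 1) = (q + 1) * Real.Gamma (q + 1) :=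
    Real.Gamma_add_one (by linarith)
  have hG3 : Real.Gamma (q + 2 + 1) = (q + 2) * ((q + 1) * Real.Gamma (q + 1)) := by
    rw [Real.Gamma_add_one (by linarith : q + 2 ≠ 0),
      show (q:ℝ) + 2 = q + 1 + 1 by ring, Real.Gamma_add_one (by linarith : q + 1 ≠ 0)]
  have hVq : V q x = 2 * Real.exp (x ^ 2) / Real.Gamma (q + 1) * I0 := rfl
  have hVq1 : V (q + 1) x = 2 * Real.exp (x ^ 2) / ((q + 1) * Real.Gamma (q + 1)) * I1 := by
    show 2 * Real.exp (x ^ 2) / Real.Gamma (q + 1 + 1) *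
      (∫ t in Set.Ioi x, Real.exp (-t ^ 2) * (t ^ 2 - x ^ 2) ^ (q + 1)) = _
    rw [hG2, ← hI1def]
  have hVq2 : V (q + 2) x =
      2 * Real.exp (x ^ 2) / ((q + 2) * ((q + 1) * Real.Gamma (q + 1))) * I2 := by
    show 2 * Real.exp (x ^ 2) / Real.Gamma (q + 2 + 1) *
      (∫ t in Set.Ioi x, Real.exp (-t ^ 2) * (t ^ 2 - x ^ 2) ^ (q + 2)) = _
    rw [hG3, ← hI2def]
  rw [hVq, hVq1, hVq2]
  have hq1ne : (q:ℝ) + 1 ≠ 0 := by linarith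
  have hq2ne : (q:ℝ) + 2 ≠ 0 := by linarith
  have h2q3ne : (2:ℝ) * q + 3 ≠ 0 := by linarith
  have hGne : Real.Gamma (q + 1) ≠ 0 := hG1.ne'
  have hEne : Real.exp (x ^ 2) ≠ 0 := (Real.exp_pos _).ne'
  have hK : 0 < 4 * Real.exp (x ^ 2) ^ 2 /
      ((q + 1) ^ 2 * (2 * q + 3) * Real.Gamma (q + 1) ^ 2) := by
    apply div_pos (by positivity)
    apply mul_pos (mul_pos (by positivity) h2q3) (by positivity)
  have hL : (q + 2) * (2 * q + 1) / ((q + 1) * (2 * q + 3)) *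
      (2 * Real.exp (x ^ 2) / Real.Gamma (q + 1) * I0) *
      (2 * Real.exp (x ^ 2) / ((q + 2) * ((q + 1) * Real.Gamma (q + 1))) * I2) =
      (2 * q + 1) * (I0 * I2) * (4 * Real.exp (x ^ 2) ^ 2 /
        ((q + 1) ^ 2 * (2 * q + 3) * Real.Gamma (q + 1) ^ 2)) := by
    field_simp
    ring
  have hRR : (2 * Real.exp (x ^ 2) / ((q + 1) * Real.Gamma (q + 1)) * I1) ^ 2 =
      (2 * q + 3) * I1 ^ 2 * (4 * Real.exp (x ^ 2) ^ 2 /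
        ((q + 1) ^ 2 * (2 * q + 3) * Real.Gamma (q + 1) ^ 2)) := by
    field_simp
    ring
  rw [hL, hRR]
  exact mul_lt_mul_of_pos_right key hK
end

section
/- For every q > -1 and every x > 0, the differentiation formula x·V_q'(x) = (2q+1)·V_q(x) - 2(q+1)·V_{q+1}(x) holds. -/
open Real MeasureTheory Set
open Filter

noncomputable def G (q x : ℝ) : ℝ :=
  ∫ s in Set.Ioi (0:ℝ), Real.exp (-s^2) * s ^ (2*q+1) / Real.sqrt (x^2+s^2)

lemma aux_int {x : ℝ} (hx : 0 < x) {p : ℝ} (hp : -1 < p) (n : ℕ) :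
    IntegrableOn (fun s => Real.exp (-s^2) * s ^ p / Real.sqrt (x^2 + s^2) ^ n) (Ioi 0) := by
  have hb : Integrable (fun s : ℝ => (x ^ n)⁻¹ * (s ^ p * Real.exp (-1 * s^2)))
      (volume.restrict (Ioi 0)) :=
    (integrableOn_rpow_mul_exp_neg_mul_sq one_pos hp).const_mul _
  refine hb.mono' ?_ ?_
  · refine ContinuousOn.aestronglyMeasurable ?_ measurableSet_Ioi
    apply ContinuousOn.div
    · exact ((Real.continuous_exp.comp (by continuity)).continuousOn).mul
        (fun s hs => (Real.continuousAt_rpow_const s p (Or.inl (ne_of_gt hs))).continuousWithinAt)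
    · exact ((Real.continuous_sqrt.comp (by continuity)).pow n).continuousOn
    · intro s hs
      exact pow_ne_zero _ (ne_of_gt (Real.sqrt_pos.2 (by positivity)))
  · rw [ae_restrict_iff' measurableSet_Ioi]
    filter_upwards with s hs
    simp only [mem_Ioi] at hs
    have h1 : (0:ℝ) < Real.sqrt (x^2+s^2) := Real.sqrt_pos.2 (by positivity)
    have h2 : x ≤ Real.sqrt (x^2+s^2) := by
      nlinarith [Real.sq_sqrt (show (0:ℝ) ≤ x^2+s^2 by positivity), h1]
    have hnum : (0:ℝ) ≤ Real.exp (-s^2) * s ^ p :=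
      mul_nonneg (Real.exp_pos _).le (Real.rpow_nonneg hs.le p)
    rw [Real.norm_eq_abs, abs_of_nonneg (div_nonneg hnum (pow_nonneg (Real.sqrt_nonneg _) n))]
    calc Real.exp (-s^2) * s ^ p / Real.sqrt (x^2+s^2) ^ n
        ≤ Real.exp (-s^2) * s ^ p / x ^ n := by
          apply div_le_div_of_nonneg_left hnum (pow_pos hx n) (pow_le_pow_left₀ hx.le h2 n)
      _ = (x ^ n)⁻¹ * (s ^ p * Real.exp (-1 * s^2)) := by rw [neg_one_mul]; ring

-- derivative of y ↦ 1/sqrt(y²+s²) for y²+s² > 0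
lemma hasDerivAt_inv_sqrt {s y : ℝ} (h : 0 < y^2 + s^2) :
    HasDerivAt (fun y : ℝ => (Real.sqrt (y^2+s^2))⁻¹) (-y / Real.sqrt (y^2+s^2)^3) y := by
  have hsq : (0:ℝ) < Real.sqrt (y^2+s^2) := Real.sqrt_pos.2 h
  have h1 : HasDerivAt (fun y : ℝ => y^2 + s^2) (2*y) y := by
    simpa using (hasDerivAt_pow 2 y).add_const (s^2)
  have h2 := (h1.sqrt (ne_of_gt h)).inv (ne_of_gt hsq)
  refine h2.congr_deriv ?_
  have h3 : Real.sqrt (y^2+s^2) ^ 2 = y^2 + s^2 := Real.sq_sqrt h.le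
  field_simp

lemma hasDerivAt_G {q x : ℝ} (hq : -1 < q) (hx : 0 < x) :
    Integrable (fun s => Real.exp (-s^2) * s ^ (2*q+1) * (-x / Real.sqrt (x^2+s^2)^3))
      (volume.restrict (Ioi 0)) ∧
    HasDerivAt (G q)
      (∫ s in Ioi (0:ℝ), Real.exp (-s^2) * s ^ (2*q+1) * (-x / Real.sqrt (x^2+s^2)^3)) x := by
  set F : ℝ → ℝ → ℝ := fun y s => Real.exp (-s^2) * s ^ (2*q+1) / Real.sqrt (y^2+s^2) with hF
  set F' : ℝ → ℝ → ℝ := fun y s => Real.exp (-s^2) * s ^ (2*q+1) * (-y / Real.sqrt (y^2+s^2)^3)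
    with hF'
  have hcont : ∀ y : ℝ, AEStronglyMeasurable (F y) (volume.restrict (Ioi 0)) := by
    intro y
    refine ContinuousOn.aestronglyMeasurable ?_ measurableSet_Ioi
    apply ContinuousOn.div
    · exact ((Real.continuous_exp.comp (by continuity)).continuousOn).mul
        (fun s hs => (Real.continuousAt_rpow_const s _ (Or.inl (ne_of_gt hs))).continuousWithinAt)
    · exact (Real.continuous_sqrt.comp (by continuity)).continuousOn
    · intro s hs
      simp only [mem_Ioi] at hs
      exact ne_of_gt (Real.sqrt_pos.2 (by positivity))
  have hcont' : AEStronglyMeasurable (F' x) (volume.restrict (Ioi 0)) := by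
    refine ContinuousOn.aestronglyMeasurable ?_ measurableSet_Ioi
    apply ContinuousOn.mul
    · exact ((Real.continuous_exp.comp (by continuity)).continuousOn).mul
        (fun s hs => (Real.continuousAt_rpow_const s _ (Or.inl (ne_of_gt hs))).continuousWithinAt)
    · apply ContinuousOn.div continuousOn_const
      · exact ((Real.continuous_sqrt.comp (by continuity)).pow 3).continuousOn
      · intro s hs
        simp only [mem_Ioi] at hs
        exact pow_ne_zero _ (ne_of_gt (Real.sqrt_pos.2 (by positivity)))
  have hFint : Integrable (F x) (volume.restrict (Ioi 0)) := by
    have := aux_int hx (by linarith : (-1:ℝ) < 2*q+1) 1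
    simp only [pow_one] at this
    exact this
  have hbound : ∀ᵐ s ∂(volume.restrict (Ioi 0)), ∀ y ∈ Metric.ball x (x/2),
      ‖F' y s‖ ≤ Real.exp (-s^2) * s ^ (2*q+1) * (8/x^2) := by
    rw [ae_restrict_iff' measurableSet_Ioi]
    filter_upwards with s hs
    intro y hy
    simp only [mem_Ioi] at hs
    rw [Metric.mem_ball, Real.dist_eq, abs_lt] at hy
    have hy1 : x/2 < y := by linarith [hy.1]
    have hy0 : 0 < y := lt_trans (by linarith) hy1
    have hsp : (0:ℝ) < y^2 + s^2 := by positivity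
    have hsq : (0:ℝ) < Real.sqrt (y^2+s^2) := Real.sqrt_pos.2 hsp
    have hyle : y ≤ Real.sqrt (y^2+s^2) := by
      nlinarith [Real.sq_sqrt hsp.le, hsq]
    have hc : (0:ℝ) ≤ Real.exp (-s^2) * s ^ (2*q+1) :=
      mul_nonneg (Real.exp_pos _).le (Real.rpow_nonneg hs.le _)
    have : ‖F' y s‖ = Real.exp (-s^2) * s ^ (2*q+1) * (y / Real.sqrt (y^2+s^2)^3) := by
      simp only [hF', Real.norm_eq_abs, abs_mul, abs_of_nonneg (Real.exp_pos (-s^2)).le,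
        abs_of_nonneg (Real.rpow_nonneg hs.le (2*q+1)), abs_div, abs_neg, abs_of_nonneg hy0.le,
        abs_of_nonneg (pow_nonneg hsq.le 3)]
    rw [this]
    apply mul_le_mul_of_nonneg_left _ hc
    have h8 : y / Real.sqrt (y^2+s^2)^3 ≤ y / y^3 := by
      apply div_le_div_of_nonneg_left hy0.le (by positivity)
      exact pow_le_pow_left₀ hy0.le hyle 3
    have : y / y^3 = 1/y^2 := by field_simp
    rw [this] at h8
    refine h8.trans ?_
    rw [div_le_div_iff₀ (by positivity) (by positivity)]
    nlinarith [hy1]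
  have hbint : Integrable (fun s => Real.exp (-s^2) * s ^ (2*q+1) * (8/x^2))
      (volume.restrict (Ioi 0)) := by
    simpa [pow_zero] using (aux_int hx (by linarith : (-1:ℝ) < 2*q+1) 0).mul_const (8/x^2)
  have hdiff : ∀ᵐ s ∂(volume.restrict (Ioi 0)), ∀ y ∈ Metric.ball x (x/2),
      HasDerivAt (fun y => F y s) (F' y s) y := by
    rw [ae_restrict_iff' measurableSet_Ioi]
    filter_upwards with s hs
    intro y _
    simp only [mem_Ioi] at hs
    have hsp : (0:ℝ) < y^2 + s^2 := by positivity
    have h2 := (hasDerivAt_inv_sqrt hsp).const_mul (Real.exp (-s^2) * s ^ (2*q+1))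
    simp only [hF, hF', div_eq_mul_inv]
    exact h2.congr_deriv (by ring)
  have main := hasDerivAt_integral_of_dominated_loc_of_deriv_le (Metric.ball_mem_nhds x (half_pos hx))
    (Eventually.of_forall hcont) hFint hcont' hbound hbint hdiff
  exact ⟨main.1, main.2⟩
lemma hasDerivAt_inv_sqrt' {x s : ℝ} (h : 0 < x^2 + s^2) :
    HasDerivAt (fun s : ℝ => (Real.sqrt (x^2+s^2))⁻¹) (-s / Real.sqrt (x^2+s^2)^3) s := by
  have hsq : (0:ℝ) < Real.sqrt (x^2+s^2) := Real.sqrt_pos.2 h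
  have h1 : HasDerivAt (fun s : ℝ => x^2 + s^2) (2*s) s := by
    simpa using (hasDerivAt_pow 2 s).const_add (x^2)
  have h2 := (h1.sqrt (ne_of_gt h)).inv (ne_of_gt hsq)
  refine h2.congr_deriv ?_
  have h3 : Real.sqrt (x^2+s^2) ^ 2 = x^2 + s^2 := Real.sq_sqrt h.le
  field_simp

lemma ibp {q x : ℝ} (hq : -1 < q) (hx : 0 < x) :
    (∫ s in Ioi (0:ℝ), Real.exp (-s^2) * s ^ (2*q+3) / Real.sqrt (x^2+s^2)^3)
      = (2*q+2) * (∫ s in Ioi (0:ℝ), Real.exp (-s^2) * s ^ (2*q+1) / Real.sqrt (x^2+s^2))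
        - 2 * (∫ s in Ioi (0:ℝ), Real.exp (-s^2) * s ^ (2*q+3) / Real.sqrt (x^2+s^2)) := by
  have hpos : ∀ s : ℝ, (0:ℝ) < x^2 + s^2 := fun s => by positivity
  set u : ℝ → ℝ := fun s => Real.exp (-s^2) * s ^ (2*q+2) with hu_def
  set u' : ℝ → ℝ := fun s => Real.exp (-s^2) * ((2*q+2) * s ^ (2*q+1) - 2 * s ^ (2*q+3))
    with hu'_def
  set v : ℝ → ℝ := fun s => (Real.sqrt (x^2+s^2))⁻¹ with hv_def
  set v' : ℝ → ℝ := fun s => -s / Real.sqrt (x^2+s^2)^3 with hv'_def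
  have hsqpos : ∀ s : ℝ, (0:ℝ) < Real.sqrt (x^2+s^2) := fun s => Real.sqrt_pos.2 (hpos s)
  have hxle : ∀ s : ℝ, x ≤ Real.sqrt (x^2+s^2) := by
    intro s
    nlinarith [Real.sq_sqrt (hpos s).le, hsqpos s]
  have hu : ∀ s ∈ Ioi (0:ℝ), HasDerivAt u (u' s) s := by
    intro s hs
    simp only [mem_Ioi] at hs
    have h1 : HasDerivAt (fun s : ℝ => Real.exp (-s^2)) (Real.exp (-s^2) * (-(2*s))) s := by
      simpa using ((hasDerivAt_pow 2 s).neg).exp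
    have h2 : HasDerivAt (fun s : ℝ => s ^ (2*q+2)) ((2*q+2) * s ^ (2*q+2-1)) s :=
      Real.hasDerivAt_rpow_const (Or.inl (ne_of_gt hs))
    have h3 := h1.mul h2
    refine h3.congr_deriv ?_
    simp only [hu'_def]
    have h4 : (s:ℝ) ^ (2*q+3) = s ^ (2*q+2) * s := by
      rw [show (2*q+3:ℝ) = (2*q+2)+1 by ring, Real.rpow_add hs, Real.rpow_one]
    rw [show (2*q+2-1:ℝ) = 2*q+1 by ring, h4]
    ring
  have hv : ∀ s ∈ Ioi (0:ℝ), HasDerivAt v (v' s) s := fun s _ => hasDerivAt_inv_sqrt' (hpos s)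
  have huv' : IntegrableOn (u * v') (Ioi 0) := by
    refine IntegrableOn.congr_fun ((aux_int hx (by linarith : (-1:ℝ) < 2*q+3) 3).neg)
      (fun s hs => ?_) measurableSet_Ioi
    simp only [mem_Ioi] at hs
    simp only [Pi.mul_apply, Pi.neg_apply, hu_def, hv'_def]
    have h4 : (s:ℝ) ^ (2*q+3) = s ^ (2*q+2) * s := by
      rw [show (2*q+3:ℝ) = (2*q+2)+1 by ring, Real.rpow_add hs, Real.rpow_one]
    rw [h4]
    field_simp
  have hu'v : IntegrableOn (u' * v) (Ioi 0) := by
    have i1 := (aux_int hx (by linarith : (-1:ℝ) < 2*q+1) 1).const_mul (2*q+2)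
    have i2 := (aux_int hx (by linarith : (-1:ℝ) < 2*q+3) 1).const_mul 2
    refine IntegrableOn.congr_fun (i1.sub i2) (fun s hs => ?_) measurableSet_Ioi
    simp only [mem_Ioi] at hs
    simp only [Pi.mul_apply, Pi.sub_apply, hu'_def, hv_def, pow_one]
    field_simp
  have h_zero : Tendsto (u * v) (nhdsWithin 0 (Ioi 0)) (nhds 0) := by
    have hc : ContinuousAt (fun s : ℝ => Real.exp (-s^2) * s ^ (2*q+2) * (Real.sqrt (x^2+s^2))⁻¹)
        0 := by
      refine ContinuousAt.mul (ContinuousAt.mul ?_ ?_) (ContinuousAt.inv₀ ?_ ?_)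
      · exact (Real.continuous_exp.comp (by continuity)).continuousAt
      · exact Real.continuousAt_rpow_const 0 (2*q+2) (Or.inr (by linarith))
      · exact (Real.continuous_sqrt.comp (by continuity)).continuousAt
      · simpa using ne_of_gt (hsqpos 0)
    have h0 : Real.exp (-(0:ℝ)^2) * (0:ℝ) ^ (2*q+2) * (Real.sqrt (x^2+(0:ℝ)^2))⁻¹ = 0 := by
      rw [Real.zero_rpow (by linarith : (2*q+2:ℝ) ≠ 0)]
      ring
    have := hc.tendsto
    rw [h0] at this
    exact Tendsto.mono_left this nhdsWithin_le_nhds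
  have h_infty : Tendsto (u * v) atTop (nhds 0) := by
    have hg : Tendsto (fun s : ℝ => (1/x) * (s ^ (2*q+2) * Real.exp (-1 * s))) atTop (nhds 0) := by
      have := (tendsto_rpow_mul_exp_neg_mul_atTop_nhds_zero (2*q+2) 1 one_pos).const_mul (1/x)
      simpa using this
    refine squeeze_zero_norm' ?_ hg
    filter_upwards [eventually_ge_atTop (1:ℝ)] with s hs1
    have hs0 : (0:ℝ) < s := lt_of_lt_of_le one_pos hs1
    have hnn : (0:ℝ) ≤ u s * v s := by
      apply mul_nonneg (mul_nonneg (Real.exp_pos _).le (Real.rpow_nonneg hs0.le _))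
      exact inv_nonneg.2 (Real.sqrt_nonneg _)
    rw [Pi.mul_apply, Real.norm_eq_abs, abs_of_nonneg hnn]
    have hle1 : Real.exp (-s^2) ≤ Real.exp (-1*s) := by
      apply Real.exp_le_exp.2
      nlinarith
    have hle2 : (Real.sqrt (x^2+s^2))⁻¹ ≤ 1/x := by
      rw [one_div]
      exact inv_anti₀ hx (hxle s)
    calc u s * v s ≤ Real.exp (-1*s) * s ^ (2*q+2) * (Real.sqrt (x^2+s^2))⁻¹ := by
          apply mul_le_mul_of_nonneg_right (mul_le_mul_of_nonneg_right hle1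
            (Real.rpow_nonneg hs0.le _)) (inv_nonneg.2 (Real.sqrt_nonneg _))
      _ ≤ Real.exp (-1*s) * s ^ (2*q+2) * (1/x) := by
          apply mul_le_mul_of_nonneg_left hle2
          exact mul_nonneg (Real.exp_pos _).le (Real.rpow_nonneg hs0.le _)
      _ = (1/x) * (s ^ (2*q+2) * Real.exp (-1*s)) := by ring
  have key := integral_Ioi_deriv_mul_eq_sub hu hv (hu'v.add huv') h_zero h_infty
  have hsplit := integral_add hu'v huv'
  simp only [Pi.mul_apply, Pi.add_apply] at hsplit key
  rw [hsplit] at key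
  have e1 : (∫ s in Ioi (0:ℝ), u s * v' s)
      = -∫ s in Ioi (0:ℝ), Real.exp (-s^2) * s ^ (2*q+3) / Real.sqrt (x^2+s^2)^3 := by
    rw [← integral_neg]
    refine setIntegral_congr_fun measurableSet_Ioi (fun s hs => ?_)
    simp only [mem_Ioi] at hs
    simp only [hu_def, hv'_def]
    have h4 : (s:ℝ) ^ (2*q+3) = s ^ (2*q+2) * s := by
      rw [show (2*q+3:ℝ) = (2*q+2)+1 by ring, Real.rpow_add hs, Real.rpow_one]
    rw [h4]
    field_simp
  have e2 : (∫ s in Ioi (0:ℝ), u' s * v s)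
      = (2*q+2) * (∫ s in Ioi (0:ℝ), Real.exp (-s^2) * s ^ (2*q+1) / Real.sqrt (x^2+s^2))
        - 2 * (∫ s in Ioi (0:ℝ), Real.exp (-s^2) * s ^ (2*q+3) / Real.sqrt (x^2+s^2)) := by
    have j1 : IntegrableOn
        (fun s => (2*q+2) * (Real.exp (-s^2) * s ^ (2*q+1) / Real.sqrt (x^2+s^2))) (Ioi 0) := by
      simpa [pow_one, IntegrableOn] using (aux_int hx (by linarith : (-1:ℝ) < 2*q+1) 1).const_mul (2*q+2)
    have j2 : IntegrableOn
        (fun s => 2 * (Real.exp (-s^2) * s ^ (2*q+3) / Real.sqrt (x^2+s^2))) (Ioi 0) := by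
      simpa [pow_one, IntegrableOn] using (aux_int hx (by linarith : (-1:ℝ) < 2*q+3) 1).const_mul 2
    rw [← integral_const_mul, ← integral_const_mul, ← integral_sub j1 j2]
    refine setIntegral_congr_fun measurableSet_Ioi (fun s hs => ?_)
    simp only [mem_Ioi] at hs
    simp only [hu'_def, hv_def]
    field_simp
  rw [e1, e2] at key
  linarith [key]

lemma cov {q x : ℝ} (hx : 0 < x) :
    (∫ t in Ioi x, Real.exp (-t^2) * (t^2-x^2)^q) = Real.exp (-x^2) * G q x := by
  have hpos : ∀ s : ℝ, 0 < s → (0:ℝ) < x^2 + s^2 := fun s hs => by positivity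
  have himg : (fun s => Real.sqrt (x^2+s^2)) '' Ioi 0 = Ioi x := by
    ext t
    constructor
    · rintro ⟨s, hs, rfl⟩
      simp only [mem_Ioi] at hs ⊢
      have h1 : (0:ℝ) < Real.sqrt (x^2+s^2) := Real.sqrt_pos.2 (hpos s hs)
      nlinarith [Real.sq_sqrt (hpos s hs).le]
    · intro ht
      simp only [mem_Ioi] at ht
      have h0 : (0:ℝ) < t^2 - x^2 := by nlinarith
      refine ⟨Real.sqrt (t^2-x^2), by simpa [mem_Ioi] using Real.sqrt_pos.2 h0, ?_⟩
      show Real.sqrt (x^2 + Real.sqrt (t^2-x^2)^2) = t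
      rw [Real.sq_sqrt h0.le, show x^2 + (t^2-x^2) = t^2 by ring,
        Real.sqrt_sq (by linarith : (0:ℝ) ≤ t)]
  have hder : ∀ s ∈ Ioi (0:ℝ), HasDerivWithinAt (fun s => Real.sqrt (x^2+s^2))
      (s / Real.sqrt (x^2+s^2)) (Ioi 0) s := by
    intro s hs
    simp only [mem_Ioi] at hs
    have h1 : HasDerivAt (fun s : ℝ => x^2 + s^2) (2*s) s := by
      simpa using (hasDerivAt_pow 2 s).const_add (x^2)
    have h2 := h1.sqrt (ne_of_gt (hpos s hs))
    have he : 2*s / (2 * Real.sqrt (x^2+s^2)) = s / Real.sqrt (x^2+s^2) := by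
      have : Real.sqrt (x^2+s^2) ≠ 0 := ne_of_gt (Real.sqrt_pos.2 (hpos s hs))
      field_simp
    rw [he] at h2
    exact h2.hasDerivWithinAt
  have hinj : InjOn (fun s => Real.sqrt (x^2+s^2)) (Ioi 0) := by
    intro a ha b hb h
    simp only [mem_Ioi] at ha hb
    have h2 : x^2 + a^2 = x^2 + b^2 := by
      have := congrArg (fun r : ℝ => r^2) h
      simpa [Real.sq_sqrt (hpos a ha).le, Real.sq_sqrt (hpos b hb).le] using this
    have : a^2 = b^2 := by linarith
    calc a = Real.sqrt (a^2) := (Real.sqrt_sq ha.le).symm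
      _ = Real.sqrt (b^2) := by rw [this]
      _ = b := Real.sqrt_sq hb.le
  rw [← himg, integral_image_eq_integral_abs_deriv_smul measurableSet_Ioi hder hinj]
  rw [G, ← integral_const_mul]
  refine setIntegral_congr_fun measurableSet_Ioi (fun s hs => ?_)
  simp only [mem_Ioi] at hs
  have h1 : (0:ℝ) < Real.sqrt (x^2+s^2) := Real.sqrt_pos.2 (hpos s hs)
  have hsq : Real.sqrt (x^2+s^2) ^ 2 = x^2 + s^2 := Real.sq_sqrt (hpos s hs).le
  have habs : |s / Real.sqrt (x^2+s^2)| = s / Real.sqrt (x^2+s^2) :=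
    abs_of_nonneg (div_nonneg hs.le h1.le)
  have hrw1 : (Real.sqrt (x^2+s^2) ^ 2 - x ^ 2 : ℝ) ^ q = s ^ (2*q) := by
    rw [hsq, show x^2 + s^2 - x^2 = s^2 by ring, ← Real.rpow_two s, ← Real.rpow_mul hs.le,
      mul_comm]
  show |s / Real.sqrt (x^2+s^2)| • (Real.exp (-Real.sqrt (x^2+s^2)^2) *
      (Real.sqrt (x^2+s^2)^2 - x^2) ^ q) =
    Real.exp (-x^2) * (Real.exp (-s^2) * s ^ (2*q+1) / Real.sqrt (x^2+s^2))
  rw [smul_eq_mul, habs, hrw1, hsq, show -(x^2+s^2) = -x^2 + -s^2 by ring, Real.exp_add,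
    Real.rpow_add hs, Real.rpow_one]
  field_simp

lemma V_eq_G {q x : ℝ} (hx : 0 < x) : V q x = 2 / Real.Gamma (q+1) * G q x := by
  rw [V, cov hx]
  have h1 : Real.exp (x ^ 2) * Real.exp (-x ^ 2) = 1 := by
    rw [← Real.exp_add]; simp
  linear_combination (2 * G q x / Real.Gamma (q+1)) * h1

theorem stmt_12 (q : ℝ) (hq : -1 < q) (x : ℝ) (hx : 0 < x) :
    x * deriv (V q) x = (2 * q + 1) * V q x - 2 * (q + 1) * V (q + 1) x := by
  obtain ⟨hDint, hD⟩ := hasDerivAt_G hq hx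
  set D : ℝ := ∫ s in Ioi (0:ℝ), Real.exp (-s^2) * s ^ (2*q+1) * (-x / Real.sqrt (x^2+s^2)^3)
    with hD_def
  have hΓpos : (0:ℝ) < Real.Gamma (q+1) := Real.Gamma_pos_of_pos (by linarith)
  have hq1 : (q:ℝ) + 1 ≠ 0 := by linarith
  have hΓ2 : Real.Gamma (q+1+1) = (q+1) * Real.Gamma (q+1) := Real.Gamma_add_one hq1
  -- derivative of V q at x
  have hVder : HasDerivAt (V q) (2 / Real.Gamma (q+1) * D) x := by
    refine HasDerivAt.congr_of_eventuallyEq (hD.const_mul (2 / Real.Gamma (q+1))) ?_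
    filter_upwards [Ioi_mem_nhds hx] with y hy
    exact V_eq_G hy
  rw [hVder.deriv]
  -- notation
  set A : ℝ := G q x with hA_def
  set B : ℝ := ∫ s in Ioi (0:ℝ), Real.exp (-s^2) * s ^ (2*q+3) / Real.sqrt (x^2+s^2) with hB_def
  set C : ℝ := ∫ s in Ioi (0:ℝ), Real.exp (-s^2) * s ^ (2*q+3) / Real.sqrt (x^2+s^2)^3
    with hC_def
  have hGB : G (q+1) x = B := by
    rw [hB_def, G, show (2*(q+1)+1:ℝ) = 2*q+3 by ring]
  -- x * D = C - A
  have hxD : x * D = C - A := by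
    have i3 : IntegrableOn (fun s => Real.exp (-s^2) * s ^ (2*q+3) / Real.sqrt (x^2+s^2)^3)
        (Ioi 0) := aux_int hx (by linarith : (-1:ℝ) < 2*q+3) 3
    have i1 : IntegrableOn (fun s => Real.exp (-s^2) * s ^ (2*q+1) / Real.sqrt (x^2+s^2))
        (Ioi 0) := by
      simpa [pow_one] using aux_int hx (by linarith : (-1:ℝ) < 2*q+1) 1
    rw [hD_def, ← integral_const_mul, hC_def, hA_def, G, ← integral_sub i3 i1]
    refine setIntegral_congr_fun measurableSet_Ioi (fun s hs => ?_)
    simp only [mem_Ioi] at hs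
    have hsq : Real.sqrt (x^2+s^2) ^ 2 = x^2 + s^2 := Real.sq_sqrt (by positivity)
    have hsqpos : (0:ℝ) < Real.sqrt (x^2+s^2) := Real.sqrt_pos.2 (by positivity)
    have h4 : (s:ℝ) ^ (2*q+3) = s ^ (2*q+1) * s^2 := by
      rw [show (2*q+3:ℝ) = (2*q+1)+2 by ring, Real.rpow_add hs, Real.rpow_two]
    rw [h4]
    field_simp
    linear_combination hsq
  -- IBP
  have hC : C = (2*q+2) * A - 2 * B := ibp hq hx
  -- final algebra
  rw [V_eq_G hx, V_eq_G hx, hGB, show x * (2 / Real.Gamma (q+1) * D)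
      = 2 / Real.Gamma (q+1) * (x * D) by ring, hxD, hC, hΓ2]
  field_simp
  ring
end

section
/- For every q > -1 and every x > 0, one has (2q+1)·V_q(x) < 2(q+1)·V_{q+1}(x). -/
open Real MeasureTheory Set

namespace StmtAux

open Filter

lemma sq_sub_pos {x t : ℝ} (hx : 0 < x) (ht : x < t) : 0 < t ^ 2 - x ^ 2 := by nlinarith

lemma contOn_aux {x : ℝ} (p : ℝ) (hx : 0 < x) :
    ContinuousOn (fun t : ℝ => Real.exp (-t ^ 2) * (t ^ 2 - x ^ 2) ^ p) (Set.Ioi x) := by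
  apply ContinuousOn.mul
  · exact (Real.continuous_exp.comp (continuous_pow 2).neg).continuousOn
  · exact ((continuous_pow 2).continuousOn.sub continuousOn_const).rpow_const
      (fun t ht => Or.inl (ne_of_gt (sq_sub_pos hx ht)))

lemma aux_integrable {x p : ℝ} (hx : 0 < x) (hp : -1 < p) :
    IntegrableOn (fun t : ℝ => Real.exp (-t ^ 2) * (t ^ 2 - x ^ 2) ^ p) (Set.Ioi x) := by
  set f : ℝ → ℝ := fun t => Real.exp (-t ^ 2) * (t ^ 2 - x ^ 2) ^ p with hf
  have hnn : ∀ t ∈ Set.Ioi x, 0 ≤ f t := fun t ht =>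
    mul_nonneg (Real.exp_pos _).le (Real.rpow_nonneg (sq_sub_pos hx ht).le _)
  rw [← Set.Ioc_union_Ioi_eq_Ioi (by linarith : x ≤ x + 1), integrableOn_union]
  constructor
  · -- near x : dominate by C * (t-x)^p
    set C : ℝ := max ((2 * x) ^ p) ((2 * x + 1) ^ p) with hC
    have hdom : Integrable (fun t : ℝ => C * (t - x) ^ p)
        ((volume : Measure ℝ).restrict (Set.Ioc x (x + 1))) := by
      apply Integrable.const_mul
      have h1 : IntervalIntegrable (fun s : ℝ => s ^ p) volume 0 1 :=
        intervalIntegral.intervalIntegrable_rpow' hp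
      have h2 := h1.comp_sub_right x
      rw [zero_add] at h2
      rw [show x + 1 = 1 + x by ring]
      exact (intervalIntegrable_iff_integrableOn_Ioc_of_le (by linarith)).mp h2
    apply Integrable.mono' hdom
    · exact ((contOn_aux p hx).mono Set.Ioc_subset_Ioi_self).aestronglyMeasurable measurableSet_Ioc
    · filter_upwards [ae_restrict_mem measurableSet_Ioc] with t ht
      obtain ⟨ht1, ht2⟩ := ht
      have h0 : 0 < t - x := by linarith
      have hsplit : (t ^ 2 - x ^ 2) ^ p = (t - x) ^ p * (t + x) ^ p := by
        rw [← Real.mul_rpow (le_of_lt h0) (by linarith)]; ring_nf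
      rw [Real.norm_eq_abs, abs_of_nonneg (hnn t ht1)]
      have hexp : Real.exp (-t ^ 2) ≤ 1 := by
        rw [Real.exp_le_one_iff]; nlinarith
      have htx : (t + x) ^ p ≤ C := by
        rcases le_or_gt 0 p with hp0 | hp0
        · exact le_trans (Real.rpow_le_rpow (by linarith) (by linarith) hp0) (le_max_right _ _)
        · exact le_trans (Real.rpow_le_rpow_of_nonpos (by linarith) (by linarith) (le_of_lt hp0))
            (le_max_left _ _)
      calc f t ≤ 1 * ((t - x) ^ p * (t + x) ^ p) := by
            rw [hf]; simp only [hsplit]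
            exact mul_le_mul_of_nonneg_right hexp
              (mul_nonneg (Real.rpow_nonneg h0.le _) (Real.rpow_nonneg (by linarith) _))
        _ ≤ C * (t - x) ^ p := by
            rw [one_mul, mul_comm ((t - x) ^ p)]
            exact mul_le_mul_of_nonneg_right htx (Real.rpow_nonneg h0.le _)
  · -- far away : dominate by t^s e^{-t²} + c e^{-t²}
    set s : ℝ := max (2 * p) 0 with hs
    set c : ℝ := (2 * x + 1) ^ p with hc
    have hdom : Integrable (fun t : ℝ => t ^ s * Real.exp (-t ^ 2) + c * Real.exp (-t ^ 2))
        ((volume : Measure ℝ).restrict (Set.Ioi (x + 1))) := by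
      apply Integrable.add
      · have := integrableOn_rpow_mul_exp_neg_mul_sq one_pos
          (s := s) (lt_of_lt_of_le neg_one_lt_zero (le_max_right _ _))
        simp only [neg_mul, one_mul] at this
        exact this.mono_set (Set.Ioi_subset_Ioi (by linarith))
      · exact ((integrable_exp_neg_mul_sq one_pos).restrict.const_mul c).congr
          (by filter_upwards with t; simp)
    apply Integrable.mono' hdom
    · exact ((contOn_aux p hx).mono (Set.Ioi_subset_Ioi (by linarith))).aestronglyMeasurable
        measurableSet_Ioi
    · filter_upwards [ae_restrict_mem measurableSet_Ioi] with t ht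
      rw [Set.mem_Ioi] at ht
      have htx : x < t := by linarith
      rw [Real.norm_eq_abs, abs_of_nonneg (hnn t htx)]
      have hkey : (t ^ 2 - x ^ 2) ^ p ≤ t ^ s + c := by
        rcases le_or_gt 0 p with hp0 | hp0
        · have h1 : (t ^ 2 - x ^ 2) ^ p ≤ (t ^ 2) ^ p :=
            Real.rpow_le_rpow (le_of_lt (sq_sub_pos hx htx)) (by nlinarith) hp0
          have h2 : (t ^ 2 : ℝ) ^ p = t ^ (2 * p) := by
            rw [← Real.rpow_natCast t 2, ← Real.rpow_mul (by linarith)]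
            norm_num
          have h3 : t ^ (2 * p) ≤ t ^ s :=
            Real.rpow_le_rpow_of_exponent_le (by linarith) (le_max_left _ _)
          have h4 : (0:ℝ) ≤ c := by rw [hc]; positivity
          calc (t ^ 2 - x ^ 2) ^ p ≤ t ^ s := by rw [← h2] at h3; linarith
            _ ≤ t ^ s + c := by linarith
        · have h1 : (t ^ 2 - x ^ 2) ^ p ≤ c := by
            rw [hc]
            exact Real.rpow_le_rpow_of_nonpos (by linarith) (by nlinarith) (le_of_lt hp0)
          have h2 : (0:ℝ) ≤ t ^ s := Real.rpow_nonneg (by linarith) s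
          linarith
      have hepos : (0:ℝ) < Real.exp (-t ^ 2) := Real.exp_pos _
      calc f t = (t ^ 2 - x ^ 2) ^ p * Real.exp (-t ^ 2) := by rw [hf]; ring
        _ ≤ (t ^ s + c) * Real.exp (-t ^ 2) := mul_le_mul_of_nonneg_right hkey (le_of_lt hepos)
        _ = t ^ s * Real.exp (-t ^ 2) + c * Real.exp (-t ^ 2) := by ring

lemma deriv_aux {q x : ℝ} (hx : 0 < x) {t : ℝ} (ht : x < t) :
    HasDerivAt (fun t : ℝ => Real.exp (-t ^ 2) * (t ^ 2 - x ^ 2) ^ (q + 1) * t⁻¹)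
      (2 * (q + 1) * (Real.exp (-t ^ 2) * (t ^ 2 - x ^ 2) ^ q)
        - 2 * (Real.exp (-t ^ 2) * (t ^ 2 - x ^ 2) ^ (q + 1))
        - Real.exp (-t ^ 2) * (t ^ 2 - x ^ 2) ^ (q + 1) * (t ^ 2)⁻¹) t := by
  have ht0 : (0:ℝ) < t := lt_trans hx ht
  have hbase : (0:ℝ) < t ^ 2 - x ^ 2 := sq_sub_pos hx ht
  have hA : HasDerivAt (fun t : ℝ => Real.exp (-t ^ 2)) (Real.exp (-t ^ 2) * (-(2 * t))) t := by
    have := ((hasDerivAt_pow 2 t).neg).exp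
    simpa using this
  have hB : HasDerivAt (fun t : ℝ => (t ^ 2 - x ^ 2) ^ (q + 1))
      ((2 * t) * (q + 1) * (t ^ 2 - x ^ 2) ^ q) t := by
    have h1 := ((hasDerivAt_pow 2 t).sub_const (x ^ 2)).rpow_const
      (p := q + 1) (Or.inl (ne_of_gt hbase))
    simpa using h1
  have hC : HasDerivAt (fun t : ℝ => t⁻¹) (-(t ^ 2)⁻¹) t := hasDerivAt_inv (ne_of_gt ht0)
  have hF := (hA.mul hB).mul hC
  refine hF.congr_deriv ?_
  simp only [Pi.mul_apply]
  have hsplit : (t ^ 2 - x ^ 2) ^ (q + 1) = (t ^ 2 - x ^ 2) ^ q * (t ^ 2 - x ^ 2) :=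
    Real.rpow_add_one (ne_of_gt hbase) q
  rw [hsplit]
  field_simp
  ring

lemma tendsto_F {q x : ℝ} (hq : -1 < q) (hx : 0 < x) :
    Tendsto (fun t : ℝ => Real.exp (-t ^ 2) * (t ^ 2 - x ^ 2) ^ (q + 1) * t⁻¹)
      atTop (nhds 0) := by
  set s : ℝ := 2 * (q + 1) with hs
  have hup : Tendsto (fun t : ℝ => t ^ s * Real.exp (-t ^ 2)) atTop (nhds 0) := by
    have h1 := rpow_mul_exp_neg_mul_sq_isLittleO_exp_neg one_pos s
    simp only [neg_mul, one_mul] at h1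
    apply h1.tendsto_zero_of_tendsto
    have h2 : Tendsto (fun t : ℝ => -(1 / 2 * t)) atTop atBot := by
      apply Filter.tendsto_neg_atBot_iff.mpr
      exact (tendsto_id.const_mul_atTop (by norm_num : (0:ℝ) < 1/2))
    exact Real.tendsto_exp_atBot.comp h2
  apply tendsto_of_tendsto_of_tendsto_of_le_of_le' tendsto_const_nhds hup
  · filter_upwards [eventually_gt_atTop x] with t ht
    have h := sq_sub_pos hx ht
    have ht0 : (0:ℝ) < t := lt_trans hx ht
    positivity
  · filter_upwards [eventually_gt_atTop x, eventually_ge_atTop 1] with t ht ht1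
    have hbase := sq_sub_pos hx ht
    have ht0 : (0:ℝ) < t := lt_trans hx ht
    have h1 : (t ^ 2 - x ^ 2) ^ (q + 1) ≤ (t ^ 2) ^ (q + 1) :=
      Real.rpow_le_rpow hbase.le (by nlinarith) (by linarith)
    have h2 : (t ^ 2 : ℝ) ^ (q + 1) = t ^ s := by
      rw [← Real.rpow_natCast t 2, ← Real.rpow_mul ht0.le]
      norm_num [hs]
    have h3 : t⁻¹ ≤ 1 := by
      rw [inv_le_one_iff₀]; right; exact ht1
    calc Real.exp (-t ^ 2) * (t ^ 2 - x ^ 2) ^ (q + 1) * t⁻¹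
        ≤ Real.exp (-t ^ 2) * (t ^ 2) ^ (q + 1) * t⁻¹ := by
          apply mul_le_mul_of_nonneg_right _ (by positivity)
          exact mul_le_mul_of_nonneg_left h1 (Real.exp_pos _).le
      _ ≤ Real.exp (-t ^ 2) * (t ^ 2) ^ (q + 1) * 1 := by
          apply mul_le_mul_of_nonneg_left h3
          have : (0:ℝ) ≤ (t ^ 2 : ℝ) ^ (q + 1) := Real.rpow_nonneg (by positivity) _
          positivity
      _ = t ^ s * Real.exp (-t ^ 2) := by rw [h2]; ring

lemma contWithin_F {q x : ℝ} (hq : -1 < q) (hx : 0 < x) :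
    ContinuousWithinAt (fun t : ℝ => Real.exp (-t ^ 2) * (t ^ 2 - x ^ 2) ^ (q + 1) * t⁻¹)
      (Set.Ici x) x := by
  apply ContinuousWithinAt.mul
  · apply ContinuousWithinAt.mul
    · exact ((Real.continuous_exp.comp (continuous_pow 2).neg).continuousAt).continuousWithinAt
    · exact (((continuous_pow 2).continuousAt.sub continuousAt_const).continuousWithinAt).rpow_const
        (Or.inr (by linarith))
  · exact ((continuousAt_inv₀ (ne_of_gt hx)).continuousWithinAt)

end StmtAux

open StmtAux Filter

theorem stmt_13 (q : ℝ) (hq : -1 < q) (x : ℝ) (hx : 0 < x) :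
    (2 * q + 1) * V q x < 2 * (q + 1) * V (q + 1) x := by
  set f : ℝ → ℝ → ℝ := fun p t => Real.exp (-t ^ 2) * (t ^ 2 - x ^ 2) ^ p with hfdef
  set h : ℝ → ℝ := fun t => Real.exp (-t ^ 2) * (t ^ 2 - x ^ 2) ^ (q + 1) * (t ^ 2)⁻¹ with hhdef
  have hIq : IntegrableOn (f q) (Set.Ioi x) := aux_integrable hx hq
  have hIq1 : IntegrableOn (f (q + 1)) (Set.Ioi x) := aux_integrable hx (by linarith)
  -- integrability of h
  have hIh : IntegrableOn h (Set.Ioi x) := by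
    apply Integrable.mono' (hIq1.const_mul ((x ^ 2)⁻¹))
    · apply ContinuousOn.aestronglyMeasurable _ measurableSet_Ioi
      exact (contOn_aux (q + 1) hx).mul
        (((continuous_pow 2).continuousOn).inv₀
          (fun t ht => by have := lt_trans hx (Set.mem_Ioi.mp ht); positivity))
    · filter_upwards [ae_restrict_mem measurableSet_Ioi] with t ht
      rw [Set.mem_Ioi] at ht
      have ht0 : (0:ℝ) < t := lt_trans hx ht
      have hbase := sq_sub_pos hx ht
      have hnn : 0 ≤ h t := by
        rw [hhdef]
        have : (0:ℝ) ≤ (t ^ 2 - x ^ 2) ^ (q + 1) := Real.rpow_nonneg hbase.le _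
        positivity
      rw [Real.norm_eq_abs, abs_of_nonneg hnn, hhdef, hfdef]
      simp only
      rw [mul_comm ((x ^ 2)⁻¹)]
      apply mul_le_mul_of_nonneg_left _ (mul_nonneg (Real.exp_pos _).le (Real.rpow_nonneg hbase.le _))
      exact inv_anti₀ (by positivity) (by nlinarith)
  -- the integration-by-parts identity
  have hFTC : ∫ t in Set.Ioi x, (2 * (q + 1) * f q t - 2 * f (q + 1) t - h t) = 0 := by
    have := integral_Ioi_of_hasDerivAt_of_tendsto (contWithin_F hq hx)
      (fun t ht => deriv_aux hx (Set.mem_Ioi.mp ht))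
      (((hIq.const_mul (2 * (q + 1))).sub (hIq1.const_mul 2)).sub hIh)
      (tendsto_F hq hx)
    rw [this]
    simp [Real.zero_rpow (by linarith : q + 1 ≠ 0)]
  have hsplit : ∫ t in Set.Ioi x, (2 * (q + 1) * f q t - 2 * f (q + 1) t - h t) =
      2 * (q + 1) * (∫ t in Set.Ioi x, f q t) - 2 * (∫ t in Set.Ioi x, f (q + 1) t)
        - ∫ t in Set.Ioi x, h t := by
    have e1 : IntegrableOn (fun t => 2 * (q + 1) * f q t) (Set.Ioi x) := hIq.const_mul _
    have e2 : IntegrableOn (fun t => 2 * f (q + 1) t) (Set.Ioi x) := hIq1.const_mul _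
    rw [integral_sub (f := fun t => 2 * (q + 1) * f q t - 2 * f (q + 1) t) (g := h)
        (e1.sub e2) hIh,
      integral_sub (f := fun t => 2 * (q + 1) * f q t) (g := fun t => 2 * f (q + 1) t) e1 e2,
      integral_const_mul, integral_const_mul]
  -- strict positivity of ∫ (f q - h)
  have hpos : 0 < ∫ t in Set.Ioi x, (f q t - h t) := by
    have hlt : ∀ t ∈ Set.Ioi x, 0 < f q t - h t := by
      intro t ht
      rw [Set.mem_Ioi] at ht
      have ht0 : (0:ℝ) < t := lt_trans hx ht
      have hbase := sq_sub_pos hx ht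
      have hq1 : (t ^ 2 - x ^ 2) ^ (q + 1) = (t ^ 2 - x ^ 2) ^ q * (t ^ 2 - x ^ 2) :=
        Real.rpow_add_one (ne_of_gt hbase) q
      have hfq : 0 < f q t := by
        rw [hfdef]; simp only
        have : (0:ℝ) < (t ^ 2 - x ^ 2) ^ q := Real.rpow_pos_of_pos hbase q
        positivity
      have hratio : (t ^ 2 - x ^ 2) * (t ^ 2)⁻¹ < 1 := by
        rw [← div_eq_mul_inv, div_lt_one (by positivity)]
        nlinarith
      have : h t = f q t * ((t ^ 2 - x ^ 2) * (t ^ 2)⁻¹) := by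
        rw [hhdef, hfdef]; simp only [hq1]; ring
      rw [this]
      nlinarith
    rw [← sub_zero (∫ t in Set.Ioi x, (f q t - h t))]
    have hintsub : IntegrableOn (fun t => f q t - h t) (Set.Ioi x) := hIq.sub hIh
    rw [sub_zero]
    rw [setIntegral_pos_iff_support_of_nonneg_ae _ hintsub]
    · have hsub : Set.Ioi x ⊆ Function.support (fun t => f q t - h t) :=
        fun t ht => ne_of_gt (hlt t ht)
      rw [Set.inter_eq_right.mpr hsub]
      simp [Real.volume_Ioi]
    · filter_upwards [ae_restrict_mem measurableSet_Ioi] with t ht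
      exact (hlt t ht).le
  have hkey : (2 * q + 1) * (∫ t in Set.Ioi x, f q t) < 2 * ∫ t in Set.Ioi x, f (q + 1) t := by
    rw [hsplit] at hFTC
    rw [integral_sub hIq hIh] at hpos
    linarith
  -- final algebra with the Gamma function
  have hG : 0 < Real.Gamma (q + 1) := Real.Gamma_pos_of_pos (by linarith)
  have hGadd : Real.Gamma (q + 1 + 1) = (q + 1) * Real.Gamma (q + 1) :=
    Real.Gamma_add_one (by linarith : q + 1 ≠ 0)
  have hq1 : (0:ℝ) < q + 1 := by linarith
  have hcG : 0 < 2 * Real.exp (x ^ 2) / Real.Gamma (q + 1) := by positivity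
  have h1 : (2 * q + 1) * (∫ t in Set.Ioi x, f q t) * (2 * Real.exp (x ^ 2) / Real.Gamma (q + 1))
      < 2 * (∫ t in Set.Ioi x, f (q + 1) t) * (2 * Real.exp (x ^ 2) / Real.Gamma (q + 1)) :=
    mul_lt_mul_of_pos_right hkey hcG
  calc (2 * q + 1) * V q x
      = (2 * q + 1) * (∫ t in Set.Ioi x, f q t) * (2 * Real.exp (x ^ 2) / Real.Gamma (q + 1)) := by
        rw [V]; ring
    _ < 2 * (∫ t in Set.Ioi x, f (q + 1) t) * (2 * Real.exp (x ^ 2) / Real.Gamma (q + 1)) := h1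
    _ = 2 * (q + 1) * V (q + 1) x := by
        rw [V, hGadd]
        field_simp
        ring
end

section
/- For every q > -1 and every x > 0, the Turán type inequality (q+1)·V_{q+1}(x)² - (q+2)·V_q(x)·V_{q+2}(x) > -V_q(x)·V_{q+1}(x) holds. -/
open Real MeasureTheory Set

noncomputable def Ig (c p α : ℝ) : ℝ :=
  ∫ s in Set.Ioi (0:ℝ), Real.exp (-s) * s ^ p * (c + s) ^ α

lemma Ig_integrable {c p α : ℝ} (hc : 0 < c) (hp : -1 < p) (hα : α ≤ 0) :
    IntegrableOn (fun s => Real.exp (-s) * s ^ p * (c + s) ^ α) (Ioi 0) := by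
  have hmeas : AEStronglyMeasurable (fun s => Real.exp (-s) * s ^ p * (c + s) ^ α)
      (volume.restrict (Ioi (0:ℝ))) := by
    apply ContinuousOn.aestronglyMeasurable _ measurableSet_Ioi
    apply ContinuousOn.mul
    · apply ContinuousOn.mul
      · exact (Real.continuous_exp.comp continuous_neg).continuousOn
      · exact fun s hs => (Real.continuousAt_rpow_const s p (Or.inl (ne_of_gt hs))).continuousWithinAt
    · intro s hs
      have : c + s ≠ 0 := by have : (0:ℝ) < s := hs; positivity
      exact (Real.continuousAt_rpow_const (c+s) α (Or.inl this)).comp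
        (by fun_prop) |>.continuousWithinAt
  have hbase : IntegrableOn (fun s => Real.exp (-s) * s ^ p) (Ioi (0:ℝ)) := by
    have := Real.GammaIntegral_convergent (show 0 < p + 1 by linarith)
    simpa using this
  apply Integrable.mono' (hbase.const_mul (c ^ α)) hmeas
  filter_upwards [ae_restrict_mem measurableSet_Ioi] with s hs
  have hs0 : (0:ℝ) < s := hs
  have h2 : (c+s) ^ α ≤ c ^ α := Real.rpow_le_rpow_of_nonpos hc (by linarith) hα
  have h3 : (0:ℝ) ≤ Real.exp (-s) * s ^ p := by positivity
  rw [Real.norm_eq_abs, abs_of_nonneg (by positivity)]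
  calc Real.exp (-s) * s ^ p * (c+s) ^ α ≤ Real.exp (-s) * s ^ p * c ^ α :=
        mul_le_mul_of_nonneg_left h2 h3
    _ = c ^ α * (Real.exp (-s) * s ^ p) := by ring

lemma Ig_pos {c p α : ℝ} (hc : 0 < c) (hp : -1 < p) (hα : α ≤ 0) : 0 < Ig c p α := by
  rw [Ig, setIntegral_pos_iff_support_of_nonneg_ae]
  · apply lt_of_lt_of_le _ (measure_mono (show Ioi (0:ℝ) ⊆ _ from ?_))
    · rw [Real.volume_Ioi]; exact ENNReal.zero_lt_top
    · intro s hs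
      have hs0 : (0:ℝ) < s := hs
      refine ⟨?_, hs⟩
      have : 0 < Real.exp (-s) * s ^ p * (c + s) ^ α := by
        have h1 : (0:ℝ) < s ^ p := Real.rpow_pos_of_pos hs0 p
        have h2 : (0:ℝ) < (c+s) ^ α := Real.rpow_pos_of_pos (by linarith) α
        positivity
      exact Function.mem_support.mpr (ne_of_gt this)
  · filter_upwards [ae_restrict_mem measurableSet_Ioi] with s hs
    have hs0 : (0:ℝ) < s := hs
    have h1 : (0:ℝ) ≤ s ^ p := (Real.rpow_pos_of_pos hs0 p).le
    have h2 : (0:ℝ) ≤ (c+s) ^ α := (Real.rpow_pos_of_pos (by linarith) α).le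
    positivity
  · exact Ig_integrable hc hp hα

lemma Ig_split {c p : ℝ} (hc : 0 < c) (hp : -1 < p) :
    Ig c p (-1/2) = Ig c (p+1) (-3/2) + c * Ig c p (-3/2) := by
  have h1 := Ig_integrable hc (show -1 < p + 1 by linarith) (show (-3/2:ℝ) ≤ 0 by norm_num)
  have h2 := Ig_integrable hc hp (show (-3/2:ℝ) ≤ 0 by norm_num)
  have e0 : (∫ s in Ioi (0:ℝ), (Real.exp (-s) * s ^ (p+1) * (c + s) ^ (-3/2:ℝ)
        + c * (Real.exp (-s) * s ^ p * (c + s) ^ (-3/2:ℝ))))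
      = (∫ s in Ioi (0:ℝ), Real.exp (-s) * s ^ (p+1) * (c + s) ^ (-3/2:ℝ))
        + ∫ s in Ioi (0:ℝ), c * (Real.exp (-s) * s ^ p * (c + s) ^ (-3/2:ℝ)) :=
    integral_add h1 (h2.const_mul c)
  rw [Ig, Ig, Ig, ← integral_const_mul, ← e0]
  apply setIntegral_congr_fun measurableSet_Ioi
  intro s hs
  have hs0 : (0:ℝ) < s := hs
  have hcs : (0:ℝ) < c + s := by linarith
  have e1 : (c+s) ^ (-1/2:ℝ) = (c+s) * (c+s) ^ (-3/2:ℝ) := by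
    rw [show (-1/2:ℝ) = 1 + (-3/2) by norm_num, Real.rpow_add hcs, Real.rpow_one]
  have e2 : s ^ (p+1) = s ^ p * s := Real.rpow_add_one (ne_of_gt hs0) p
  simp only [e1, e2]
  ring

lemma Ig_ibp {c p : ℝ} (hc : 0 < c) (hp : 0 < p) :
    Ig c p (-1/2) = p * Ig c (p-1) (-1/2) - (1/2) * Ig c p (-3/2) := by
  set g : ℝ → ℝ := fun s => Real.exp (-s) * s ^ p * (c + s) ^ (-1/2 : ℝ) with hg
  set g' : ℝ → ℝ := fun s =>
    p * (Real.exp (-s) * s ^ (p-1) * (c+s) ^ (-1/2:ℝ))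
    + (-1/2) * (Real.exp (-s) * s ^ p * (c+s) ^ (-3/2:ℝ))
    - Real.exp (-s) * s ^ p * (c+s) ^ (-1/2:ℝ) with hg'
  have hi1 : IntegrableOn (fun s => Real.exp (-s) * s ^ (p-1) * (c+s) ^ (-1/2:ℝ)) (Ioi 0) :=
    Ig_integrable hc (by linarith) (by norm_num)
  have hi2 : IntegrableOn (fun s => Real.exp (-s) * s ^ p * (c+s) ^ (-3/2:ℝ)) (Ioi 0) :=
    Ig_integrable hc (by linarith) (by norm_num)
  have hi3 : IntegrableOn (fun s => Real.exp (-s) * s ^ p * (c+s) ^ (-1/2:ℝ)) (Ioi 0) :=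
    Ig_integrable hc (by linarith) (by norm_num)
  have hig' : IntegrableOn g' (Ioi 0) := ((hi1.const_mul p).add (hi2.const_mul (-1/2))).sub hi3
  have key : ∫ s in Ioi (0:ℝ), g' s = 0 - g 0 := by
    apply integral_Ioi_of_hasDerivAt_of_tendsto
    · -- continuity at 0 within Ici 0
      apply ContinuousAt.continuousWithinAt
      apply ContinuousAt.mul
      · apply ContinuousAt.mul
        · exact (Real.continuous_exp.comp continuous_neg).continuousAt
        · exact Real.continuousAt_rpow_const 0 p (Or.inr hp.le)
      · apply ContinuousAt.rpow_const
        · exact (continuous_const.add continuous_id).continuousAt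
        · left; simpa using ne_of_gt hc
    · intro s hs
      have hs0 : (0:ℝ) < s := hs
      have hcs : (0:ℝ) < c + s := by linarith
      have d1 : HasDerivAt (fun s : ℝ => Real.exp (-s)) (-Real.exp (-s)) s := by
        simpa [Function.comp_def] using (Real.hasDerivAt_exp (-s)).comp s ((hasDerivAt_id s).neg)
      have d2 : HasDerivAt (fun s : ℝ => s ^ p) (p * s ^ (p-1)) s :=
        Real.hasDerivAt_rpow_const (Or.inl (ne_of_gt hs0))
      have d3 : HasDerivAt (fun s : ℝ => (c + s) ^ (-1/2:ℝ))
          (1 * (-1/2) * (c+s) ^ (-1/2-1:ℝ)) s :=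
        ((hasDerivAt_id s).const_add c).rpow_const (Or.inl (ne_of_gt hcs))
      have := (d1.mul d2).mul d3
      convert this using 1
      · rfl
      · rfl
      rw [show (-1/2-1:ℝ) = -3/2 by norm_num] at *
      simp only [hg', Pi.mul_apply]
      ring
    · exact hig'
    · -- tendsto 0 at top
      have hb : Filter.Tendsto (fun s : ℝ => c ^ (-1/2:ℝ) * (s ^ p * Real.exp (-(1:ℝ) * s)))
          Filter.atTop (nhds 0) := by
        simpa using (tendsto_rpow_mul_exp_neg_mul_atTop_nhds_zero p 1 one_pos).const_mul
          (c ^ (-1/2:ℝ))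
      apply squeeze_zero' ?_ ?_ hb
      · filter_upwards [Filter.eventually_gt_atTop (0:ℝ)] with s hs
        have h1 : (0:ℝ) ≤ s ^ p := (Real.rpow_pos_of_pos hs p).le
        have h2 : (0:ℝ) ≤ (c+s) ^ (-1/2:ℝ) := (Real.rpow_pos_of_pos (by linarith) _).le
        simp only [hg]
        positivity
      · filter_upwards [Filter.eventually_gt_atTop (0:ℝ)] with s hs
        have h2 : (c+s) ^ (-1/2:ℝ) ≤ c ^ (-1/2:ℝ) :=
          Real.rpow_le_rpow_of_nonpos hc (by linarith) (by norm_num)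
        have h3 : (0:ℝ) ≤ Real.exp (-s) * s ^ p := by positivity
        simp only [hg, neg_one_mul]
        calc Real.exp (-s) * s ^ p * (c+s) ^ (-1/2:ℝ)
            ≤ Real.exp (-s) * s ^ p * c ^ (-1/2:ℝ) := mul_le_mul_of_nonneg_left h2 h3
          _ = c ^ (-1/2:ℝ) * (s ^ p * Real.exp (-s)) := by ring
  have hg0 : g 0 = 0 := by
    simp [hg, Real.zero_rpow (ne_of_gt hp)]
  have hsplit : ∫ s in Ioi (0:ℝ), g' s
      = p * Ig c (p-1) (-1/2) + (-1/2) * Ig c p (-3/2) - Ig c p (-1/2) := by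
    have e1 : (∫ s in Ioi (0:ℝ), (p * (Real.exp (-s) * s ^ (p-1) * (c+s) ^ (-1/2:ℝ))
          + (-1/2) * (Real.exp (-s) * s ^ p * (c+s) ^ (-3/2:ℝ))
          - Real.exp (-s) * s ^ p * (c+s) ^ (-1/2:ℝ)))
        = (∫ s in Ioi (0:ℝ), (p * (Real.exp (-s) * s ^ (p-1) * (c+s) ^ (-1/2:ℝ))
          + (-1/2) * (Real.exp (-s) * s ^ p * (c+s) ^ (-3/2:ℝ))))
          - ∫ s in Ioi (0:ℝ), Real.exp (-s) * s ^ p * (c+s) ^ (-1/2:ℝ) :=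
      integral_sub ((hi1.const_mul p).add (hi2.const_mul (-1/2))) hi3
    have e2 : (∫ s in Ioi (0:ℝ), (p * (Real.exp (-s) * s ^ (p-1) * (c+s) ^ (-1/2:ℝ))
          + (-1/2) * (Real.exp (-s) * s ^ p * (c+s) ^ (-3/2:ℝ))))
        = (∫ s in Ioi (0:ℝ), p * (Real.exp (-s) * s ^ (p-1) * (c+s) ^ (-1/2:ℝ)))
          + ∫ s in Ioi (0:ℝ), (-1/2) * (Real.exp (-s) * s ^ p * (c+s) ^ (-3/2:ℝ)) :=
      integral_add (hi1.const_mul p) (hi2.const_mul (-1/2))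
    calc ∫ s in Ioi (0:ℝ), g' s
        = (∫ s in Ioi (0:ℝ), p * (Real.exp (-s) * s ^ (p-1) * (c+s) ^ (-1/2:ℝ)))
          + (∫ s in Ioi (0:ℝ), (-1/2) * (Real.exp (-s) * s ^ p * (c+s) ^ (-3/2:ℝ)))
          - ∫ s in Ioi (0:ℝ), Real.exp (-s) * s ^ p * (c+s) ^ (-1/2:ℝ) := by
            rw [← e2, ← e1]
      _ = p * Ig c (p-1) (-1/2) + (-1/2) * Ig c p (-3/2) - Ig c p (-1/2) := by
            rw [integral_const_mul, integral_const_mul]; rfl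
  rw [hsplit, hg0] at key
  linarith

lemma Ig_cs {c p : ℝ} (hc : 0 < c) (hp : -1 < p) :
    Ig c (p+1) (-3/2) ^ 2 < Ig c p (-3/2) * Ig c (p+2) (-3/2) := by
  set a : ℝ → ℝ := fun s => Real.exp (-s) * s ^ p * (c+s) ^ (-3/2:ℝ) with ha_def
  have ha : IntegrableOn a (Ioi 0) := Ig_integrable hc hp (by norm_num)
  have hae1 : ∀ s ∈ Ioi (0:ℝ),
      Real.exp (-s) * s ^ (p+1) * (c+s) ^ (-3/2:ℝ) = s * a s := by
    intro s hs
    have hs0 : (0:ℝ) < s := hs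
    rw [ha_def]
    simp only
    rw [Real.rpow_add_one (ne_of_gt hs0) p]
    ring
  have hae2 : ∀ s ∈ Ioi (0:ℝ),
      Real.exp (-s) * s ^ (p+2) * (c+s) ^ (-3/2:ℝ) = s * (s * a s) := by
    intro s hs
    have hs0 : (0:ℝ) < s := hs
    rw [ha_def]
    simp only
    rw [show p + 2 = (p+1)+1 by ring, Real.rpow_add_one (ne_of_gt hs0) (p+1),
      Real.rpow_add_one (ne_of_gt hs0) p]
    ring
  have ha1 : IntegrableOn (fun s => s * a s) (Ioi 0) := by
    apply (Ig_integrable hc (show -1 < p+1 by linarith)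
      (show (-3/2:ℝ) ≤ 0 by norm_num)).congr
    filter_upwards [ae_restrict_mem measurableSet_Ioi] with s hs
    exact hae1 s hs
  have ha2 : IntegrableOn (fun s => s * (s * a s)) (Ioi 0) := by
    apply (Ig_integrable hc (show -1 < p+2 by linarith)
      (show (-3/2:ℝ) ≤ 0 by norm_num)).congr
    filter_upwards [ae_restrict_mem measurableSet_Ioi] with s hs
    exact hae2 s hs
  have hI1 : Ig c (p+1) (-3/2) = ∫ s in Ioi (0:ℝ), s * a s :=
    setIntegral_congr_fun measurableSet_Ioi hae1
  have hI2 : Ig c (p+2) (-3/2) = ∫ s in Ioi (0:ℝ), s * (s * a s) :=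
    setIntegral_congr_fun measurableSet_Ioi hae2
  set Φ : ℝ × ℝ → ℝ := fun z => (z.1 - z.2)^2 * (a z.1 * a z.2) with hΦ
  have hΦeq : Φ = fun z : ℝ × ℝ => z.1 * (z.1 * a z.1) * a z.2
      + a z.1 * (z.2 * (z.2 * a z.2))
      - 2 * (z.1 * a z.1 * (z.2 * a z.2)) := by
    funext z; simp only [hΦ]; ring
  have hΦi : Integrable Φ
      ((volume.restrict (Ioi (0:ℝ))).prod (volume.restrict (Ioi (0:ℝ)))) := by
    rw [hΦeq]
    exact ((ha2.mul_prod ha).add (ha.mul_prod ha2)).sub ((ha1.mul_prod ha1).const_mul 2)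
  have hval : ∫ z : ℝ × ℝ, Φ z ∂((volume.restrict (Ioi (0:ℝ))).prod (volume.restrict (Ioi (0:ℝ))))
      = (∫ s in Ioi (0:ℝ), s * (s * a s)) * (∫ s in Ioi (0:ℝ), a s)
        + (∫ s in Ioi (0:ℝ), a s) * (∫ s in Ioi (0:ℝ), s * (s * a s))
        - 2 * ((∫ s in Ioi (0:ℝ), s * a s) * (∫ s in Ioi (0:ℝ), s * a s)) := by
    have e1 : ∫ z : ℝ × ℝ, (z.1 * (z.1 * a z.1) * a z.2 + a z.1 * (z.2 * (z.2 * a z.2))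
          - 2 * (z.1 * a z.1 * (z.2 * a z.2)))
          ∂((volume.restrict (Ioi (0:ℝ))).prod (volume.restrict (Ioi (0:ℝ))))
        = (∫ z : ℝ × ℝ, (z.1 * (z.1 * a z.1) * a z.2 + a z.1 * (z.2 * (z.2 * a z.2)))
          ∂((volume.restrict (Ioi (0:ℝ))).prod (volume.restrict (Ioi (0:ℝ)))))
          - ∫ z : ℝ × ℝ, 2 * (z.1 * a z.1 * (z.2 * a z.2))
          ∂((volume.restrict (Ioi (0:ℝ))).prod (volume.restrict (Ioi (0:ℝ)))) :=
      integral_sub ((ha2.mul_prod ha).add (ha.mul_prod ha2)) ((ha1.mul_prod ha1).const_mul 2)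
    have e2 : ∫ z : ℝ × ℝ, (z.1 * (z.1 * a z.1) * a z.2 + a z.1 * (z.2 * (z.2 * a z.2)))
          ∂((volume.restrict (Ioi (0:ℝ))).prod (volume.restrict (Ioi (0:ℝ))))
        = (∫ z : ℝ × ℝ, z.1 * (z.1 * a z.1) * a z.2
          ∂((volume.restrict (Ioi (0:ℝ))).prod (volume.restrict (Ioi (0:ℝ)))))
          + ∫ z : ℝ × ℝ, a z.1 * (z.2 * (z.2 * a z.2))
          ∂((volume.restrict (Ioi (0:ℝ))).prod (volume.restrict (Ioi (0:ℝ)))) :=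
      integral_add (ha2.mul_prod ha) (ha.mul_prod ha2)
    have e3 : ∫ z : ℝ × ℝ, z.1 * (z.1 * a z.1) * a z.2
          ∂((volume.restrict (Ioi (0:ℝ))).prod (volume.restrict (Ioi (0:ℝ))))
        = (∫ s in Ioi (0:ℝ), s * (s * a s)) * (∫ s in Ioi (0:ℝ), a s) :=
      integral_prod_mul (fun s => s * (s * a s)) a
    have e4 : ∫ z : ℝ × ℝ, a z.1 * (z.2 * (z.2 * a z.2))
          ∂((volume.restrict (Ioi (0:ℝ))).prod (volume.restrict (Ioi (0:ℝ))))
        = (∫ s in Ioi (0:ℝ), a s) * (∫ s in Ioi (0:ℝ), s * (s * a s)) :=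
      integral_prod_mul a (fun s => s * (s * a s))
    have e5 : ∫ z : ℝ × ℝ, (fun s => s * a s) z.1 * ((fun s => s * a s) z.2)
          ∂((volume.restrict (Ioi (0:ℝ))).prod (volume.restrict (Ioi (0:ℝ))))
        = (∫ s in Ioi (0:ℝ), s * a s) * (∫ s in Ioi (0:ℝ), s * a s) :=
      integral_prod_mul (fun s => s * a s) (fun s => s * a s)
    rw [hΦeq, e1, e2, e3, e4, integral_const_mul]
    rw [show (∫ z : ℝ × ℝ, z.1 * a z.1 * (z.2 * a z.2)
          ∂((volume.restrict (Ioi (0:ℝ))).prod (volume.restrict (Ioi (0:ℝ)))))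
        = (∫ s in Ioi (0:ℝ), s * a s) * (∫ s in Ioi (0:ℝ), s * a s) from e5]
  have hposΦ : 0 < ∫ z : ℝ × ℝ, Φ z
      ∂((volume.restrict (Ioi (0:ℝ))).prod (volume.restrict (Ioi (0:ℝ)))) := by
    have hre : (volume.restrict (Ioi (0:ℝ))).prod (volume.restrict (Ioi (0:ℝ)))
        = (volume : Measure (ℝ × ℝ)).restrict (Ioi 0 ×ˢ Ioi 0) := by
      rw [Measure.prod_restrict, ← Measure.volume_eq_prod]
    rw [hre] at hΦi ⊢
    rw [setIntegral_pos_iff_support_of_nonneg_ae]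
    · apply lt_of_lt_of_le _ (measure_mono
        (show Ioo (1:ℝ) 2 ×ˢ Ioo (0:ℝ) 1 ⊆ Function.support Φ ∩ Ioi 0 ×ˢ Ioi 0 from ?_))
      · rw [Measure.volume_eq_prod, Measure.prod_prod, Real.volume_Ioo, Real.volume_Ioo]
        norm_num
      · rintro ⟨s, t⟩ ⟨hs, ht⟩
        have hs1 : (1:ℝ) < s := hs.1
        have ht0 : (0:ℝ) < t := ht.1
        have ht1 : t < 1 := ht.2
        have hspos : (0:ℝ) < s := by linarith
        constructor
        · apply Function.mem_support.mpr
          have h1 : 0 < a s := by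
            have k1 := Real.rpow_pos_of_pos hspos p
            have k2 := Real.rpow_pos_of_pos (show (0:ℝ) < c + s by linarith) (-3/2:ℝ)
            simp only [ha_def]; positivity
          have h2 : 0 < a t := by
            have k1 := Real.rpow_pos_of_pos ht0 p
            have k2 := Real.rpow_pos_of_pos (show (0:ℝ) < c + t by linarith) (-3/2:ℝ)
            simp only [ha_def]; positivity
          have h3 : (0:ℝ) < (s - t)^2 := by nlinarith
          exact ne_of_gt (mul_pos h3 (mul_pos h1 h2))
        · exact ⟨hspos, ht0⟩
    · filter_upwards [ae_restrict_mem (measurableSet_Ioi.prod measurableSet_Ioi)] with z hz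
      have hz1 : (0:ℝ) < z.1 := hz.1
      have hz2 : (0:ℝ) < z.2 := hz.2
      have h1 : 0 ≤ a z.1 := by
        have k1 := (Real.rpow_pos_of_pos hz1 p).le
        have k2 := (Real.rpow_pos_of_pos (show (0:ℝ) < c + z.1 by linarith) (-3/2:ℝ)).le
        simp only [ha_def]; positivity
      have h2 : 0 ≤ a z.2 := by
        have k1 := (Real.rpow_pos_of_pos hz2 p).le
        have k2 := (Real.rpow_pos_of_pos (show (0:ℝ) < c + z.2 by linarith) (-3/2:ℝ)).le
        simp only [ha_def]; positivity
      have h3 : (0:ℝ) ≤ (z.1 - z.2)^2 := sq_nonneg _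
      exact mul_nonneg h3 (mul_nonneg h1 h2)
    · exact hΦi
  rw [hval] at hposΦ
  have hI0 : Ig c p (-3/2) = ∫ s in Ioi (0:ℝ), a s := rfl
  rw [hI0, hI1, hI2]
  nlinarith [hposΦ]

lemma V_eq {p x : ℝ} (hp : -1 < p) (hx : 0 < x) :
    V p x = Ig (x^2) p (-1/2) / Real.Gamma (p+1) := by
  have hx2 : (0:ℝ) < x^2 := by positivity
  have himg : (fun u => Real.sqrt (x^2 + u)) '' (Ioi 0) = Ioi x := by
    ext t
    constructor
    · rintro ⟨u, hu, rfl⟩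
      have hu0 : (0:ℝ) < u := hu
      show x < Real.sqrt (x^2 + u)
      have h := Real.sqrt_lt_sqrt (by positivity : (0:ℝ) ≤ x^2)
        (by linarith : x^2 < x^2 + u)
      rwa [Real.sqrt_sq hx.le] at h
    · intro ht
      have htx : x < t := ht
      refine ⟨t^2 - x^2, ?_, ?_⟩
      · show (0:ℝ) < t^2 - x^2
        nlinarith
      · show Real.sqrt (x^2 + (t^2 - x^2)) = t
        rw [show x^2 + (t^2 - x^2) = t^2 by ring, Real.sqrt_sq (by linarith)]
  have hderiv : ∀ u ∈ Ioi (0:ℝ), HasDerivWithinAt (fun u => Real.sqrt (x^2 + u))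
      (1/(2*Real.sqrt (x^2+u))) (Ioi 0) u := by
    intro u hu
    have hu0 : (0:ℝ) < u := hu
    have h := (Real.hasDerivAt_sqrt (show x^2+u ≠ 0 by positivity)).comp u
      ((hasDerivAt_id u).const_add (x^2))
    simpa [Function.comp_def] using h.hasDerivWithinAt
  have hinj : InjOn (fun u => Real.sqrt (x^2 + u)) (Ioi 0) := by
    intro u hu v hv h
    have hu0 : (0:ℝ) < u := hu
    have hv0 : (0:ℝ) < v := hv
    have e1 : Real.sqrt (x^2+u)^2 = x^2 + u := Real.sq_sqrt (by positivity)
    have e2 : Real.sqrt (x^2+v)^2 = x^2 + v := Real.sq_sqrt (by positivity)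
    simp only at h
    have : x^2 + u = x^2 + v := by rw [← e1, ← e2, h]
    linarith
  have hcov := integral_image_eq_integral_abs_deriv_smul measurableSet_Ioi hderiv hinj
    (fun t => Real.exp (-t^2) * (t^2 - x^2) ^ p)
  rw [himg] at hcov
  have hrhs : (∫ u in Ioi (0:ℝ), |1/(2*Real.sqrt (x^2+u))| •
      ((fun t => Real.exp (-t^2) * (t^2 - x^2) ^ p) ((fun u => Real.sqrt (x^2 + u)) u)))
      = ∫ u in Ioi (0:ℝ), (Real.exp (-x^2)/2) * (Real.exp (-u) * u ^ p * (x^2+u) ^ (-1/2:ℝ)) := by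
    apply setIntegral_congr_fun measurableSet_Ioi
    intro u hu
    have hu0 : (0:ℝ) < u := hu
    have hpos : (0:ℝ) < x^2 + u := by positivity
    have e3 : (0:ℝ) < Real.sqrt (x^2+u) := Real.sqrt_pos.mpr hpos
    have e1 : Real.sqrt (x^2+u)^2 = x^2 + u := Real.sq_sqrt hpos.le
    have e2 : (x^2+u) ^ (-1/2:ℝ) = (Real.sqrt (x^2+u))⁻¹ := by
      rw [show (-1/2:ℝ) = -(1/2) by norm_num, Real.rpow_neg hpos.le, Real.sqrt_eq_rpow]
    simp only [smul_eq_mul]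
    rw [e1, abs_of_pos (by positivity)]
    rw [show x^2 + u - x^2 = u by ring]
    rw [show -(x^2+u) = -x^2 + -u by ring, Real.exp_add, e2]
    field_simp
  rw [hrhs, integral_const_mul] at hcov
  rw [V, hcov]
  rw [show (Ig (x^2) p (-1/2) : ℝ) = ∫ u in Ioi (0:ℝ), Real.exp (-u) * u ^ p * (x^2+u) ^ (-1/2:ℝ) from rfl]
  have hexp : Real.exp (x^2) * Real.exp (-x^2) = 1 := by
    rw [← Real.exp_add]; simp
  have hG : Real.Gamma (p+1) ≠ 0 := ne_of_gt (Real.Gamma_pos_of_pos (by linarith))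
  linear_combination ((∫ u in Ioi (0:ℝ), Real.exp (-u) * u ^ p * (x^2+u) ^ (-1/2:ℝ))
    / Real.Gamma (p+1)) * hexp

theorem stmt_14 (q : ℝ) (hq : -1 < q) (x : ℝ) (hx : 0 < x) :
    (q + 1) * (V (q + 1) x) ^ 2 - (q + 2) * V q x * V (q + 2) x >
      -(V q x * V (q + 1) x) := by
  have hc : (0:ℝ) < x^2 := by positivity
  have hV0 : V q x = Ig (x^2) q (-1/2) / Real.Gamma (q+1) := V_eq hq hx
  have hV1 : V (q+1) x = Ig (x^2) (q+1) (-1/2) / Real.Gamma (q+2) := by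
    have h := V_eq (p := q+1) (by linarith) hx
    rwa [show q+1+1 = q+2 by ring] at h
  have hV2 : V (q+2) x = Ig (x^2) (q+2) (-1/2) / Real.Gamma (q+3) := by
    have h := V_eq (p := q+2) (by linarith) hx
    rwa [show q+2+1 = q+3 by ring] at h
  have h1 : Ig (x^2) (q+1) (-1/2) = (q+1) * Ig (x^2) q (-1/2) - (1/2) * Ig (x^2) (q+1) (-3/2) := by
    have h := Ig_ibp hc (show (0:ℝ) < q+1 by linarith)
    rwa [show q+1-1 = q by ring] at h
  have h2 : Ig (x^2) (q+2) (-1/2) = (q+2) * Ig (x^2) (q+1) (-1/2) - (1/2) * Ig (x^2) (q+2) (-3/2) := by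
    have h := Ig_ibp hc (show (0:ℝ) < q+2 by linarith)
    rwa [show q+2-1 = q+1 by ring] at h
  have h3 : Ig (x^2) q (-1/2) = Ig (x^2) (q+1) (-3/2) + x^2 * Ig (x^2) q (-3/2) :=
    Ig_split hc hq
  have h4 : Ig (x^2) (q+1) (-1/2) = Ig (x^2) (q+2) (-3/2) + x^2 * Ig (x^2) (q+1) (-3/2) := by
    have h := Ig_split hc (show -1 < q+1 by linarith)
    rwa [show q+1+1 = q+2 by ring] at h
  have h5 : Ig (x^2) (q+1) (-3/2) ^ 2 < Ig (x^2) q (-3/2) * Ig (x^2) (q+2) (-3/2) :=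
    Ig_cs hc hq
  set N0 := Ig (x^2) q (-1/2)
  set N1 := Ig (x^2) (q+1) (-1/2)
  set N2 := Ig (x^2) (q+2) (-1/2)
  set M0 := Ig (x^2) q (-3/2)
  set M1 := Ig (x^2) (q+1) (-3/2)
  set M2 := Ig (x^2) (q+2) (-3/2)
  have key : N1^2 - N0*N2 + N0*N1 = x^2*(M0*M2 - M1^2)/2 := by
    linear_combination N1*h1 - N0*h2 + (M2/2)*h3 - (M1/2)*h4
  have hkeypos : 0 < N1^2 - N0*N2 + N0*N1 := by
    rw [key]
    have : 0 < M0*M2 - M1^2 := by linarith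
    positivity
  have hG1 : (0:ℝ) < Real.Gamma (q+1) := Real.Gamma_pos_of_pos (by linarith)
  have hG2 : Real.Gamma (q+2) = (q+1) * Real.Gamma (q+1) := by
    rw [show q+2 = (q+1)+1 by ring, Real.Gamma_add_one (by linarith : q+1 ≠ 0)]
  have hG3 : Real.Gamma (q+3) = (q+2) * ((q+1) * Real.Gamma (q+1)) := by
    rw [show q+3 = (q+2)+1 by ring, Real.Gamma_add_one (by linarith : q+2 ≠ 0), hG2]
  have hq1 : (0:ℝ) < q+1 := by linarith
  have hq2 : (0:ℝ) < q+2 := by linarith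
  have expand : (q+1) * (V (q+1) x)^2 - (q+2) * V q x * V (q+2) x + V q x * V (q+1) x
      = (N1^2 - N0*N2 + N0*N1) / ((q+1) * Real.Gamma (q+1)^2) := by
    rw [hV0, hV1, hV2, hG2, hG3]
    field_simp
  have hfinal : 0 < (q+1) * (V (q+1) x)^2 - (q+2) * V q x * V (q+2) x + V q x * V (q+1) x := by
    rw [expand]
    apply div_pos hkeypos
    positivity
  linarith
end

section
/- For every q > -1 and every x > 0, the sharp Turán type inequality V_{q+1}(x)² < V_q(x)·V_{q+2}(x) holds. -/
open Real MeasureTheory Set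

open scoped ENNReal

lemma myIntOn {s b : ℝ} (hs : -1 < s) (hb : 0 < b) :
    IntegrableOn (fun t : ℝ => t ^ s * Real.exp (-(b * t))) (Ioi 0) := by
  have := integrableOn_rpow_mul_exp_neg_mul_rpow hs one_pos hb
  refine this.congr_fun (fun t ht => ?_) measurableSet_Ioi
  simp only [Real.rpow_one]
  ring_nf

lemma myG1 {p b : ℝ} (hp : 0 < p) (hb : 0 < b) :
    ∫⁻ t in Ioi (0:ℝ), ENNReal.ofReal (t ^ (p - 1) * Real.exp (-(b * t))) =
      ENNReal.ofReal ((1 / b) ^ p * Real.Gamma p) := by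
  rw [← integral_rpow_mul_exp_neg_mul_Ioi hp hb,
    ofReal_integral_eq_lintegral_ofReal (myIntOn (by linarith) hb)]
  filter_upwards [ae_restrict_mem measurableSet_Ioi] with t ht
  exact mul_nonneg (Real.rpow_nonneg (le_of_lt ht) _) (Real.exp_nonneg _)

lemma myImage {x : ℝ} (hx : 0 < x) : (fun t : ℝ => t ^ 2 - x ^ 2) '' Ioi x = Ioi 0 := by
  ext s
  constructor
  · rintro ⟨t, ht, rfl⟩
    have : x < t := ht
    simp only [mem_Ioi]
    nlinarith
  · intro hs
    have hs' : (0:ℝ) < s := hs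
    refine ⟨Real.sqrt (s + x ^ 2), ?_, ?_⟩
    · exact (Real.lt_sqrt (by positivity)).mpr (by linarith)
    · simp [Real.sq_sqrt (by positivity : (0:ℝ) ≤ s + x ^ 2)]

lemma mySubst {x : ℝ} (hx : 0 < x) (g : ℝ → ENNReal) :
    ∫⁻ s in Ioi (0:ℝ), g s
      = ∫⁻ t in Ioi x, ENNReal.ofReal (2 * t) * g (t ^ 2 - x ^ 2) := by
  rw [← myImage hx]
  have hderiv : ∀ t ∈ Ioi x, HasDerivWithinAt (fun t : ℝ => t ^ 2 - x ^ 2) (2 * t) (Ioi x) t := by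
    intro t ht
    simpa using ((hasDerivAt_pow 2 t).sub_const (x ^ 2)).hasDerivWithinAt
  have hinj : InjOn (fun t : ℝ => t ^ 2 - x ^ 2) (Ioi x) := by
    intro a ha b hb hab
    simp only [mem_Ioi] at ha hb
    simp only [sub_left_inj] at hab
    nlinarith [sq_nonneg (a - b), sq_nonneg (a + b)]
  have := lintegral_image_eq_lintegral_abs_det_fderiv_mul volume measurableSet_Ioi
    (f' := fun t => ContinuousLinearMap.smulRight (1 : ℝ →L[ℝ] ℝ) (2 * t))
    (fun t ht => (hderiv t ht).hasFDerivWithinAt) hinj g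
  rw [this]
  refine setLIntegral_congr_fun measurableSet_Ioi (fun t ht => ?_)
  rw [ContinuousLinearMap.smulRight_one_eq_toSpanSingleton, ContinuousLinearMap.det_toSpanSingleton, abs_of_pos (by linarith [mem_Ioi.mp ht] : (0:ℝ) < 2 * t)]

noncomputable def Jf (x r : ℝ) : ℝ → ℝ :=
  fun v => v ^ (-2⁻¹ : ℝ) * Real.exp (-(x^2 * v)) * (1+v) ^ (-r)

lemma JfNonneg {x r : ℝ} {v : ℝ} (hv : 0 < v) : 0 ≤ Jf x r v := by
  unfold Jf
  have h1 : (0:ℝ) < 1 + v := by linarith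
  positivity

lemma JfInt {x r : ℝ} (hx : 0 < x) (hr : 0 ≤ r) : IntegrableOn (Jf x r) (Ioi 0) := by
  refine Integrable.mono (myIntOn (s := (-2⁻¹:ℝ)) (by norm_num) (by positivity : (0:ℝ) < x^2))
    ((by unfold Jf; fun_prop : Measurable (Jf x r)).aestronglyMeasurable) ?_
  filter_upwards [ae_restrict_mem measurableSet_Ioi] with v hv
  have hv' : (0:ℝ) < v := hv
  have h1 : (0:ℝ) < 1 + v := by linarith
  rw [Real.norm_eq_abs, Real.norm_eq_abs, abs_of_nonneg (JfNonneg hv'),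
    abs_of_nonneg (by positivity)]
  unfold Jf
  have : (1+v) ^ (-r) ≤ 1 :=
    Real.rpow_le_one_of_one_le_of_nonpos (by linarith) (by linarith)
  nlinarith [Real.rpow_nonneg hv'.le (-2⁻¹ : ℝ), Real.exp_nonneg (-(x^2*v)),
    mul_nonneg (Real.rpow_nonneg hv'.le (-2⁻¹ : ℝ)) (Real.exp_nonneg (-(x^2*v))),
    Real.rpow_nonneg (by linarith : (0:ℝ) ≤ 1+v) (-r)]

lemma myRep {q x : ℝ} (hq : -1 < q) (hx : 0 < x) :
    V q x = (∫ v in Ioi (0:ℝ), Jf x (q+1) v) / Real.sqrt π := by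
  have hq1 : (0:ℝ) < q + 1 := by linarith
  have hΓ : 0 < Real.Gamma (q+1) := Real.Gamma_pos_of_pos hq1
  set A : ℝ := ∫ v in Ioi (0:ℝ), Jf x (q+1) v with hA
  have hAnn : 0 ≤ A := setIntegral_nonneg measurableSet_Ioi fun v hv => JfNonneg hv
  set Wl : ℝ≥0∞ := ∫⁻ t in Ioi x, ENNReal.ofReal (Real.exp (-t^2) * (t^2-x^2) ^ q) with hWl
  set G : ℝ → ℝ → ℝ := fun v t => (2*t) * ((v ^ (-2⁻¹:ℝ) * Real.exp (-(x^2*v))) *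
      ((t^2-x^2) ^ q * Real.exp (-((1+v)*(t^2-x^2))))) with hG
  -- step 1 : pointwise in v
  have h1 : ∀ v ∈ Ioi (0:ℝ), ENNReal.ofReal (Real.Gamma (q+1) * Jf x (q+1) v)
      = ∫⁻ s in Ioi (0:ℝ), ENNReal.ofReal ((v ^ (-2⁻¹:ℝ) * Real.exp (-(x^2*v))) *
          (s ^ q * Real.exp (-((1+v)*s)))) := by
    intro v hv
    have hv' : (0:ℝ) < v := hv
    have hb : (0:ℝ) < 1 + v := by linarith
    have hcv : 0 ≤ v ^ (-2⁻¹:ℝ) * Real.exp (-(x^2*v)) := by positivity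
    calc ENNReal.ofReal (Real.Gamma (q+1) * Jf x (q+1) v)
        = ENNReal.ofReal ((v ^ (-2⁻¹:ℝ) * Real.exp (-(x^2*v))) *
            ((1/(1+v)) ^ (q+1) * Real.Gamma (q+1))) := by
          congr 1
          have : ((1/(1+v)) : ℝ) ^ (q+1) = (1+v) ^ (-(q+1)) := by
            rw [one_div, ← Real.rpow_neg_one (1+v), ← Real.rpow_mul hb.le]
            ring_nf
          rw [this]
          unfold Jf
          ring
      _ = ENNReal.ofReal (v ^ (-2⁻¹:ℝ) * Real.exp (-(x^2*v))) *
            ENNReal.ofReal ((1/(1+v)) ^ (q+1) * Real.Gamma (q+1)) := ENNReal.ofReal_mul hcv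
      _ = ENNReal.ofReal (v ^ (-2⁻¹:ℝ) * Real.exp (-(x^2*v))) *
            ∫⁻ s in Ioi (0:ℝ), ENNReal.ofReal (s ^ ((q+1)-1) * Real.exp (-((1+v)*s))) := by
          rw [myG1 hq1 hb]
      _ = ∫⁻ s in Ioi (0:ℝ), ENNReal.ofReal (v ^ (-2⁻¹:ℝ) * Real.exp (-(x^2*v))) *
            ENNReal.ofReal (s ^ q * Real.exp (-((1+v)*s))) := by
          rw [← lintegral_const_mul' _ _ ENNReal.ofReal_ne_top]
          norm_num
      _ = _ := by
          refine lintegral_congr fun s => ?_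
          rw [← ENNReal.ofReal_mul hcv]
  -- step 2 : substitution, pointwise in v
  have h2 : ∀ v ∈ Ioi (0:ℝ), (∫⁻ s in Ioi (0:ℝ), ENNReal.ofReal ((v ^ (-2⁻¹:ℝ) * Real.exp (-(x^2*v))) *
          (s ^ q * Real.exp (-((1+v)*s))))) = ∫⁻ t in Ioi x, ENNReal.ofReal (G v t) := by
    intro v hv
    rw [mySubst hx]
    refine setLIntegral_congr_fun measurableSet_Ioi (fun t ht => ?_)
    have ht' : x < t := ht
    rw [← ENNReal.ofReal_mul (by linarith : (0:ℝ) ≤ 2*t)]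
  -- step 3 : swap
  have hGmeas : Measurable (Function.uncurry fun (v t : ℝ) => ENNReal.ofReal (G v t)) := by
    apply Measurable.ennreal_ofReal
    simp only [hG]
    fun_prop
  have h3 : (∫⁻ v in Ioi (0:ℝ), ∫⁻ t in Ioi x, ENNReal.ofReal (G v t))
      = ∫⁻ t in Ioi x, ∫⁻ v in Ioi (0:ℝ), ENNReal.ofReal (G v t) :=
    lintegral_lintegral_swap hGmeas.aemeasurable
  -- step 4 : pointwise in t
  have h4 : ∀ t ∈ Ioi x, (∫⁻ v in Ioi (0:ℝ), ENNReal.ofReal (G v t))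
      = ENNReal.ofReal (2 * Real.sqrt π * Real.exp (x^2)) *
        ENNReal.ofReal (Real.exp (-t^2) * (t^2-x^2) ^ q) := by
    intro t ht
    have ht' : x < t := ht
    have htpos : 0 < t := lt_trans hx ht'
    have htx : (0:ℝ) < t^2 - x^2 := by nlinarith
    have hCt : 0 ≤ 2*t*(t^2-x^2) ^ q * Real.exp (x^2 - t^2) := by positivity
    have key : ∀ v : ℝ, G v t = (2*t*(t^2-x^2) ^ q * Real.exp (x^2 - t^2)) *
        (v ^ (-2⁻¹:ℝ) * Real.exp (-(t^2*v))) := by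
      intro v
      have he : Real.exp (-(x^2*v)) * Real.exp (-((1+v)*(t^2-x^2)))
          = Real.exp (x^2 - t^2) * Real.exp (-(t^2*v)) := by
        rw [← Real.exp_add, ← Real.exp_add]
        ring_nf
      simp only [hG]
      linear_combination (2*t*(t^2-x^2) ^ q * v ^ (-2⁻¹:ℝ)) * he
    calc (∫⁻ v in Ioi (0:ℝ), ENNReal.ofReal (G v t))
        = ∫⁻ v in Ioi (0:ℝ), ENNReal.ofReal (2*t*(t^2-x^2) ^ q * Real.exp (x^2 - t^2)) *
            ENNReal.ofReal (v ^ ((1/2:ℝ)-1) * Real.exp (-(t^2*v))) := by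
          refine lintegral_congr fun v => ?_
          rw [key v, ENNReal.ofReal_mul hCt]
          norm_num
      _ = ENNReal.ofReal (2*t*(t^2-x^2) ^ q * Real.exp (x^2 - t^2)) *
            ENNReal.ofReal ((1/t^2) ^ (1/2:ℝ) * Real.Gamma (1/2)) := by
          rw [lintegral_const_mul' _ _ ENNReal.ofReal_ne_top, myG1 (by norm_num) (by positivity)]
      _ = _ := by
          rw [← ENNReal.ofReal_mul hCt, ← ENNReal.ofReal_mul (by positivity)]
          congr 1
          rw [Real.Gamma_one_half_eq]
          have h12 : ((1/t^2 : ℝ)) ^ (1/2:ℝ) = 1/t := by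
            rw [show (1/t^2 : ℝ) = (1/t)^(2:ℕ) by rw [div_pow]; norm_num,
              ← Real.rpow_natCast (1/t) 2, ← Real.rpow_mul (by positivity)]
            norm_num
          rw [h12, show x^2 - t^2 = x^2 + -t^2 by ring, Real.exp_add]
          field_simp
  -- master identity
  have hJint := JfInt (r := q+1) hx (by linarith)
  have master : ENNReal.ofReal (Real.Gamma (q+1)) * ENNReal.ofReal A
      = ENNReal.ofReal (2 * Real.sqrt π * Real.exp (x^2)) * Wl := by
    rw [ofReal_integral_eq_lintegral_ofReal hJint
      (by filter_upwards [ae_restrict_mem measurableSet_Ioi] with v hv using JfNonneg hv),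
      ← lintegral_const_mul' _ _ ENNReal.ofReal_ne_top]
    calc (∫⁻ v in Ioi (0:ℝ), ENNReal.ofReal (Real.Gamma (q+1)) * ENNReal.ofReal (Jf x (q+1) v))
        = ∫⁻ v in Ioi (0:ℝ), ∫⁻ t in Ioi x, ENNReal.ofReal (G v t) := by
          refine setLIntegral_congr_fun measurableSet_Ioi
            (fun v hv => ?_)
          rw [← ENNReal.ofReal_mul hΓ.le, h1 v hv, h2 v hv]
      _ = ∫⁻ t in Ioi x, ∫⁻ v in Ioi (0:ℝ), ENNReal.ofReal (G v t) := h3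
      _ = ∫⁻ t in Ioi x, ENNReal.ofReal (2 * Real.sqrt π * Real.exp (x^2)) *
            ENNReal.ofReal (Real.exp (-t^2) * (t^2-x^2) ^ q) :=
          setLIntegral_congr_fun measurableSet_Ioi
            (fun t ht => h4 t ht)
      _ = ENNReal.ofReal (2 * Real.sqrt π * Real.exp (x^2)) * Wl := by
          rw [hWl, lintegral_const_mul' _ _ ENNReal.ofReal_ne_top]
  -- conclude
  have hc0 : (0:ℝ) < 2 * Real.sqrt π * Real.exp (x^2) := by
    have := Real.sqrt_pos.mpr Real.pi_pos
    positivity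
  have hreal : Real.Gamma (q+1) * A = (2 * Real.sqrt π * Real.exp (x^2)) * Wl.toReal := by
    have := congrArg ENNReal.toReal master
    rwa [ENNReal.toReal_mul, ENNReal.toReal_mul, ENNReal.toReal_ofReal hΓ.le,
      ENNReal.toReal_ofReal hAnn, ENNReal.toReal_ofReal hc0.le] at this
  have hW : (∫ t in Set.Ioi x, Real.exp (-t ^ 2) * (t ^ 2 - x ^ 2) ^ q) = Wl.toReal := by
    rw [hWl]
    rw [integral_eq_lintegral_of_nonneg_ae ?_ ?_]
    · filter_upwards [ae_restrict_mem measurableSet_Ioi] with t ht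
      have ht' : x < t := ht
      have htx : (0:ℝ) < t^2 - x^2 := by nlinarith [lt_trans hx ht']
      positivity
    · exact ((by fun_prop : Measurable fun t : ℝ =>
        Real.exp (-t ^ 2) * (t ^ 2 - x ^ 2) ^ q)).aestronglyMeasurable
  unfold V
  rw [hW]
  have hsπ : (0:ℝ) < Real.sqrt π := Real.sqrt_pos.mpr Real.pi_pos
  have hex : (0:ℝ) < Real.exp (x^2) := Real.exp_pos _
  field_simp
  nlinarith [hreal, mul_pos hsπ hex]

lemma JfPos {x r : ℝ} {v : ℝ} (hv : 0 < v) : 0 < Jf x r v := by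
  unfold Jf
  have h1 : (0:ℝ) < 1 + v := by linarith
  positivity

lemma JfStep {x r : ℝ} {v : ℝ} (hv : 0 < v) :
    Jf x (r+1) v = Jf x r v * (1+v)⁻¹ := by
  unfold Jf
  have h1 : (0:ℝ) < 1 + v := by linarith
  rw [show -(r+1) = -r + -1 by ring, Real.rpow_add h1, Real.rpow_neg_one]
  ring

lemma Jpos {x r : ℝ} (hx : 0 < x) (hr : 0 ≤ r) : 0 < ∫ v in Ioi (0:ℝ), Jf x r v := by
  rw [setIntegral_pos_iff_support_of_nonneg_ae
    (by filter_upwards [ae_restrict_mem measurableSet_Ioi] with v hv using JfNonneg hv)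
    (JfInt hx hr)]
  refine lt_of_lt_of_le ?_ (measure_mono (show Ioi (0:ℝ) ⊆ _ from fun v hv =>
    ⟨ne_of_gt (JfPos hv), hv⟩))
  simp [Real.volume_Ioi]

lemma Jturan {x r : ℝ} (hx : 0 < x) (hr : 0 ≤ r) :
    (∫ v in Ioi (0:ℝ), Jf x (r+1) v) ^ 2 <
      (∫ v in Ioi (0:ℝ), Jf x r v) * ∫ v in Ioi (0:ℝ), Jf x (r+2) v := by
  have hr1 : (0:ℝ) ≤ r + 1 := by linarith
  have hr2 : (0:ℝ) ≤ r + 2 := by linarith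
  set J0 := ∫ v in Ioi (0:ℝ), Jf x r v with hJ0
  set J1 := ∫ v in Ioi (0:ℝ), Jf x (r+1) v with hJ1
  set J2 := ∫ v in Ioi (0:ℝ), Jf x (r+2) v with hJ2
  have hJ0pos : 0 < J0 := Jpos hx hr
  set lam := J1 / J0 with hlam
  set f : ℝ → ℝ := fun v => Jf x r v * (lam - (1+v)⁻¹)^2 with hf
  have heq : EqOn (fun v => lam^2 * Jf x r v - 2*lam * Jf x (r+1) v + Jf x (r+2) v) f (Ioi 0) := by
    intro v hv
    have hv' : (0:ℝ) < v := hv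
    have e1 : Jf x (r+1) v = Jf x r v * (1+v)⁻¹ := JfStep hv'
    have e2 : Jf x (r+2) v = Jf x r v * (1+v)⁻¹ * (1+v)⁻¹ := by
      rw [show r+2 = (r+1)+1 by ring, JfStep hv', e1]
    simp only [hf]
    rw [e1, e2]
    ring
  have hint0 := JfInt (r := r) hx hr
  have hint1 := JfInt (r := r+1) hx hr1
  have hint2 := JfInt (r := r+2) hx hr2
  have ha : IntegrableOn (fun v => lam^2 * Jf x r v) (Ioi 0) := hint0.const_mul _
  have hb : IntegrableOn (fun v => 2*lam * Jf x (r+1) v) (Ioi 0) := hint1.const_mul _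
  have hab : IntegrableOn (fun v => lam^2 * Jf x r v - 2*lam * Jf x (r+1) v) (Ioi 0) := ha.sub hb
  have hcomb : IntegrableOn
      (fun v => lam^2 * Jf x r v - 2*lam * Jf x (r+1) v + Jf x (r+2) v) (Ioi 0) := hab.add hint2
  have hintf : IntegrableOn f (Ioi 0) := hcomb.congr_fun heq measurableSet_Ioi
  have hPval : (∫ v in Ioi (0:ℝ), f v) = lam^2 * J0 - 2*lam * J1 + J2 := by
    rw [← setIntegral_congr_fun measurableSet_Ioi heq, integral_add hab hint2,
      integral_sub ha hb, MeasureTheory.integral_const_mul, MeasureTheory.integral_const_mul]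
  have hPpos : 0 < ∫ v in Ioi (0:ℝ), f v := by
    rw [setIntegral_pos_iff_support_of_nonneg_ae
      (by filter_upwards [ae_restrict_mem measurableSet_Ioi] with v hv
          exact mul_nonneg (JfNonneg hv) (sq_nonneg _))
      hintf]
    set T : Set ℝ := {v : ℝ | 0 < v ∧ (1+v)⁻¹ = lam} with hT
    have hTsub : T.Subsingleton := by
      rintro u ⟨hu, hu2⟩ w ⟨hw, hw2⟩
      have : (1+u)⁻¹ = (1+w)⁻¹ := by rw [hu2, hw2]
      have h1u : (1:ℝ)+u ≠ 0 := by linarith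
      have h1w : (1:ℝ)+w ≠ 0 := by linarith
      field_simp at this
      linarith
    have hsub : Ioi (0:ℝ) \ T ⊆ Function.support f ∩ Ioi 0 := by
      rintro v ⟨hv, hvT⟩
      have hv' : (0:ℝ) < v := hv
      refine ⟨?_, hv⟩
      have hne : (1+v)⁻¹ ≠ lam := fun h => hvT ⟨hv', h⟩
      have : (lam - (1+v)⁻¹)^2 > 0 :=
        pow_two_pos_of_ne_zero (sub_ne_zero.mpr fun h => hne h.symm)
      exact ne_of_gt (mul_pos (JfPos hv') this)
    refine lt_of_lt_of_le ?_ (measure_mono hsub)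
    rw [measure_diff_null (hTsub.measure_zero _)]
    simp [Real.volume_Ioi]
  rw [hPval] at hPpos
  have : J1 = lam * J0 := by rw [hlam]; field_simp
  nlinarith [hPpos, hJ0pos]

theorem stmt_15 (q : ℝ) (hq : -1 < q) (x : ℝ) (hx : 0 < x) :
    (V (q + 1) x) ^ 2 < V q x * V (q + 2) x := by
  have h0 := myRep hq hx
  have h1 := myRep (show (-1:ℝ) < q+1 by linarith) hx
  have h2 := myRep (show (-1:ℝ) < q+2 by linarith) hx
  have ht := Jturan (r := q+1) hx (by linarith)
  rw [h0, h1, h2]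
  have e3 : (∫ v in Ioi (0:ℝ), Jf x (q+2+1) v) = ∫ v in Ioi (0:ℝ), Jf x (q+1+2) v := by
    have : q+2+1 = q+1+2 := by ring
    rw [this]
  rw [e3]
  have hs : 0 < Real.sqrt π := Real.sqrt_pos.mpr Real.pi_pos
  rw [div_pow, div_mul_div_comm, ← pow_two]
  exact (div_lt_div_iff_of_pos_right (by positivity)).mpr ht
end

section
/- For every q > 0 and every x > 0, one has V_q(x)/V_{q-1}(x) > 2x²/(2x² + 1). -/
open Real MeasureTheory Set
open Filter Topology
open scoped ENNReal

-- integrability of the basic integrand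
lemma coulomb_integrable {q x : ℝ} (hq : -1 < q) (hx : 0 < x) :
    IntegrableOn (fun t : ℝ => Real.exp (-t ^ 2) * (t ^ 2 - x ^ 2) ^ q) (Ioi x) := by
  set f : ℝ → ℝ := fun t => Real.exp (-t ^ 2) * (t ^ 2 - x ^ 2) ^ q with hf
  have hcont : ContinuousOn f (Ioi x) := by
    apply ContinuousOn.mul
    · exact (Real.continuous_exp.comp (continuous_pow 2).neg).continuousOn
    · apply ContinuousOn.rpow_const
      · exact ((continuous_pow 2).sub continuous_const).continuousOn
      · intro t ht
        left
        have : x < t := ht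
        nlinarith
  have hsplit : Ioi x = Ioc x (x + 1) ∪ Ioi (x + 1) := (Ioc_union_Ioi_eq_Ioi (by linarith)).symm
  rw [hsplit]
  apply IntegrableOn.union
  · -- near the left endpoint
    set C : ℝ := (2 * x) ^ q + (2 * x + 1) ^ q with hC
    have hg : IntegrableOn (fun t : ℝ => C * (t - x) ^ q) (Ioc x (x + 1)) := by
      have h1 : IntervalIntegrable (fun t : ℝ => (t - x) ^ q) volume (0 + x) (1 + x) :=
        (intervalIntegral.intervalIntegrable_rpow' hq (a := 0) (b := 1)).comp_sub_right x
      rw [show (0:ℝ) + x = x by ring, show (1:ℝ) + x = x + 1 by ring,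
        intervalIntegrable_iff_integrableOn_Ioc_of_le (by linarith)] at h1
      exact h1.const_mul C
    apply hg.integrable.mono'
    · exact (hcont.mono Ioc_subset_Ioi_self).aestronglyMeasurable measurableSet_Ioc
    · rw [ae_restrict_iff' measurableSet_Ioc]
      refine Eventually.of_forall fun t ht => ?_
      obtain ⟨h1, h2⟩ := ht
      have h3 : (0:ℝ) < t - x := by linarith
      have h4 : (0:ℝ) < t + x := by linarith
      have hfac : t ^ 2 - x ^ 2 = (t - x) * (t + x) := by ring
      have hrw : (t ^ 2 - x ^ 2) ^ q = (t - x) ^ q * (t + x) ^ q := by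
        rw [hfac, Real.mul_rpow h3.le h4.le]
      have hexp : Real.exp (-t ^ 2) ≤ 1 := Real.exp_le_one_iff.mpr (by nlinarith)
      have htx : (t + x) ^ q ≤ C := by
        rcases le_or_gt 0 q with hq0 | hq0
        · have : (t + x) ^ q ≤ (2 * x + 1) ^ q :=
            Real.rpow_le_rpow h4.le (by linarith) hq0
          have h5 : (0:ℝ) ≤ (2 * x) ^ q := Real.rpow_nonneg (by linarith) q
          simp only [hC]; linarith
        · have : (t + x) ^ q ≤ (2 * x) ^ q :=
            Real.rpow_le_rpow_of_nonpos (by linarith) (by linarith) hq0.le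
          have h5 : (0:ℝ) ≤ (2 * x + 1) ^ q := Real.rpow_nonneg (by linarith) q
          simp only [hC]; linarith
      have hnn : (0:ℝ) ≤ (t - x) ^ q := Real.rpow_nonneg h3.le q
      have hnn2 : (0:ℝ) ≤ (t + x) ^ q := Real.rpow_nonneg h4.le q
      rw [hf]
      simp only [norm_mul, Real.norm_eq_abs, abs_of_pos (Real.exp_pos _),
        abs_of_nonneg (Real.rpow_nonneg (by nlinarith : (0:ℝ) ≤ t ^ 2 - x ^ 2) q)]
      rw [hrw]
      calc Real.exp (-t ^ 2) * ((t - x) ^ q * (t + x) ^ q)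
          ≤ 1 * ((t - x) ^ q * (t + x) ^ q) := by
            apply mul_le_mul_of_nonneg_right hexp (by positivity)
        _ = (t - x) ^ q * (t + x) ^ q := by ring
        _ ≤ (t - x) ^ q * C := mul_le_mul_of_nonneg_left htx hnn
        _ = C * (t - x) ^ q := by ring
  · -- the tail
    have hmeas : AEStronglyMeasurable f (volume.restrict (Ioi (x + 1))) :=
      (hcont.mono (Ioi_subset_Ioi (by linarith))).aestronglyMeasurable measurableSet_Ioi
    rcases le_or_gt 0 q with hq0 | hq0
    · have hg : IntegrableOn (fun t : ℝ => t ^ (2 * q) * Real.exp (-1 * t ^ 2)) (Ioi (x + 1)) :=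
        (integrableOn_rpow_mul_exp_neg_mul_sq one_pos (by linarith)).mono_set
          (Ioi_subset_Ioi (by linarith))
      apply hg.integrable.mono' hmeas
      rw [ae_restrict_iff' measurableSet_Ioi]
      refine Eventually.of_forall fun t ht => ?_
      have h1 : x + 1 < t := ht
      have ht0 : (0:ℝ) < t := by linarith
      have h2 : (0:ℝ) ≤ t ^ 2 - x ^ 2 := by nlinarith
      have h3 : (t ^ 2 - x ^ 2) ^ q ≤ t ^ (2 * q) := by
        have : (t ^ 2 - x ^ 2) ^ q ≤ (t ^ 2) ^ q :=
          Real.rpow_le_rpow h2 (by nlinarith) hq0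
        calc (t ^ 2 - x ^ 2) ^ q ≤ (t ^ 2) ^ q := this
          _ = t ^ (2 * q) := by
              rw [← Real.rpow_natCast t 2, ← Real.rpow_mul ht0.le]
              norm_num
      rw [hf]
      simp only [norm_mul, Real.norm_eq_abs, abs_of_pos (Real.exp_pos _),
        abs_of_nonneg (Real.rpow_nonneg h2 q)]
      calc Real.exp (-t ^ 2) * (t ^ 2 - x ^ 2) ^ q
          ≤ Real.exp (-t ^ 2) * t ^ (2 * q) :=
            mul_le_mul_of_nonneg_left h3 (Real.exp_pos _).le
        _ = t ^ (2 * q) * Real.exp (-1 * t ^ 2) := by rw [neg_one_mul]; ring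
    · have hg : IntegrableOn (fun t : ℝ => (2 * x + 1) ^ q * Real.exp (-1 * t ^ 2))
          (Ioi (x + 1)) :=
        ((integrable_exp_neg_mul_sq one_pos).integrableOn).const_mul _
      apply hg.integrable.mono' hmeas
      rw [ae_restrict_iff' measurableSet_Ioi]
      refine Eventually.of_forall fun t ht => ?_
      have h1 : x + 1 < t := ht
      have h2 : (0:ℝ) < 2 * x + 1 := by linarith
      have h2' : 2 * x + 1 ≤ t ^ 2 - x ^ 2 := by nlinarith
      have h3 : (t ^ 2 - x ^ 2) ^ q ≤ (2 * x + 1) ^ q :=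
        Real.rpow_le_rpow_of_nonpos h2 h2' hq0.le
      rw [hf]
      simp only [norm_mul, Real.norm_eq_abs, abs_of_pos (Real.exp_pos _),
        abs_of_nonneg (Real.rpow_nonneg (by nlinarith : (0:ℝ) ≤ t ^ 2 - x ^ 2) q)]
      calc Real.exp (-t ^ 2) * (t ^ 2 - x ^ 2) ^ q
          ≤ Real.exp (-t ^ 2) * (2 * x + 1) ^ q :=
            mul_le_mul_of_nonneg_left h3 (Real.exp_pos _).le
        _ = (2 * x + 1) ^ q * Real.exp (-1 * t ^ 2) := by rw [neg_one_mul]; ring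

-- integrability of the integrand divided by t^2
lemma coulomb_integrable_div {q x : ℝ} (hq : -1 < q) (hx : 0 < x) :
    IntegrableOn (fun t : ℝ => Real.exp (-t ^ 2) * (t ^ 2 - x ^ 2) ^ q / t ^ 2) (Ioi x) := by
  have hbase := coulomb_integrable hq hx
  refine Integrable.mono' (hbase.const_mul (x ^ 2)⁻¹) ?_ ?_
  · refine ContinuousOn.aestronglyMeasurable ?_ measurableSet_Ioi
    apply ContinuousOn.div
    · apply ContinuousOn.mul
      · exact (Real.continuous_exp.comp (continuous_pow 2).neg).continuousOn
      · apply ContinuousOn.rpow_const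
        · exact ((continuous_pow 2).sub continuous_const).continuousOn
        · intro t ht
          have h1 : x < t := ht
          left; nlinarith
    · exact (continuous_pow 2).continuousOn
    · intro t ht
      have h1 : x < t := ht
      nlinarith
  · filter_upwards [ae_restrict_mem measurableSet_Ioi] with t ht
    have h1 : x < t := ht
    have h2 : (0:ℝ) ≤ t ^ 2 - x ^ 2 := by nlinarith
    have h3 : (0:ℝ) < t ^ 2 := by nlinarith
    have hnn : (0:ℝ) ≤ Real.exp (-t ^ 2) * (t ^ 2 - x ^ 2) ^ q :=
      mul_nonneg (Real.exp_pos _).le (Real.rpow_nonneg h2 q)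
    rw [Real.norm_eq_abs, abs_of_nonneg (div_nonneg hnn h3.le)]
    rw [div_le_iff₀ h3, inv_mul_eq_div, div_mul_eq_mul_div, le_div_iff₀ (by positivity)]
    have hle : x ^ 2 ≤ t ^ 2 := by nlinarith
    nlinarith [mul_le_mul_of_nonneg_left hle hnn]

-- positivity of integrals of positive functions on Ioi
lemma coulomb_pos_integral {g : ℝ → ℝ} {x : ℝ} (hint : IntegrableOn g (Ioi x))
    (hpos : ∀ t ∈ Ioi x, 0 < g t) : 0 < ∫ t in Ioi x, g t := by
  have hnn : 0 ≤ᵐ[volume.restrict (Ioi x)] g := by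
    filter_upwards [ae_restrict_mem measurableSet_Ioi] with t ht
    exact (hpos t ht).le
  rw [setIntegral_pos_iff_support_of_nonneg_ae hnn hint]
  have hsub : Ioi x ⊆ Function.support g ∩ Ioi x :=
    fun t ht => ⟨(hpos t ht).ne', ht⟩
  calc (0:ℝ≥0∞) < volume (Ioi x) := by rw [Real.volume_Ioi]; simp
    _ ≤ volume (Function.support g ∩ Ioi x) := measure_mono hsub

lemma coulomb_ibp {q x : ℝ} (hq : 0 < q) (hx : 0 < x) :
    q * (∫ t in Ioi x, Real.exp (-t ^ 2) * (t ^ 2 - x ^ 2) ^ (q - 1))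
      = (∫ t in Ioi x, Real.exp (-t ^ 2) * (t ^ 2 - x ^ 2) ^ q)
        + (∫ t in Ioi x, Real.exp (-t ^ 2) * (t ^ 2 - x ^ 2) ^ q / t ^ 2) / 2 := by
  set F : ℝ → ℝ := fun t => Real.exp (-t ^ 2) * (t ^ 2 - x ^ 2) ^ q * (2 * t)⁻¹ with hF
  set F' : ℝ → ℝ := fun t =>
      q * (Real.exp (-t ^ 2) * (t ^ 2 - x ^ 2) ^ (q - 1))
      - Real.exp (-t ^ 2) * (t ^ 2 - x ^ 2) ^ q
      - Real.exp (-t ^ 2) * (t ^ 2 - x ^ 2) ^ q / t ^ 2 / 2 with hF'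
  have h1 := coulomb_integrable (by linarith : (-1:ℝ) < q - 1) hx
  have h2 := coulomb_integrable (by linarith : (-1:ℝ) < q) hx
  have h3 := coulomb_integrable_div (by linarith : (-1:ℝ) < q) hx
  have hint : IntegrableOn F' (Ioi x) := ((h1.const_mul q).sub h2).sub (h3.div_const 2)
  have hderiv : ∀ t ∈ Ioi x, HasDerivAt F (F' t) t := by
    intro t ht
    have htx : x < t := ht
    have ht0 : (0:ℝ) < t := lt_trans hx htx
    have hu : (0:ℝ) < t ^ 2 - x ^ 2 := by nlinarith
    have hexp : HasDerivAt (fun s : ℝ => Real.exp (-s ^ 2)) (Real.exp (-t ^ 2) * (-(2 * t))) t := by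
      have hin : HasDerivAt (fun s : ℝ => -s ^ 2) (-(2 * t)) t := by
        simpa using (hasDerivAt_pow 2 t).fun_neg
      exact hin.exp
    have hpow : HasDerivAt (fun s : ℝ => (s ^ 2 - x ^ 2) ^ q)
        (q * (t ^ 2 - x ^ 2) ^ (q - 1) * (2 * t)) t := by
      have hin : HasDerivAt (fun s : ℝ => s ^ 2 - x ^ 2) (2 * t) t := by
        simpa using (hasDerivAt_pow 2 t).sub_const (x ^ 2)
      exact (Real.hasDerivAt_rpow_const (x := t ^ 2 - x ^ 2) (p := q) (Or.inl hu.ne')).comp t hin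
    have hinv : HasDerivAt (fun s : ℝ => (2 * s)⁻¹) (-2 / (2 * t) ^ 2) t := by
      have hlin : HasDerivAt (fun s : ℝ => 2 * s) 2 t := by
        simpa using (hasDerivAt_id t).const_mul (2:ℝ)
      exact hlin.inv (by positivity)
    have hprod := (hexp.fun_mul hpow).fun_mul hinv
    convert hprod using 1
    · rfl
    · rfl
    simp only [hF']
    have hrw : (t ^ 2 - x ^ 2) ^ q = (t ^ 2 - x ^ 2) ^ (q - 1) * (t ^ 2 - x ^ 2) := by
      have h := Real.rpow_add_one hu.ne' (q - 1)
      rw [show q - 1 + 1 = q from by ring] at h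
      exact h
    rw [hrw]
    generalize (t ^ 2 - x ^ 2) ^ (q - 1) = E
    field_simp
    ring
  have hcont : ContinuousWithinAt F (Ici x) x := by
    apply ContinuousWithinAt.mul
    apply ContinuousWithinAt.mul
    · exact (Real.continuous_exp.comp (continuous_pow 2).neg).continuousWithinAt
    · have hc : ContinuousAt (fun y : ℝ => y ^ q) (x ^ 2 - x ^ 2) := by
        simp only [sub_self]
        exact Real.continuousAt_rpow_const 0 q (Or.inr hq.le)
      have hin : ContinuousAt (fun s : ℝ => s ^ 2 - x ^ 2) x :=
        ((continuous_pow 2).sub continuous_const).continuousAt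
      exact (ContinuousAt.comp (g := fun y : ℝ => y ^ q)
        (f := fun s : ℝ => s ^ 2 - x ^ 2) hc hin).continuousWithinAt
    · exact ((continuous_const.mul continuous_id).continuousAt.inv₀
        (mul_ne_zero two_ne_zero hx.ne')).continuousWithinAt
  have htop : Tendsto F atTop (𝓝 0) := by
    have hb : Tendsto (fun t : ℝ => t ^ (2 * q - 1) * Real.exp (-1 * t)) atTop (𝓝 0) :=
      tendsto_rpow_mul_exp_neg_mul_atTop_nhds_zero _ 1 one_pos
    apply squeeze_zero' ?_ ?_ hb
    · filter_upwards [eventually_gt_atTop x] with t ht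
      have ht0 : (0:ℝ) < t := lt_trans hx ht
      have hu : (0:ℝ) ≤ t ^ 2 - x ^ 2 := by nlinarith
      exact mul_nonneg (mul_nonneg (Real.exp_pos _).le (Real.rpow_nonneg hu q))
        (by positivity)
    · filter_upwards [eventually_ge_atTop (max x 1 + 1)] with t ht
      have hmx := le_max_left x 1
      have hm1 := le_max_right x 1
      have ht1 : (1:ℝ) ≤ t := by linarith
      have htx : x < t := by linarith
      have ht0 : (0:ℝ) < t := by linarith
      have hu : (0:ℝ) ≤ t ^ 2 - x ^ 2 := by nlinarith
      have ha : Real.exp (-t ^ 2) ≤ Real.exp (-t) := by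
        apply Real.exp_le_exp.mpr; nlinarith
      have hbb : (t ^ 2 - x ^ 2) ^ q ≤ t ^ (2 * q) := by
        have h5 : (t ^ 2 - x ^ 2) ^ q ≤ (t ^ 2) ^ q :=
          Real.rpow_le_rpow hu (by nlinarith) hq.le
        calc (t ^ 2 - x ^ 2) ^ q ≤ (t ^ 2) ^ q := h5
          _ = t ^ (2 * q) := by
            rw [← Real.rpow_natCast t 2, ← Real.rpow_mul ht0.le]; norm_num
      have hc : (2 * t)⁻¹ ≤ t⁻¹ := by
        apply inv_anti₀ ht0; linarith
      calc F t = Real.exp (-t ^ 2) * (t ^ 2 - x ^ 2) ^ q * (2 * t)⁻¹ := rfl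
        _ ≤ Real.exp (-t) * t ^ (2 * q) * t⁻¹ := by
            apply mul_le_mul (mul_le_mul ha hbb (Real.rpow_nonneg hu q) (Real.exp_pos _).le)
              hc (by positivity) (by positivity)
        _ = t ^ (2 * q - 1) * Real.exp (-1 * t) := by
            rw [Real.rpow_sub ht0, Real.rpow_one, neg_one_mul, div_eq_mul_inv]; ring
  have h0 : (∫ t in Ioi x, F' t) = 0 - F x :=
    integral_Ioi_of_hasDerivAt_of_tendsto hcont hderiv hint htop
  have hFx : F x = 0 := by
    rw [hF]; simp [sub_self, Real.zero_rpow hq.ne']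
  rw [hFx, sub_zero] at h0
  have e1 : (∫ t in Ioi x, F' t)
      = (∫ t in Ioi x, (q * (Real.exp (-t ^ 2) * (t ^ 2 - x ^ 2) ^ (q - 1))
          - Real.exp (-t ^ 2) * (t ^ 2 - x ^ 2) ^ q))
        - ∫ t in Ioi x, Real.exp (-t ^ 2) * (t ^ 2 - x ^ 2) ^ q / t ^ 2 / 2 :=
    integral_sub ((h1.const_mul q).sub h2) (h3.div_const 2)
  have e2 : (∫ t in Ioi x, (q * (Real.exp (-t ^ 2) * (t ^ 2 - x ^ 2) ^ (q - 1))
          - Real.exp (-t ^ 2) * (t ^ 2 - x ^ 2) ^ q))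
      = (∫ t in Ioi x, q * (Real.exp (-t ^ 2) * (t ^ 2 - x ^ 2) ^ (q - 1)))
        - ∫ t in Ioi x, Real.exp (-t ^ 2) * (t ^ 2 - x ^ 2) ^ q :=
    integral_sub (h1.const_mul q) h2
  have e3 : (∫ t in Ioi x, q * (Real.exp (-t ^ 2) * (t ^ 2 - x ^ 2) ^ (q - 1)))
      = q * ∫ t in Ioi x, Real.exp (-t ^ 2) * (t ^ 2 - x ^ 2) ^ (q - 1) :=
    integral_const_mul q _
  have e4 : (∫ t in Ioi x, Real.exp (-t ^ 2) * (t ^ 2 - x ^ 2) ^ q / t ^ 2 / 2)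
      = (∫ t in Ioi x, Real.exp (-t ^ 2) * (t ^ 2 - x ^ 2) ^ q / t ^ 2) / 2 :=
    integral_div 2 _
  rw [e1, e2, e3, e4] at h0
  linarith

theorem stmt_18 (q : ℝ) (hq : 0 < q) (x : ℝ) (hx : 0 < x) :
    V q x / V (q - 1) x > 2 * x ^ 2 / (2 * x ^ 2 + 1) := by
  set J : ℝ := ∫ t in Ioi x, Real.exp (-t ^ 2) * (t ^ 2 - x ^ 2) ^ q with hJ
  set K : ℝ := ∫ t in Ioi x, Real.exp (-t ^ 2) * (t ^ 2 - x ^ 2) ^ (q - 1) with hK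
  set L : ℝ := ∫ t in Ioi x, Real.exp (-t ^ 2) * (t ^ 2 - x ^ 2) ^ q / t ^ 2 with hL
  have h1 := coulomb_integrable (by linarith : (-1:ℝ) < q - 1) hx
  have h2 := coulomb_integrable (by linarith : (-1:ℝ) < q) hx
  have h3 := coulomb_integrable_div (by linarith : (-1:ℝ) < q) hx
  have hid : q * K = J + L / 2 := coulomb_ibp hq hx
  -- positivity of K
  have hKpos : 0 < K := by
    apply coulomb_pos_integral h1
    intro t ht
    have htx : x < t := ht
    have hu : (0:ℝ) < t ^ 2 - x ^ 2 := by nlinarith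
    exact mul_pos (Real.exp_pos _) (Real.rpow_pos_of_pos hu _)
  -- J - x^2 * L > 0
  have hkey : 0 < J - x ^ 2 * L := by
    have hsub : (∫ t in Ioi x, (Real.exp (-t ^ 2) * (t ^ 2 - x ^ 2) ^ q
        - x ^ 2 * (Real.exp (-t ^ 2) * (t ^ 2 - x ^ 2) ^ q / t ^ 2)))
        = J - x ^ 2 * L := by
      rw [integral_sub h2 (h3.const_mul (x ^ 2)), integral_const_mul]
    rw [← hsub]
    apply coulomb_pos_integral (h2.sub (h3.const_mul (x ^ 2)))
    intro t ht
    simp only [Pi.sub_apply]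
    have htx : x < t := ht
    have ht0 : (0:ℝ) < t := lt_trans hx htx
    have hu : (0:ℝ) < t ^ 2 - x ^ 2 := by nlinarith
    have he : (0:ℝ) < Real.exp (-t ^ 2) * (t ^ 2 - x ^ 2) ^ q :=
      mul_pos (Real.exp_pos _) (Real.rpow_pos_of_pos hu _)
    have hlt : x ^ 2 / t ^ 2 < 1 := by
      rw [div_lt_one (by positivity)]; nlinarith
    have : x ^ 2 * (Real.exp (-t ^ 2) * (t ^ 2 - x ^ 2) ^ q / t ^ 2)
        = (x ^ 2 / t ^ 2) * (Real.exp (-t ^ 2) * (t ^ 2 - x ^ 2) ^ q) := by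
      field_simp
    rw [this]
    nlinarith [mul_lt_mul_of_pos_right hlt he]
  have hG : 0 < Real.Gamma q := Real.Gamma_pos_of_pos hq
  have hE : (0:ℝ) < 2 * Real.exp (x ^ 2) := by positivity
  have hV1 : V q x = 2 * Real.exp (x ^ 2) / (q * Real.Gamma q) * J := by
    rw [V, Real.Gamma_add_one hq.ne', hJ]
  have hV2 : V (q - 1) x = 2 * Real.exp (x ^ 2) / Real.Gamma q * K := by
    rw [V, show q - 1 + 1 = q from by ring, hK]
  have hV2pos : 0 < V (q - 1) x := by
    rw [hV2]
    exact mul_pos (by positivity) hKpos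
  rw [gt_iff_lt, div_lt_div_iff₀ (by positivity) hV2pos]
  have hdiff : V q x * (2 * x ^ 2 + 1) - 2 * x ^ 2 * V (q - 1) x
      = 2 * Real.exp (x ^ 2) / (q * Real.Gamma q) * ((2 * x ^ 2 + 1) * J - 2 * x ^ 2 * (q * K)) := by
    rw [hV1, hV2]
    field_simp
  rw [hid] at hdiff
  have hdiff2 : (2 * x ^ 2 + 1) * J - 2 * x ^ 2 * (J + L / 2) = J - x ^ 2 * L := by ring
  rw [hdiff2] at hdiff
  have hpos : 0 < 2 * Real.exp (x ^ 2) / (q * Real.Gamma q) * (J - x ^ 2 * L) :=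
    mul_pos (by positivity) hkey
  linarith
end
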